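/- arXiv:math/9209202 — 12 statements merged into one kernel-verified Lean document; each statement's English description precedes it below -/
import Mathlib

section
/- (Dehornoy) Let (A,·) be a left-distributive algebra generated by a single element 1, and suppose the relation <_L on A is irreflexive (no a ∈ A satisfies a <_L a). Then A is free, i.e. the canonical surjective homomorphism from the free monogenic left-distributive algebra W/≡ onto A (sending the generator to 1) is injective; moreover A satisfies left cancellation: c·a = c·b implies a = b. -/
/-- The free magma on one generator: words built from `1` using `·`. -/
inductive W : Type
  | one : W
  | mul : W → W → W

/-- The smallest congruence on `W` containing all instances of the
left distributive law `a·(b·c) = (a·b)·(a·c)`. -/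
inductive LDEq : W → W → Prop
  | refl (a : W) : LDEq a a
  | symm {a b : W} : LDEq a b → LDEq b a
  | trans {a b c : W} : LDEq a b → LDEq b c → LDEq a c
  | congr {a a' b b' : W} : LDEq a a' → LDEq b b' → LDEq (a.mul b) (a'.mul b')
  | ld (a b c : W) : LDEq (a.mul (b.mul c)) ((a.mul b).mul (a.mul c))

/-- The canonical evaluation of a word in an algebra `(A, op)` with chosen
generator `one`; it induces the canonical homomorphism from `W/≡` onto `A`. -/
def evalW {A : Type*} (op : A → A → A) (one : A) : W → A
  | W.one => one
  | W.mul a b => op (evalW op one a) (evalW op one b)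

/-- `a <_L b`: there exist `k ≥ 1` and elements `c_1, …, c_k` with
`b = ((a·c_1)·c_2)···c_k`. -/
def leftSub {A : Type*} (op : A → A → A) (a b : A) : Prop :=
  ∃ l : List A, l ≠ [] ∧ b = l.foldl op a

/-- One-step LD-expansion. -/
inductive WStep : W → W → Prop
  | ld (a b c : W) : WStep (a.mul (b.mul c)) ((a.mul b).mul (a.mul c))
  | left {a a' : W} (b : W) : WStep a a' → WStep (a.mul b) (a'.mul b)
  | right (a : W) {b b' : W} : WStep b b' → WStep (a.mul b) (a.mul b')

abbrev WSteps : W → W → Prop := Relation.ReflTransGen WStep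

theorem wsteps_left {a a' : W} (b : W) (h : WSteps a a') : WSteps (a.mul b) (a'.mul b) := by
  induction h with
  | refl => exact .refl
  | tail _ s ih => exact ih.tail (WStep.left b s)

theorem wsteps_right (a : W) {b b' : W} (h : WSteps b b') : WSteps (a.mul b) (a.mul b') := by
  induction h with
  | refl => exact .refl
  | tail _ s ih => exact ih.tail (WStep.right a s)

theorem wsteps_mul {a a' b b' : W} (ha : WSteps a a') (hb : WSteps b b') :
    WSteps (a.mul b) (a'.mul b') :=
  (wsteps_left b ha).trans (wsteps_right a' hb)

/-- `phi s t` : `s·t` fully left-distributed into `t`. -/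
def phi (s : W) : W → W
  | .one => s.mul .one
  | .mul a b => (phi s a).mul (phi s b)

/-- Dehornoy's `∂` operator. -/
def pd : W → W
  | .one => .one
  | .mul a b => phi (pd a) (pd b)

theorem steps_phi (s : W) : ∀ t, WSteps (s.mul t) (phi s t)
  | .one => .refl
  | .mul a b =>
    (Relation.ReflTransGen.single (WStep.ld s a b)).trans
      (wsteps_mul (steps_phi s a) (steps_phi s b))

theorem step_phi_right {t t' : W} (s : W) (h : WStep t t') : WStep (phi s t) (phi s t') := by
  induction h with
  | ld a b c => exact WStep.ld (phi s a) (phi s b) (phi s c)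
  | left b _ ih => exact WStep.left (phi s b) ih
  | right a _ ih => exact WStep.right (phi s a) ih

theorem steps_phi_right {t t' : W} (s : W) (h : WSteps t t') : WSteps (phi s t) (phi s t') := by
  induction h with
  | refl => exact .refl
  | tail _ st ih => exact ih.tail (step_phi_right s st)

theorem step_phi_left {s s' : W} (h : WStep s s') : ∀ t, WSteps (phi s t) (phi s' t)
  | .one => Relation.ReflTransGen.single (WStep.left _ h)
  | .mul a b => wsteps_mul (step_phi_left h a) (step_phi_left h b)

theorem steps_phi_left {s s' : W} (h : WSteps s s') (t : W) : WSteps (phi s t) (phi s' t) := by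
  induction h with
  | refl => exact .refl
  | tail _ st ih => exact ih.trans (step_phi_left st t)

theorem phi_mul (s u : W) : ∀ v, WSteps ((phi s u).mul (phi s v)) (phi s (phi u v))
  | .one => .refl
  | .mul v1 v2 =>
    (Relation.ReflTransGen.single (WStep.ld (phi s u) (phi s v1) (phi s v2))).trans
      (wsteps_mul (phi_mul s u v1) (phi_mul s u v2))

theorem phi_assoc (s u : W) : ∀ v, WSteps (phi s (phi u v)) (phi (phi s u) (phi s v))
  | .one =>
    (Relation.ReflTransGen.single (WStep.ld (phi s u) s .one)).trans
      (wsteps_mul (steps_phi (phi s u) s) .refl)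
  | .mul v1 v2 => wsteps_mul (phi_assoc s u v1) (phi_assoc s u v2)

theorem steps_pd : ∀ t, WSteps t (pd t)
  | .one => .refl
  | .mul a b => (wsteps_mul (steps_pd a) (steps_pd b)).trans (steps_phi (pd a) (pd b))

theorem step_absorb {t t' : W} (h : WStep t t') : WSteps t' (pd t) := by
  induction h with
  | ld a b c =>
    exact (wsteps_mul
      ((wsteps_mul (steps_pd a) (steps_pd b)).trans (steps_phi (pd a) (pd b)))
      ((wsteps_mul (steps_pd a) (steps_pd c)).trans (steps_phi (pd a) (pd c)))).trans
      (phi_mul (pd a) (pd b) (pd c))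
  | @left a a' b _ ih =>
    exact (wsteps_mul ih (steps_pd b)).trans (steps_phi (pd a) (pd b))
  | @right a b b' _ ih =>
    exact (wsteps_mul (steps_pd a) ih).trans (steps_phi (pd a) (pd b))

theorem pd_mono_step {t t' : W} (h : WStep t t') : WSteps (pd t) (pd t') := by
  induction h with
  | ld a b c => exact phi_assoc (pd a) (pd b) (pd c)
  | left b _ ih => exact steps_phi_left ih (pd b)
  | right a _ ih => exact steps_phi_right (pd a) ih

theorem pd_mono {t t' : W} (h : WSteps t t') : WSteps (pd t) (pd t') := by
  induction h with
  | refl => exact .refl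
  | tail _ st ih => exact ih.trans (pd_mono_step st)

theorem steps_pdn (n : ℕ) (t : W) : WSteps t (pd^[n] t) := by
  induction n with
  | zero => exact .refl
  | succ n ih =>
    rw [Function.iterate_succ_apply']
    exact ih.trans (steps_pd _)

theorem absorb {t t' : W} (h : WSteps t t') : ∃ n, WSteps t' (pd^[n] t) := by
  induction h with
  | refl => exact ⟨0, .refl⟩
  | tail _ st ih =>
    obtain ⟨n, hn⟩ := ih
    refine ⟨n + 1, (step_absorb st).trans ?_⟩
    rw [Function.iterate_succ_apply']
    exact pd_mono hn

theorem pdn_le {n m : ℕ} (h : n ≤ m) (t : W) : WSteps (pd^[n] t) (pd^[m] t) := by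
  obtain ⟨k, rfl⟩ := Nat.exists_eq_add_of_le h
  rw [Nat.add_comm, Function.iterate_add_apply]
  exact steps_pdn k _

theorem confluence {t u v : W} (hu : WSteps t u) (hv : WSteps t v) :
    ∃ w, WSteps u w ∧ WSteps v w := by
  obtain ⟨n, hn⟩ := absorb hu
  obtain ⟨m, hm⟩ := absorb hv
  exact ⟨pd^[max n m] t, hn.trans (pdn_le (Nat.le_max_left n m) t),
    hm.trans (pdn_le (Nat.le_max_right n m) t)⟩

theorem step_ldeq {a b : W} (h : WStep a b) : LDEq a b := by
  induction h with
  | ld a b c => exact LDEq.ld a b c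
  | left b _ ih => exact LDEq.congr ih (LDEq.refl b)
  | right a _ ih => exact LDEq.congr (LDEq.refl a) ih

theorem steps_ldeq {a b : W} (h : WSteps a b) : LDEq a b := by
  induction h with
  | refl => exact .refl a
  | tail _ st ih => exact ih.trans (step_ldeq st)

theorem ldeq_join {a b : W} (h : LDEq a b) : ∃ c, WSteps a c ∧ WSteps b c := by
  induction h with
  | refl a => exact ⟨a, .refl, .refl⟩
  | symm _ ih => exact ⟨ih.choose, ih.choose_spec.2, ih.choose_spec.1⟩
  | trans _ _ ih1 ih2 =>
    obtain ⟨c1, h1, h2⟩ := ih1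
    obtain ⟨c2, h3, h4⟩ := ih2
    obtain ⟨w, hw1, hw2⟩ := confluence h2 h3
    exact ⟨w, h1.trans hw1, h4.trans hw2⟩
  | congr _ _ ih1 ih2 =>
    obtain ⟨c1, h1, h2⟩ := ih1
    obtain ⟨c2, h3, h4⟩ := ih2
    exact ⟨c1.mul c2, wsteps_mul h1 h3, wsteps_mul h2 h4⟩
  | ld a b c => exact ⟨(a.mul b).mul (a.mul c), .single (WStep.ld a b c), .refl⟩

/-- `Lsub u s`: `u` is an iterated left subterm of `s` (or `s` itself). -/
inductive Lsub : W → W → Prop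
  | refl (s : W) : Lsub s s
  | mul {u a : W} (b : W) : Lsub u a → Lsub u (a.mul b)

theorem lsub_total {u u' s : W} (h : Lsub u s) (h' : Lsub u' s) :
    Lsub u u' ∨ Lsub u' u := by
  induction h with
  | refl => exact Or.inr h'
  | @mul a b hua ih =>
    cases h' with
    | refl => exact Or.inl (Lsub.mul b hua)
    | mul _ h'' => exact ih h''

theorem ldeq_foldl {a b : W} (h : LDEq a b) :
    ∀ l : List W, LDEq (l.foldl W.mul a) (l.foldl W.mul b) := by
  intro l
  induction l generalizing a b with
  | nil => exact h
  | cons c l ih => exact ih (LDEq.congr h (LDEq.refl c))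

theorem lsub_le {u s : W} (h : Lsub u s) :
    u = s ∨ ∃ l : List W, l ≠ [] ∧ s = l.foldl W.mul u := by
  induction h with
  | refl => exact Or.inl rfl
  | @mul a b _ ih =>
    rcases ih with rfl | ⟨l, hl, rfl⟩
    · exact Or.inr ⟨[b], by simp, rfl⟩
    · exact Or.inr ⟨l ++ [b], by simp, by simp [List.foldl_append]⟩

theorem lsub_step {s s' u : W} (hs : WStep s s') (h : Lsub u s) :
    ∃ u', Lsub u' s' ∧ LDEq u u' := by
  induction hs generalizing u with
  | ld a b c =>
    cases h with
    | refl => exact ⟨_, Lsub.refl _, LDEq.ld a b c⟩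
    | mul _ h' => exact ⟨u, Lsub.mul _ (Lsub.mul b h'), LDEq.refl u⟩
  | @left a a' b hst ih =>
    cases h with
    | refl => exact ⟨a'.mul b, Lsub.refl _, step_ldeq (WStep.left b hst)⟩
    | mul _ h' =>
      obtain ⟨u'', hsub, heq⟩ := ih h'
      exact ⟨u'', Lsub.mul b hsub, heq⟩
  | @right a b b' hst ih =>
    cases h with
    | refl => exact ⟨a.mul b', Lsub.refl _, step_ldeq (WStep.right a hst)⟩
    | mul _ h' => exact ⟨u, Lsub.mul b' h', LDEq.refl u⟩

theorem lsub_steps {s s' u : W} (hs : WSteps s s') (h : Lsub u s) :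
    ∃ u', Lsub u' s' ∧ LDEq u u' := by
  induction hs with
  | refl => exact ⟨u, h, LDEq.refl u⟩
  | tail _ st ih =>
    obtain ⟨u1, h1, e1⟩ := ih
    obtain ⟨u2, h2, e2⟩ := lsub_step st h1
    exact ⟨u2, h2, e1.trans e2⟩

/-- The cofinal sequence of "squares". -/
def fpow : ℕ → W
  | 0 => .one
  | n + 1 => (fpow n).mul (fpow n)

theorem absorb_one : ∀ n, LDEq (W.one.mul (fpow n)) (fpow (n + 1))
  | 0 => LDEq.refl _
  | n + 1 =>
    (LDEq.ld W.one (fpow n) (fpow n)).trans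
      (LDEq.congr (absorb_one n) (absorb_one n))

/-- Dehornoy's absorption property for the squares sequence. -/
theorem absorbs (t : W) : ∃ m, ∀ n, m ≤ n → LDEq (t.mul (fpow n)) (fpow (n + 1)) := by
  induction t with
  | one => exact ⟨0, fun n _ => absorb_one n⟩
  | mul t1 t2 ih1 ih2 =>
    obtain ⟨m1, h1⟩ := ih1
    obtain ⟨m2, h2⟩ := ih2
    refine ⟨max m1 m2 + 1, ?_⟩
    intro n hn
    obtain ⟨k, rfl⟩ : ∃ k, n = k + 1 := ⟨n - 1, by omega⟩
    have hk1 : m1 ≤ k := le_trans (Nat.le_max_left m1 m2) (by omega)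
    have hk2 : m2 ≤ k := le_trans (Nat.le_max_right m1 m2) (by omega)
    have e1 : LDEq (fpow (k + 2)) (t1.mul (fpow (k + 1))) := (h1 (k + 1) (by omega)).symm
    have e2 : LDEq (t1.mul (fpow (k + 1))) (t1.mul (t2.mul (fpow k))) :=
      LDEq.congr (LDEq.refl t1) (h2 k hk2).symm
    have e3 : LDEq (t1.mul (t2.mul (fpow k))) ((t1.mul t2).mul (t1.mul (fpow k))) :=
      LDEq.ld t1 t2 (fpow k)
    have e4 : LDEq ((t1.mul t2).mul (t1.mul (fpow k))) ((t1.mul t2).mul (fpow (k + 1))) :=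
      LDEq.congr (LDEq.refl _) (h1 k hk1)
    exact (((e1.trans e2).trans e3).trans e4).symm

/-- The comparison property for the free monogenic LD-magma. -/
theorem compareW (t t' : W) :
    LDEq t t' ∨ (∃ l : List W, l ≠ [] ∧ LDEq t' (l.foldl W.mul t)) ∨
      (∃ l : List W, l ≠ [] ∧ LDEq t (l.foldl W.mul t')) := by
  obtain ⟨m1, h1⟩ := absorbs t
  obtain ⟨m2, h2⟩ := absorbs t'
  set n := max m1 m2 with hn
  have e : LDEq (t.mul (fpow n)) (t'.mul (fpow n)) :=
    (h1 n (Nat.le_max_left m1 m2)).trans (h2 n (Nat.le_max_right m1 m2)).symm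
  obtain ⟨c, s1, s2⟩ := ldeq_join e
  obtain ⟨u, hu, et⟩ := lsub_steps s1 (Lsub.mul _ (Lsub.refl t))
  obtain ⟨u', hu', et'⟩ := lsub_steps s2 (Lsub.mul _ (Lsub.refl t'))
  rcases lsub_total hu hu' with h | h
  · rcases lsub_le h with rfl | ⟨l, hl, rfl⟩
    · exact Or.inl (et.trans et'.symm)
    · exact Or.inr (Or.inl ⟨l, hl, et'.trans (ldeq_foldl et.symm l)⟩)
  · rcases lsub_le h with rfl | ⟨l, hl, rfl⟩
    · exact Or.inl (et.trans et'.symm)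
    · exact Or.inr (Or.inr ⟨l, hl, et.trans (ldeq_foldl et'.symm l)⟩)

section Transfer

variable {A : Type*} (op : A → A → A) (one : A)

theorem eval_ldeq (hLD : ∀ a b c : A, op a (op b c) = op (op a b) (op a c))
    {a b : W} (h : LDEq a b) : evalW op one a = evalW op one b := by
  induction h with
  | refl a => rfl
  | symm _ ih => exact ih.symm
  | trans _ _ ih1 ih2 => exact ih1.trans ih2
  | congr _ _ ih1 ih2 => simp [evalW, ih1, ih2]
  | ld a b c => exact hLD _ _ _

theorem eval_foldl (l : List W) (t : W) :
    evalW op one (l.foldl W.mul t) = (l.map (evalW op one)).foldl op (evalW op one t) := by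
  induction l generalizing t with
  | nil => rfl
  | cons c l ih => exact (ih (t.mul c)).trans rfl

theorem ldeq_mul_foldl (c : W) (l : List W) (u : W) :
    LDEq (c.mul (l.foldl W.mul u)) ((l.map (c.mul ·)).foldl W.mul (c.mul u)) := by
  induction l generalizing u with
  | nil => exact LDEq.refl _
  | cons d l ih =>
    exact (ih (u.mul d)).trans (ldeq_foldl (LDEq.ld c u d) (l.map (c.mul ·)))

end Transfer

theorem stmt_2 {A : Type*} (op : A → A → A) (one : A)
    (hLD : ∀ a b c : A, op a (op b c) = op (op a b) (op a c))
    (hgen : ∀ s : Set A, one ∈ s → (∀ x ∈ s, ∀ y ∈ s, op x y ∈ s) → ∀ x : A, x ∈ s)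
    (hirr : ∀ a : A, ¬ leftSub op a a) :
    (∀ a b : W, evalW op one a = evalW op one b → LDEq a b) ∧
    (∀ a b c : A, op c a = op c b → a = b) := by
  -- surjectivity of eval
  have hsurj : ∀ x : A, ∃ w : W, evalW op one w = x := by
    intro x
    have := hgen (Set.range (evalW op one)) ⟨W.one, rfl⟩ ?_ x
    · exact this
    · rintro _ ⟨wx, rfl⟩ _ ⟨wy, rfl⟩
      exact ⟨wx.mul wy, rfl⟩
  -- eval reflects LDEq
  have key : ∀ a b : W, evalW op one a = evalW op one b → LDEq a b := by
    intro a b h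
    rcases compareW a b with h1 | ⟨l, hl, h1⟩ | ⟨l, hl, h1⟩
    · exact h1
    · exfalso
      apply hirr (evalW op one a)
      refine ⟨l.map (evalW op one), by simpa using hl, ?_⟩
      have := eval_ldeq op one hLD h1
      rw [eval_foldl] at this
      exact h.trans this
    · exfalso
      apply hirr (evalW op one b)
      refine ⟨l.map (evalW op one), by simpa using hl, ?_⟩
      have := eval_ldeq op one hLD h1
      rw [eval_foldl] at this
      exact h.symm.trans this
  refine ⟨key, ?_⟩
  intro a b c h
  obtain ⟨wa, rfl⟩ := hsurj a
  obtain ⟨wb, rfl⟩ := hsurj b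
  obtain ⟨wc, rfl⟩ := hsurj c
  rcases compareW wa wb with h1 | ⟨l, hl, h1⟩ | ⟨l, hl, h1⟩
  · exact eval_ldeq op one hLD h1
  · exfalso
    apply hirr (evalW op one (wc.mul wa))
    have e : LDEq (wc.mul wb) ((l.map (wc.mul ·)).foldl W.mul (wc.mul wa)) :=
      (LDEq.congr (LDEq.refl wc) h1).trans (ldeq_mul_foldl wc l wa)
    have e2 := eval_ldeq op one hLD e
    rw [eval_foldl] at e2
    refine ⟨(l.map (wc.mul ·)).map (evalW op one), by simpa using hl, ?_⟩
    have ee : evalW op one (wc.mul wa) = evalW op one (wc.mul wb) := (by simp [evalW, h] : _)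
    exact ee.trans e2
  · exfalso
    apply hirr (evalW op one (wc.mul wb))
    have e : LDEq (wc.mul wa) ((l.map (wc.mul ·)).foldl W.mul (wc.mul wb)) :=
      (LDEq.congr (LDEq.refl wc) h1).trans (ldeq_mul_foldl wc l wb)
    have e2 := eval_ldeq op one hLD e
    rw [eval_foldl] at e2
    refine ⟨(l.map (wc.mul ·)).map (evalW op one), by simpa using hl, ?_⟩
    have ee : evalW op one (wc.mul wb) = evalW op one (wc.mul wa) := (by simp [evalW, h] : _)
    exact ee.trans e2
end

section
/- (Dehornoy) The relation <_L on the free monogenic left-distributive algebra W/≡ is irreflexive; consequently <_L is a strict linear order on W/≡ (for all words a,b exactly one of a ≡ b, a <_L b, b <_L a holds modulo ≡), and W/≡ satisfies left cancellation: if c·a ≡ c·b then a ≡ b. -/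
/-- `a <_L b` modulo `≡`: there exist `k ≥ 1` and words `c_1, …, c_k` with
`((a·c_1)·c_2)···c_k ≡ b`. -/
def leftSubL (a b : W) : Prop :=
  ∃ l : List W, l ≠ [] ∧ LDEq (l.foldl W.mul a) b

-- The token `≡` is shared with `a ≡ b [MOD n]`, so `a ≡ b ∨ c` must be written `(a ≡ b) ∨ c`.
infix:50 " ≡ " => LDEq

instance : Trans LDEq LDEq LDEq := ⟨.trans⟩

/-! ## LD-expansions and the Church–Rosser property -/

namespace W

inductive ExpStep : W → W → Prop
  | ld (a b c : W) : ExpStep (a.mul (b.mul c)) ((a.mul b).mul (a.mul c))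
  | mul_left {a a' : W} (b : W) : ExpStep a a' → ExpStep (a.mul b) (a'.mul b)
  | mul_right (a : W) {b b' : W} : ExpStep b b' → ExpStep (a.mul b) (a.mul b')

abbrev Expands : W → W → Prop := Relation.ReflTransGen ExpStep

theorem ExpStep.ldeq {a b : W} (h : ExpStep a b) : a ≡ b := by
  induction h with
  | ld a b c => exact .ld a b c
  | mul_left b _ ih => exact .congr ih (.refl b)
  | mul_right a _ ih => exact .congr (.refl a) ih

theorem Expands.mul {a a' b b' : W} (ha : Expands a a') (hb : Expands b b') :
    Expands (a.mul b) (a'.mul b') :=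
  (ha.lift (·.mul b) fun _ _ h => .mul_left b h).trans
    (hb.lift a'.mul fun _ _ h => .mul_right a' h)

def distrib (a : W) : W → W
  | .one => a.mul .one
  | .mul b c => (distrib a b).mul (distrib a c)

/-- Dehornoy's `∂`; its iterates `∂ⁿ t` are cofinal among the LD-expansions of `t`. -/
def fullExpand : W → W
  | .one => .one
  | .mul a b => distrib (fullExpand a) (fullExpand b)

theorem expands_mul_distrib (a b : W) : Expands (a.mul b) (distrib a b) := by
  induction b with
  | one => exact .refl
  | mul b c ihb ihc => exact .head (.ld a b c) (ihb.mul ihc)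

theorem Expands.distrib_left {a a' : W} (b : W) (h : Expands a a') :
    Expands (distrib a b) (distrib a' b) := by
  induction b with
  | one => exact h.mul .refl
  | mul b c ihb ihc => exact ihb.mul ihc

theorem ExpStep.distrib_right (a : W) {b b' : W} (h : ExpStep b b') :
    Expands (distrib a b) (distrib a b') := by
  induction h with
  | ld p q r => exact .single (.ld _ _ _)
  | mul_left c _ ih => exact ih.mul .refl
  | mul_right c _ ih => exact Expands.mul .refl ih

theorem Expands.distrib_right (a : W) {b b' : W} (h : Expands b b') :
    Expands (distrib a b) (distrib a b') :=
  h.lift' (distrib a) fun _ _ => ExpStep.distrib_right a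

theorem expands_distrib_mul_distrib (a b c : W) :
    Expands ((distrib a b).mul (distrib a c)) (distrib a (distrib b c)) := by
  induction c with
  | one => exact .refl
  | mul c d ihc ihd => exact .head (.ld _ _ _) (ihc.mul ihd)

theorem expands_distrib_distrib (a b c : W) :
    Expands (distrib a (distrib b c)) (distrib (distrib a b) (distrib a c)) := by
  induction c with
  | one => exact .head (.ld _ _ _) ((expands_mul_distrib _ _).mul .refl)
  | mul c d ihc ihd => exact ihc.mul ihd

theorem expands_fullExpand (t : W) : Expands t (fullExpand t) := by
  induction t with
  | one => exact .refl
  | mul a b iha ihb => exact (iha.mul ihb).trans (expands_mul_distrib _ _)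

theorem ExpStep.expands_fullExpand {t t' : W} (h : ExpStep t t') :
    Expands t' (fullExpand t) := by
  induction h with
  | ld a b c =>
    exact ((W.expands_fullExpand _).mul (W.expands_fullExpand _)).trans
      (expands_distrib_mul_distrib _ _ _)
  | mul_left b _ ih => exact (ih.mul (W.expands_fullExpand b)).trans (expands_mul_distrib _ _)
  | mul_right a _ ih => exact ((W.expands_fullExpand a).mul ih).trans (expands_mul_distrib _ _)

theorem ExpStep.fullExpand_expands {t t' : W} (h : ExpStep t t') :
    Expands (fullExpand t) (fullExpand t') := by
  induction h with
  | ld a b c => exact expands_distrib_distrib _ _ _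
  | mul_left b _ ih => exact ih.distrib_left _
  | mul_right a _ ih => exact ih.distrib_right _

theorem expands_iterate_fullExpand (t : W) (n : ℕ) : Expands t (fullExpand^[n] t) := by
  induction n generalizing t with
  | zero => exact .refl
  | succ n ih => exact (expands_fullExpand t).trans (ih _)

theorem Expands.exists_expands_iterate {t v : W} (h : Expands t v) :
    ∃ n, Expands v (fullExpand^[n] t) := by
  induction h with
  | refl => exact ⟨0, .refl⟩
  | tail _ hs ih =>
    obtain ⟨n, hn⟩ := ih
    refine ⟨n + 1, hs.expands_fullExpand.trans ?_⟩
    rw [Function.iterate_succ_apply']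
    exact hn.lift' fullExpand fun _ _ => ExpStep.fullExpand_expands

theorem Expands.confluent {t u v : W} (hu : Expands t u) (hv : Expands t v) :
    ∃ w, Expands u w ∧ Expands v w := by
  obtain ⟨m, hm⟩ := hu.exists_expands_iterate
  obtain ⟨n, hn⟩ := hv.exists_expands_iterate
  refine ⟨fullExpand^[m + n] t, hm.trans ?_, hn.trans ?_⟩
  · rw [add_comm, Function.iterate_add_apply]
    exact expands_iterate_fullExpand _ _
  · rw [Function.iterate_add_apply]
    exact expands_iterate_fullExpand _ _

end W

theorem LDEq.exists_expands {s t : W} (h : s ≡ t) : ∃ w, W.Expands s w ∧ W.Expands t w := by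
  induction h with
  | refl a => exact ⟨a, .refl, .refl⟩
  | symm _ ih => obtain ⟨w, h1, h2⟩ := ih; exact ⟨w, h2, h1⟩
  | trans _ _ ih₁ ih₂ =>
    obtain ⟨u, hau, hbu⟩ := ih₁
    obtain ⟨v, hbv, hcv⟩ := ih₂
    obtain ⟨w, huw, hvw⟩ := hbu.confluent hbv
    exact ⟨w, hau.trans huw, hcv.trans hvw⟩
  | congr _ _ ih₁ ih₂ =>
    obtain ⟨u, hau, hbu⟩ := ih₁
    obtain ⟨v, hcv, hdv⟩ := ih₂
    exact ⟨u.mul v, hau.mul hcv, hbu.mul hdv⟩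
  | ld a b c => exact ⟨_, .single (.ld a b c), .refl⟩

/-! ## Comparison -/

theorem LDEq.foldl_mul {a a' : W} (l : List W) (h : a ≡ a') :
    l.foldl W.mul a ≡ l.foldl W.mul a' := by
  induction l generalizing a a' with
  | nil => exact h
  | cons c l ih => exact ih (.congr h (.refl c))

theorem LDEq.mul_foldl_mul (c a : W) (l : List W) :
    c.mul (l.foldl W.mul a) ≡ (l.map c.mul).foldl W.mul (c.mul a) := by
  induction l generalizing a with
  | nil => exact .refl _
  | cons x l ih => exact (ih (a.mul x)).trans (LDEq.foldl_mul _ (.ld c a x))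

namespace leftSubL

theorem congr {a a' b b' : W} (h : leftSubL a b) (ha : a ≡ a') (hb : b ≡ b') :
    leftSubL a' b' := by
  obtain ⟨l, hl, e⟩ := h
  exact ⟨l, hl, ((LDEq.foldl_mul l ha).symm.trans e).trans hb⟩

theorem trans {a b c : W} (hab : leftSubL a b) (hbc : leftSubL b c) : leftSubL a c := by
  obtain ⟨l₁, hl₁, e₁⟩ := hab
  obtain ⟨l₂, -, e₂⟩ := hbc
  refine ⟨l₁ ++ l₂, by simp [hl₁], ?_⟩
  rw [List.foldl_append]
  exact (LDEq.foldl_mul l₂ e₁).trans e₂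

theorem mul_left {a b : W} (c : W) (h : leftSubL a b) : leftSubL (c.mul a) (c.mul b) := by
  obtain ⟨l, hl, e⟩ := h
  exact ⟨l.map c.mul, by simpa using hl, (LDEq.mul_foldl_mul c a l).symm.trans (.congr (.refl c) e)⟩

end leftSubL

namespace W

def LeftFactor (a b : W) : Prop := ∃ c, a.mul c = b

abbrev LeftPrefix : W → W → Prop := Relation.ReflTransGen LeftFactor

theorem leftPrefix_mul_iff {x a b : W} : LeftPrefix x (a.mul b) ↔ x = a.mul b ∨ LeftPrefix x a := by
  unfold LeftPrefix
  rw [Relation.ReflTransGen.cases_tail_iff]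
  constructor
  · rintro (h | ⟨c, hc, d, hcd⟩)
    · exact .inl h.symm
    · obtain ⟨rfl, -⟩ := W.mul.inj hcd
      exact .inr hc
  · rintro (h | h)
    · exact .inl h.symm
    · exact .inr ⟨a, h, b, rfl⟩

theorem LeftPrefix.total {x y s : W} (hx : LeftPrefix x s) (hy : LeftPrefix y s) :
    LeftPrefix x y ∨ LeftPrefix y x := by
  have unique : Relator.RightUnique (Function.swap LeftFactor) := by
    rintro s x y ⟨c, rfl⟩ ⟨d, hd⟩
    exact (W.mul.inj hd).1.symm
  unfold LeftPrefix at *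
  rw [← Relation.reflTransGen_swap] at hx hy ⊢
  rw [← Relation.reflTransGen_swap (r := LeftFactor)]
  exact (Relation.ReflTransGen.total_of_right_unique unique hx hy).symm

theorem LeftPrefix.eq_or_leftSubL {x y : W} (h : LeftPrefix x y) : x = y ∨ leftSubL x y := by
  induction h with
  | refl => exact .inl rfl
  | tail _ hbc ih =>
    obtain ⟨c, rfl⟩ := hbc
    refine .inr ?_
    rcases ih with rfl | ⟨l, hl, e⟩
    · exact ⟨[c], by simp, .refl _⟩
    · exact ⟨l ++ [c], by simp, by rw [List.foldl_append]; exact .congr e (.refl c)⟩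

theorem ExpStep.exists_leftPrefix {t t' x : W} (h : ExpStep t t') (hx : LeftPrefix x t) :
    ∃ x', LeftPrefix x' t' ∧ x ≡ x' := by
  induction h generalizing x with
  | ld a b c =>
    rcases leftPrefix_mul_iff.1 hx with rfl | hx
    · exact ⟨_, .refl, .ld a b c⟩
    · exact ⟨x, (hx.tail ⟨b, rfl⟩).tail ⟨_, rfl⟩, .refl x⟩
  | @mul_left a a' b hs ih =>
    rcases leftPrefix_mul_iff.1 hx with rfl | hx
    · exact ⟨_, .refl, .congr hs.ldeq (.refl b)⟩
    · obtain ⟨x', hx', e⟩ := ih hx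
      exact ⟨x', hx'.tail ⟨b, rfl⟩, e⟩
  | @mul_right a b b' hs =>
    rcases leftPrefix_mul_iff.1 hx with rfl | hx
    · exact ⟨_, .refl, .congr (.refl a) hs.ldeq⟩
    · exact ⟨x, hx.tail ⟨b', rfl⟩, .refl x⟩

theorem Expands.exists_leftPrefix {t t' x : W} (h : Expands t t') (hx : LeftPrefix x t) :
    ∃ x', LeftPrefix x' t' ∧ x ≡ x' := by
  induction h with
  | refl => exact ⟨x, hx, .refl x⟩
  | tail _ hs ih =>
    obtain ⟨y, hy, e⟩ := ih
    obtain ⟨x', hx', e'⟩ := hs.exists_leftPrefix hy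
    exact ⟨x', hx', e.trans e'⟩

def rightPow : ℕ → W
  | 0 => .one
  | n + 1 => W.one.mul (rightPow n)

theorem exists_mul_rightPow (t : W) :
    ∃ c N, ∀ n, N ≤ n → t.mul (rightPow n) ≡ rightPow (n + c) := by
  induction t with
  | one => exact ⟨1, 0, fun n _ => .refl _⟩
  | mul u v ihu ihv =>
    obtain ⟨cu, Nu, hu⟩ := ihu
    obtain ⟨cv, Nv, hv⟩ := ihv
    refine ⟨cv, cu + Nu + Nv, fun n hn => ?_⟩
    obtain ⟨m, rfl⟩ : ∃ m, n = m + cu := ⟨n - cu, by omega⟩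
    calc (u.mul v).mul (rightPow (m + cu))
        _ ≡ (u.mul v).mul (u.mul (rightPow m)) := .congr (.refl _) (hu m (by omega)).symm
        _ ≡ u.mul (v.mul (rightPow m)) := (LDEq.ld u v _).symm
        _ ≡ u.mul (rightPow (m + cv)) := .congr (.refl u) (hv m (by omega))
        _ ≡ rightPow (m + cv + cu) := hu _ (by omega)
        _ = rightPow (m + cu + cv) := by rw [add_right_comm]

/-- Pull both left factors through a common expansion; the iterated left factors of one word form
a chain. -/
theorem comparison_of_ldeq_mul {a b c d : W} (h : a.mul c ≡ b.mul d) :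
    (a ≡ b) ∨ leftSubL a b ∨ leftSubL b a := by
  obtain ⟨s, hs₁, hs₂⟩ := h.exists_expands
  obtain ⟨a', ha', ea⟩ := hs₁.exists_leftPrefix (.single ⟨c, rfl⟩)
  obtain ⟨b', hb', eb⟩ := hs₂.exists_leftPrefix (.single ⟨d, rfl⟩)
  rcases ha'.total hb' with h | h
  · rcases h.eq_or_leftSubL with rfl | h
    · exact .inl (ea.trans eb.symm)
    · exact .inr (.inl (leftSubL.congr h ea.symm eb.symm))
  · rcases h.eq_or_leftSubL with rfl | h
    · exact .inl (ea.trans eb.symm)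
    · exact .inr (.inr (leftSubL.congr h eb.symm ea.symm))

theorem comparison (a b : W) : (a ≡ b) ∨ leftSubL a b ∨ leftSubL b a := by
  obtain ⟨ca, Na, ha⟩ := exists_mul_rightPow a
  obtain ⟨cb, Nb, hb⟩ := exists_mul_rightPow b
  refine comparison_of_ldeq_mul (calc
    a.mul (rightPow (Na + Nb + cb)) ≡ rightPow (Na + Nb + cb + ca) := ha _ (by omega)
    _ = rightPow (Na + Nb + ca + cb) := by rw [add_right_comm]
    _ ≡ b.mul (rightPow (Na + Nb + ca)) := (hb _ (by omega)).symm)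

end W

/-! ## Braid exponentiation -/

def W.eval {α : Type*} (op : α → α → α) (x : α) : W → α
  | .one => x
  | .mul a b => op (eval op x a) (eval op x b)

theorem LDEq.eval_eq {α : Type*} {op : α → α → α}
    (hop : ∀ a b c, op a (op b c) = op (op a b) (op a c)) (x : α) {s t : W} (h : s ≡ t) :
    W.eval op x s = W.eval op x t := by
  induction h with
  | refl => rfl
  | symm _ ih => exact ih.symm
  | trans _ _ ih₁ ih₂ => exact ih₁.trans ih₂
  | congr _ _ ih₁ ih₂ => simp only [W.eval, ih₁, ih₂]
  | ld a b c => exact hop _ _ _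

section ShiftOp

variable {G : Type*} [Group G]

def shiftOp (s : G →* G) (σ : G) (a b : G) : G := a * s b * σ * (s a)⁻¹

theorem shiftOp_left_distrib (s : G →* G) (σ : G) (hcomm : ∀ g, Commute σ (s (s g)))
    (hbraid : σ * s σ * σ = s σ * σ * s σ) (a b c : G) :
    shiftOp s σ a (shiftOp s σ b c) = shiftOp s σ (shiftOp s σ a b) (shiftOp s σ a c) := by
  have hc (g x : G) : σ * (s (s g) * x) = s (s g) * (σ * x) := by
    rw [← mul_assoc, (hcomm g).eq, mul_assoc]
  have hc' (g x : G) : σ * ((s (s g))⁻¹ * x) = (s (s g))⁻¹ * (σ * x) := by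
    rw [← mul_assoc, (hcomm g).inv_right.eq, mul_assoc]
  have hb (x : G) : σ * (s σ * (σ * x)) = s σ * (σ * (s σ * x)) := by
    simp only [← mul_assoc, hbraid]
  simp only [shiftOp, map_mul, map_inv, mul_inv_rev, mul_assoc, inv_mul_cancel_left, inv_inv]
  rw [hc a, inv_mul_cancel_left, hc c, hb, mul_inv_cancel_left, hc' b]

end ShiftOp

open FreeGroup in
def braidRels : Set (FreeGroup ℕ) :=
  Set.range (fun i => of i * of (i + 1) * of i * (of (i + 1) * of i * of (i + 1))⁻¹) ∪
    {r | ∃ i j, i + 2 ≤ j ∧ r = of i * of j * (of j * of i)⁻¹}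

abbrev BraidGroup : Type := PresentedGroup braidRels

namespace BraidGroup

abbrev σ (i : ℕ) : BraidGroup := PresentedGroup.of i

theorem σ_braid (i : ℕ) : σ i * σ (i + 1) * σ i = σ (i + 1) * σ i * σ (i + 1) :=
  PresentedGroup.mk_eq_mk_of_mul_inv_mem (.inl ⟨i, rfl⟩)

theorem σ_comm {i j : ℕ} (h : i + 2 ≤ j) : σ i * σ j = σ j * σ i :=
  PresentedGroup.mk_eq_mk_of_mul_inv_mem (.inr ⟨i, j, h, rfl⟩)

variable {G : Type*} [Group G]

def lift (f : ℕ → G) (hbraid : ∀ i, f i * f (i + 1) * f i = f (i + 1) * f i * f (i + 1))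
    (hcomm : ∀ i j, i + 2 ≤ j → f i * f j = f j * f i) : BraidGroup →* G :=
  PresentedGroup.toGroup (f := f) <| by
    rintro r (⟨i, rfl⟩ | ⟨i, j, hij, rfl⟩) <;>
      simp only [map_mul, map_inv, FreeGroup.lift_apply_of, mul_inv_eq_one]
    exacts [hbraid i, hcomm i j hij]

@[simp]
theorem lift_σ (f : ℕ → G) (hbraid : ∀ i, f i * f (i + 1) * f i = f (i + 1) * f i * f (i + 1))
    (hcomm : ∀ i j, i + 2 ≤ j → f i * f j = f j * f i) (i : ℕ) : lift f hbraid hcomm (σ i) = f i :=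
  PresentedGroup.toGroup.of _

def shift : BraidGroup →* BraidGroup :=
  lift (fun i => σ (i + 1)) (fun i => σ_braid (i + 1)) fun _ _ h => σ_comm (by omega)

@[simp]
theorem shift_σ (i : ℕ) : shift (σ i) = σ (i + 1) := lift_σ ..

theorem commute_σ_zero_shift_shift (g : BraidGroup) : Commute (σ 0) (shift (shift g)) := by
  have hg : g ∈ (Subgroup.centralizer {σ 0}).comap (shift.comp shift) :=
    PresentedGroup.generated_by _ _ (fun i => by
      simpa [Subgroup.mem_centralizer_singleton_iff] using
        (σ_comm (by omega : 0 + 2 ≤ i + 2)).symm) g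
  exact (Subgroup.mem_centralizer_singleton_iff.1 hg).symm

/-- Dehornoy's braid exponentiation. -/
abbrev ldOp : BraidGroup → BraidGroup → BraidGroup := shiftOp shift (σ 0)

theorem ldOp_left_distrib (a b c : BraidGroup) : ldOp a (ldOp b c) = ldOp (ldOp a b) (ldOp a c) :=
  shiftOp_left_distrib _ _ commute_σ_zero_shift_shift (by simpa using σ_braid 0) a b c

/-- `σ 0`-positive braids: those admitting a word in which `σ 0` occurs and `σ 0⁻¹` does not. -/
def sigmaPositive : Subsemigroup BraidGroup :=
  Subsemigroup.closure {g | ∃ u v, g = shift u * σ 0 * shift v}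

theorem eval_foldl_eq_mul_sigmaPositive (a c : W) (l : List W) :
    ∃ p ∈ sigmaPositive, W.eval ldOp 1 ((c :: l).foldl W.mul a) = W.eval ldOp 1 a * p := by
  have hop (x y : BraidGroup) : ldOp x y = x * (shift y * σ 0 * shift x⁻¹) := by
    simp [shiftOp, mul_assoc]
  induction l generalizing a c with
  | nil => exact ⟨_, Subsemigroup.subset_closure ⟨_, _, rfl⟩, hop _ _⟩
  | cons d l ih =>
    obtain ⟨p, hp, e⟩ := ih (a.mul c) d
    refine ⟨_, mul_mem (Subsemigroup.subset_closure ⟨W.eval ldOp 1 c, (W.eval ldOp 1 a)⁻¹, rfl⟩) hp,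
      ?_⟩
    rw [List.foldl_cons, e, W.eval, hop, mul_assoc]

end BraidGroup

/-! ## Reduced words in free groups -/

open scoped Pointwise

namespace FreeGroup

theorem mk_singleton {α : Type*} (x : α) (e : Bool) :
    mk [(x, e)] = if e then of x else (of x)⁻¹ := by
  cases e
  · rw [of, inv_mk]; rfl
  · rfl

variable {α β : Type*}

theorem mulAut_ext {e f : MulAut (FreeGroup α)} (h : ∀ j, e (of j) = f (of j)) : e = f :=
  MulEquiv.toMonoidHom_injective (ext_hom _ _ h)

def avoiding (p : α) : Subgroup (FreeGroup α) := Subgroup.closure (of '' {p}ᶜ)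

theorem of_mem_avoiding {p i : α} (h : i ≠ p) : of i ∈ avoiding p :=
  Subgroup.subset_closure (Set.mem_image_of_mem of h)

theorem isReduced_cons_append {q : β} {e : Bool} {B R : List (β × Bool)} (hB : IsReduced B)
    (hBq : ∀ l ∈ B, l.1 ≠ q) (hR : IsReduced R) (hRq : ∀ l ∈ R.head?, l.1 = q)
    (hBR : B = [] → ∀ l ∈ R.head?, l.2 = e) : IsReduced ((q, e) :: (B ++ R)) := by
  refine List.isChain_cons.2 ⟨fun y hy heq => ?_, List.isChain_append.2 ⟨hB, hR, ?_⟩⟩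
  · rcases B with _ | ⟨b, B⟩
    · exact (hBR rfl y hy).symm
    · obtain rfl : b = y := by simpa using hy
      exact absurd heq.symm (hBq b List.mem_cons_self)
  · intro x hx y hy heq
    exact absurd (heq.trans (hRq y hy)) (hBq x (List.mem_of_mem_getLast? hx))

theorem map_mem_avoiding {p : α} {q : β} {ψ : FreeGroup α →* FreeGroup β}
    (h : ∀ j ≠ p, ψ (of j) ∈ avoiding q) : ∀ g ∈ avoiding p, ψ g ∈ avoiding q := fun _ hg =>
  (Subgroup.closure_le (K := (avoiding q).comap ψ)).2 (by rintro _ ⟨j, hj, rfl⟩; exact h j hj) hg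

theorem smul_avoiding {p : α} {e : MulAut (FreeGroup α)} (h : ∀ j ≠ p, e (of j) ∈ avoiding p)
    (h' : ∀ j ≠ p, e⁻¹ (of j) ∈ avoiding p) : e • avoiding p = avoiding p := by
  have smul_le (f : MulAut (FreeGroup α)) (hf : ∀ j ≠ p, f (of j) ∈ avoiding p) :
      f • avoiding p ≤ avoiding p := by
    rw [avoiding, Subgroup.smul_closure, Subgroup.closure_le]
    rintro _ ⟨_, ⟨j, hj, rfl⟩, rfl⟩
    exact hf j hj
  exact le_antisymm (smul_le e h) (Subgroup.subset_pointwise_smul_iff.2 (smul_le e⁻¹ h'))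

variable [DecidableEq α] [DecidableEq β]

theorem toWord_mk_of_isReduced {w : List (α × Bool)} (h : IsReduced w) : (mk w).toWord = w := by
  rw [toWord_mk, h.reduce_eq]

theorem head?_toWord_inv (g : FreeGroup α) :
    g⁻¹.toWord.head? = g.toWord.getLast?.map fun l => (l.1, !l.2) := by
  rw [toWord_inv, invRev, List.head?_reverse, List.getLast?_map]

theorem mem_closure_image_of_iff {S : Set α} {g : FreeGroup α} :
    g ∈ Subgroup.closure (of '' S) ↔ ∀ l ∈ g.toWord, l.1 ∈ S := by
  constructor
  · intro h
    induction h using Subgroup.closure_induction with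
    | mem x hx =>
      obtain ⟨i, hi, rfl⟩ := hx
      simpa [toWord_of] using hi
    | one => simp
    | mul x y _ _ hx hy =>
      intro l hl
      rcases List.mem_append.1 ((toWord_mul_sublist x y).subset hl) with h | h
      exacts [hx l h, hy l h]
    | inv x _ hx =>
      intro l hl
      simp only [toWord_inv, invRev, List.mem_reverse, List.mem_map] at hl
      obtain ⟨m, hm, rfl⟩ := hl
      exact hx m hm
  · intro h
    rw [← mk_toWord (x := g)]
    generalize g.toWord = w at h ⊢
    induction w with
    | nil => exact one_mem _
    | cons x w ih =>
      have hx : mk [x] ∈ Subgroup.closure (of '' S) := by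
        have hof := Subgroup.subset_closure (Set.mem_image_of_mem of (h x List.mem_cons_self))
        rw [mk_singleton]
        split_ifs
        exacts [hof, inv_mem hof]
      rw [← List.singleton_append, ← mul_mk]
      exact mul_mem hx (ih fun l hl => h l (List.mem_cons_of_mem x hl))

theorem mem_avoiding_iff {p : α} {g : FreeGroup α} : g ∈ avoiding p ↔ ∀ l ∈ g.toWord, l.1 ≠ p :=
  mem_closure_image_of_iff

theorem toWord_mk_singleton_mul_mul {q : β} {e : Bool} {h₁ h₂ : FreeGroup β} (h₁q : h₁ ∈ avoiding q)
    (h₂q : ∀ l ∈ h₂.toWord.head?, l.1 = q) (h₁₂ : h₁ = 1 → ∀ l ∈ h₂.toWord.head?, l.2 = e) :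
    (mk [(q, e)] * h₁ * h₂).toWord = (q, e) :: (h₁.toWord ++ h₂.toWord) := by
  have hred := isReduced_cons_append isReduced_toWord (mem_avoiding_iff.1 h₁q) isReduced_toWord h₂q
    fun h => h₁₂ (toWord_eq_nil_iff.1 h)
  conv_lhs => rw [← mk_toWord (x := h₁), ← mk_toWord (x := h₂), mul_mk, mul_mk]
  exact toWord_mk_of_isReduced hred

/-- Cut the reduced word after its first letter at the next letter `of p ^ ±1`: the image of the
block in between avoids `q` and is trivial only if the block is empty, so the images of the pieces
glue to a reduced word. -/
theorem exists_toWord_map_mk_cons {ψ : FreeGroup α →* FreeGroup β} (hinj : Function.Injective ψ)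
    {p : α} {q : β} (hp : ψ (of p) = of q) (hH : ∀ g ∈ avoiding p, ψ g ∈ avoiding q)
    (e : Bool) (w : List (α × Bool)) (hred : IsReduced ((p, e) :: w)) :
    ∃ R, (ψ (mk ((p, e) :: w))).toWord = (q, e) :: R := by
  set b := w.takeWhile (fun l => l.1 ≠ p)
  set r := w.dropWhile (fun l => l.1 ≠ p)
  have hw : w = b ++ r := List.takeWhile_append_dropWhile.symm
  have hbr : IsReduced (b ++ r) := hw ▸ hred.infix (List.suffix_cons _ _).isInfix
  have hb : (mk b).toWord = b := toWord_mk_of_isReduced (hbr.infix (List.prefix_append _ _).isInfix)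
  have hR : ∀ l ∈ (ψ (mk r)).toWord.head?, l.1 = q ∧ (b = [] → l.2 = e) := by
    rcases hr : r with _ | ⟨⟨i, e'⟩, r'⟩
    · simp [← one_eq_mk]
    have hi : i = p := by
      have := List.head?_dropWhile_not (fun l : α × Bool => decide (l.1 ≠ p)) w
      rw [show w.dropWhile _ = r from rfl, hr] at this
      simpa using this
    subst hi
    have : r'.length < w.length := by
      rw [hw, hr, List.length_append, List.length_cons]; omega
    obtain ⟨R', hR'⟩ := exists_toWord_map_mk_cons hinj hp hH e' r'
      (hr ▸ hbr.infix (List.suffix_append _ _).isInfix)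
    simp only [hR', List.head?_cons, Option.mem_def, Option.some.injEq, forall_eq', true_and]
    intro hb
    rw [hw, hb, hr, List.nil_append, isReduced_cons_cons] at hred
    exact (hred.1 rfl).symm
  have hsplit : ψ (mk ((p, e) :: w)) = mk [(q, e)] * ψ (mk b) * ψ (mk r) := by
    have hψ : ψ (mk [(p, e)]) = mk [(q, e)] := by
      rw [mk_singleton, mk_singleton]; split_ifs <;> simp [hp]
    rw [← hψ, ← _root_.map_mul, ← _root_.map_mul, mul_mk, mul_mk, hw]
    rfl
  rw [hsplit]
  refine ⟨_, toWord_mk_singleton_mul_mul (hH _ ?_) (fun l hl => (hR l hl).1) ?_⟩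
  · rw [mem_avoiding_iff, hb]
    intro l hl
    simpa using List.mem_takeWhile_imp hl
  · intro h1 l hl
    refine (hR l hl).2 ?_
    rw [← hb, hinj (h1.trans (_root_.map_one ψ).symm), toWord_one]
termination_by w.length

theorem head?_toWord_map {ψ : FreeGroup α →* FreeGroup β} (hinj : Function.Injective ψ) {p : α}
    {q : β} (hp : ψ (of p) = of q) (hH : ∀ g ∈ avoiding p, ψ g ∈ avoiding q) {g : FreeGroup α}
    {e : Bool} (hg : g.toWord.head? = some (p, e)) : (ψ g).toWord.head? = some (q, e) := by
  obtain ⟨w, hw⟩ := List.head?_eq_some_iff.1 hg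
  obtain ⟨R, hR⟩ := exists_toWord_map_mk_cons hinj hp hH e w (hw ▸ isReduced_toWord)
  rw [← mk_toWord (x := g), hw, hR]
  rfl

/-- The reduced word of `g` starts with `of p` and ends with `(of p)⁻¹`. -/
def Framed (p : α) (g : FreeGroup α) : Prop :=
  g.toWord.head? = some (p, true) ∧ g⁻¹.toWord.head? = some (p, true)

theorem not_framed_of (p : α) : ¬ Framed p (of p) := by
  simp [Framed, toWord_inv, toWord_of, invRev]

theorem Framed.map {ψ : FreeGroup α →* FreeGroup β} (hinj : Function.Injective ψ) {p : α} {q : β}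
    (hp : ψ (of p) = of q) (hH : ∀ g ∈ avoiding p, ψ g ∈ avoiding q) {g : FreeGroup α}
    (hg : Framed p g) : Framed q (ψ g) :=
  ⟨head?_toWord_map hinj hp hH hg.1, by
    rw [← _root_.map_inv]
    exact head?_toWord_map hinj hp hH hg.2⟩

theorem Framed.conj_of {p q : α} (hqp : q ≠ p) {g : FreeGroup α} (hg : Framed q g) :
    Framed p (of p * g * (of p)⁻¹) := by
  have key (h : FreeGroup α) (hh : Framed q h) :
      (of p * h * (of p)⁻¹).toWord.head? = some (p, true) := by
    obtain ⟨w, hw⟩ := List.head?_eq_some_iff.1 hh.1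
    have hlast : h.toWord.getLast? = some (q, false) := by
      have := hh.2
      rw [head?_toWord_inv, Option.map_eq_some_iff] at this
      obtain ⟨⟨i, e⟩, he, hie⟩ := this
      simp only [Prod.mk.injEq, Bool.not_eq_eq_eq_not, Bool.not_true] at hie
      rw [he, hie.1, hie.2]
    have hred : IsReduced ((p, true) :: (h.toWord ++ [(p, false)])) := by
      refine List.isChain_cons.2 ⟨?_, List.isChain_append.2 ⟨isReduced_toWord, .singleton _, ?_⟩⟩
      · simp [hw, hqp.symm]
      · simp [hlast, hqp]
    have hmk : of p * h * (of p)⁻¹ = mk ((p, true) :: (h.toWord ++ [(p, false)])) := by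
      rw [← mk_toWord (x := h), of, inv_mk, mul_mk, mul_mk, toWord_mk_of_isReduced isReduced_toWord]
      rfl
    rw [hmk, toWord_mk_of_isReduced hred]
    rfl
  refine ⟨key g hg, ?_⟩
  simpa [mul_assoc] using key g⁻¹ ⟨hg.2, by simpa using hg.1⟩

end FreeGroup

/-! ## Artin's action and `σ 0`-positive braids -/

open FreeGroup

namespace Artin

def gen (i j : ℕ) : FreeGroup ℕ :=
  if j = i then of i * of (i + 1) * (of i)⁻¹ else if j = i + 1 then of i else of j

def genInv (i j : ℕ) : FreeGroup ℕ :=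
  if j = i then of (i + 1) else if j = i + 1 then (of (i + 1))⁻¹ * of i * of (i + 1) else of j

def aut (i : ℕ) : MulAut (FreeGroup ℕ) :=
  MonoidHom.toMulEquiv (FreeGroup.lift (gen i)) (FreeGroup.lift (genInv i))
    (FreeGroup.ext_hom _ _ fun j => by
      simp only [MonoidHom.comp_apply, lift_apply_of, gen, MonoidHom.id_apply]
      split_ifs <;> simp_all [genInv, mul_assoc])
    (FreeGroup.ext_hom _ _ fun j => by
      simp only [MonoidHom.comp_apply, lift_apply_of, genInv, MonoidHom.id_apply]
      split_ifs <;> simp_all [gen, mul_assoc])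

theorem gen_self (i : ℕ) : gen i i = of i * of (i + 1) * (of i)⁻¹ := if_pos rfl

theorem gen_succ (i : ℕ) : gen i (i + 1) = of i := by simp [gen]

theorem gen_of_ne {i j : ℕ} (h₁ : j ≠ i) (h₂ : j ≠ i + 1) : gen i j = of j := by simp [gen, h₁, h₂]

@[simp]
theorem aut_of (i j : ℕ) : aut i (of j) = gen i j := lift_apply_of

@[simp]
theorem aut_inv_of (i j : ℕ) : (aut i)⁻¹ (of j) = genInv i j := lift_apply_of

theorem aut_braid (i : ℕ) : aut i * aut (i + 1) * aut i = aut (i + 1) * aut i * aut (i + 1) :=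
  mulAut_ext fun j => by
    rcases (by omega : j = i ∨ j = i + 1 ∨ j = i + 2 ∨ (j ≠ i ∧ j ≠ i + 1 ∧ j ≠ i + 2)) with
      rfl | rfl | rfl | ⟨h₁, h₂, h₃⟩ <;>
    simp (disch := omega) [gen_self, gen_succ, gen_of_ne, mul_assoc]

theorem aut_comm {i j : ℕ} (h : i + 2 ≤ j) : aut i * aut j = aut j * aut i :=
  mulAut_ext fun k => by
    rcases (by omega : k = i ∨ k = i + 1 ∨ k = j ∨ k = j + 1 ∨
        (k ≠ i ∧ k ≠ i + 1 ∧ k ≠ j ∧ k ≠ j + 1)) with rfl | rfl | rfl | rfl | ⟨h₁, h₂, h₃, h₄⟩ <;>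
    simp (disch := omega) [gen_self, gen_succ, gen_of_ne]

end Artin

namespace BraidGroup

def artinAction : BraidGroup →* MulAut (FreeGroup ℕ) :=
  lift Artin.aut Artin.aut_braid fun _ _ => Artin.aut_comm

@[simp]
theorem artinAction_σ (i : ℕ) : artinAction (σ i) = Artin.aut i := lift_σ ..

theorem artinAction_shift_mem (u : BraidGroup) :
    artinAction (shift u) ∈ MulAction.stabilizer (MulAut (FreeGroup ℕ)) (of 0) ⊓
      MulAction.stabilizer (MulAut (FreeGroup ℕ)) (avoiding 0) := by
  refine Subgroup.mem_comap.1
    (PresentedGroup.generated_by _ (Subgroup.comap (artinAction.comp shift) _) (fun i => ?_) u)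
  simp only [Subgroup.mem_comap, MonoidHom.comp_apply, shift_σ, artinAction_σ,
    Subgroup.mem_inf, MulAction.mem_stabilizer_iff, MulAut.smul_def, Artin.aut_of]
  refine ⟨Artin.gen_of_ne (by omega) (by omega), smul_avoiding (fun j hj => ?_) fun j hj => ?_⟩
  · simp only [Artin.aut_of, Artin.gen]
    split_ifs <;> apply_rules [mul_mem, inv_mem, of_mem_avoiding] <;> omega
  · simp only [Artin.aut_inv_of, Artin.genInv]
    split_ifs <;> apply_rules [mul_mem, inv_mem, of_mem_avoiding] <;> omega

theorem artinAction_shift_of_zero (u : BraidGroup) : artinAction (shift u) (of 0) = of 0 :=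
  (artinAction_shift_mem u).1

theorem framed_artinAction_shift {g : FreeGroup ℕ} (u : BraidGroup) (h : Framed 0 g) :
    Framed 0 (artinAction (shift u) g) :=
  h.map (ψ := (artinAction (shift u)).toMonoidHom) (MulEquiv.injective _)
    (artinAction_shift_of_zero u) fun g hg => by
      rw [← MulAction.mem_stabilizer_iff.1 (artinAction_shift_mem u).2]
      exact Subgroup.smul_mem_pointwise_smul g _ _ hg

/-- Conjugating `Artin.aut 0` by `of 0` turns the pivot letter `x₀` into `x₁`. -/
theorem framed_aut_zero {g : FreeGroup ℕ} (h : Framed 0 g ∨ g = of 0) :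
    Framed 0 (Artin.aut 0 g) := by
  rcases h with h | rfl
  · let ψ := (MulAut.conj (of 0)⁻¹ * Artin.aut 0).toMonoidHom
    have hψ : Artin.aut 0 g = of 0 * ψ g * (of 0)⁻¹ := by simp [ψ, mul_assoc]
    rw [hψ]
    refine Framed.conj_of one_ne_zero (h.map (MulEquiv.injective _) ?_ (map_mem_avoiding ?_))
    · simp [ψ, Artin.gen_self, mul_assoc]
    · intro j hj
      simp only [ψ, MulEquiv.coe_toMonoidHom, MulAut.mul_apply, Artin.aut_of, MulAut.conj_apply,
        inv_inv, Artin.gen]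
      split_ifs <;> apply_rules [mul_mem, inv_mem, of_mem_avoiding] <;> omega
  · exact ⟨rfl, rfl⟩

theorem framed_artinAction {p : BraidGroup} (hp : p ∈ sigmaPositive) {g : FreeGroup ℕ}
    (hg : Framed 0 g ∨ g = of 0) : Framed 0 (artinAction p g) := by
  induction hp using Subsemigroup.closure_induction generalizing g with
  | mem _ hx =>
    obtain ⟨u, v, rfl⟩ := hx
    simp only [_root_.map_mul, MulAut.mul_apply, artinAction_σ]
    refine framed_artinAction_shift u (framed_aut_zero ?_)
    rcases hg with hg | rfl
    exacts [.inl (framed_artinAction_shift v hg), .inr (artinAction_shift_of_zero v)]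
  | mul _ _ _ _ ihx ihy =>
    rw [_root_.map_mul, MulAut.mul_apply]
    exact ihx (.inl (ihy hg))

theorem ne_one_of_mem_sigmaPositive {p : BraidGroup} (hp : p ∈ sigmaPositive) : p ≠ 1 := by
  rintro rfl
  simpa using not_framed_of 0 (by simpa using framed_artinAction hp (.inr rfl))

end BraidGroup

namespace W

theorem leftSubL_irrefl (a : W) : ¬ leftSubL a a := by
  rintro ⟨l, hl, e⟩
  obtain ⟨c, l, rfl⟩ := List.exists_cons_of_ne_nil hl
  obtain ⟨p, hp, hev⟩ := BraidGroup.eval_foldl_eq_mul_sigmaPositive a c l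
  refine BraidGroup.ne_one_of_mem_sigmaPositive hp
    (mul_left_cancel (a := W.eval BraidGroup.ldOp 1 a) ?_)
  rw [← hev, mul_one]
  exact e.eval_eq BraidGroup.ldOp_left_distrib 1

end W

theorem stmt_3 :
    (∀ a : W, ¬ leftSubL a a) ∧
    (∀ a b : W,
      (LDEq a b ∨ leftSubL a b ∨ leftSubL b a) ∧
      ¬ (LDEq a b ∧ leftSubL a b) ∧
      ¬ (LDEq a b ∧ leftSubL b a) ∧
      ¬ (leftSubL a b ∧ leftSubL b a)) ∧
    (∀ a b c : W, LDEq (c.mul a) (c.mul b) → LDEq a b) := by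
  refine ⟨W.leftSubL_irrefl, fun a b => ⟨W.comparison a b, ?_, ?_, ?_⟩, fun a b c h => ?_⟩
  · rintro ⟨e, h⟩
    exact W.leftSubL_irrefl a (h.congr (.refl a) e.symm)
  · rintro ⟨e, h⟩
    exact W.leftSubL_irrefl b (h.congr (.refl b) e)
  · rintro ⟨h₁, h₂⟩
    exact W.leftSubL_irrefl a (h₁.trans h₂)
  · rcases W.comparison a b with e | h' | h'
    · exact e
    · exact absurd ((h'.mul_left c).congr (.refl _) h.symm) (W.leftSubL_irrefl _)
    · exact absurd ((h'.mul_left c).congr (.refl _) h) (W.leftSubL_irrefl _)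
end

section
/- (Dehornoy) There exists a mapping ∂ : W → W such that for all words a, b ∈ W: (1) a → ∂a; (2) if a →_LD b, then b → ∂a; and (3) if a → b, then ∂a → ∂b. -/
/-- `a →_LD b`: `b` results from `a` by a single application of the left
distributive law from left to right, i.e. by replacing one subterm of the
form `x·(y·z)` by `(x·y)·(x·z)`. -/
inductive StepLD : W → W → Prop
  | ld (x y z : W) : StepLD (x.mul (y.mul z)) ((x.mul y).mul (x.mul z))
  | left {a a' : W} (b : W) : StepLD a a' → StepLD (a.mul b) (a'.mul b)
  | right (a : W) {b b' : W} : StepLD b b' → StepLD (a.mul b) (a.mul b')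

/-- `a → b`: the reflexive transitive closure of `→_LD`. -/
def RedLD : W → W → Prop := Relation.ReflTransGen StepLD

namespace W

/-- Dehornoy's `∗` operation: `a ∗ b` fully distributes `a` into `b`. -/
def op (a : W) : W → W
  | one => a.mul one
  | mul b c => (op a b).mul (op a c)

/-- Dehornoy's `∂`. -/
def del : W → W
  | one => one
  | mul u v => op (del u) (del v)

theorem redLeft {a a' : W} (b : W) (h : RedLD a a') : RedLD (a.mul b) (a'.mul b) := by
  induction h with
  | refl => exact .refl
  | tail _ h2 ih => exact ih.tail (StepLD.left b h2)

theorem redRight (a : W) {b b' : W} (h : RedLD b b') : RedLD (a.mul b) (a.mul b') := by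
  induction h with
  | refl => exact .refl
  | tail _ h2 ih => exact ih.tail (StepLD.right a h2)

theorem redMul {a a' b b' : W} (h1 : RedLD a a') (h2 : RedLD b b') :
    RedLD (a.mul b) (a'.mul b') := (redLeft b h1).trans (redRight a' h2)

theorem toOp (a b : W) : RedLD (a.mul b) (op a b) := by
  induction b with
  | one => exact .refl
  | mul b c ih1 ih2 =>
      exact (Relation.ReflTransGen.single (.ld a b c)).trans (redMul ih1 ih2)

theorem stepOp (a : W) {b b' : W} (h : StepLD b b') : StepLD (op a b) (op a b') := by
  induction h with
  | ld x y z => exact .ld _ _ _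
  | left c _ ih => exact .left _ ih
  | right c _ ih => exact .right _ ih

theorem redOpRight (a : W) {b b' : W} (h : RedLD b b') : RedLD (op a b) (op a b') := by
  induction h with
  | refl => exact .refl
  | tail _ h2 ih => exact ih.tail (stepOp a h2)

theorem redOpLeftStep {a a' : W} (b : W) (h : StepLD a a') : RedLD (op a b) (op a' b) := by
  induction b with
  | one => exact .single (.left _ h)
  | mul b c ih1 ih2 => exact redMul ih1 ih2

theorem redOpLeft {a a' : W} (b : W) (h : RedLD a a') : RedLD (op a b) (op a' b) := by
  induction h with
  | refl => exact .refl
  | tail _ h2 ih => exact ih.trans (redOpLeftStep b h2)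

/-- Key lemma: `∗` satisfies left distributivity up to reduction. -/
theorem key (a b c : W) : RedLD (op a (op b c)) (op (op a b) (op a c)) := by
  induction c with
  | one =>
      exact (Relation.ReflTransGen.single (.ld _ _ _)).trans (redMul (toOp _ _) .refl)
  | mul c1 c2 ih1 ih2 => exact redMul ih1 ih2

theorem prop1 (a : W) : RedLD a (del a) := by
  induction a with
  | one => exact .refl
  | mul u v ih1 ih2 => exact (redMul ih1 ih2).trans (toOp _ _)

theorem prop3step {a b : W} (h : StepLD a b) : RedLD (del a) (del b) := by
  induction h with
  | ld x y z => exact key _ _ _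
  | left c _ ih => exact redOpLeft _ ih
  | right c _ ih => exact redOpRight _ ih

theorem prop3 {a b : W} (h : RedLD a b) : RedLD (del a) (del b) := by
  induction h with
  | refl => exact .refl
  | tail _ h2 ih => exact ih.trans (prop3step h2)

theorem prop2 {a b : W} (h : StepLD a b) : RedLD b (del a) := by
  induction h with
  | ld x y z =>
      exact ((redMul (redMul (prop1 x) (prop1 y)) (redMul (prop1 x) (prop1 z))).trans
        (redMul (toOp _ _) (toOp _ _))).trans (redOpRight _ (toOp _ _))
  | left c _ ih => exact (redMul ih (prop1 c)).trans (toOp _ _)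
  | right c _ ih => exact (redMul (prop1 c) ih).trans (toOp _ _)

end W

theorem stmt_5 :
    ∃ d : W → W,
      (∀ a : W, RedLD a (d a)) ∧
      (∀ a b : W, StepLD a b → RedLD b (d a)) ∧
      (∀ a b : W, RedLD a b → RedLD (d a) (d b)) := by
  exact ⟨W.del, W.prop1, fun _ _ => W.prop2, fun _ _ => W.prop3⟩
end

section
/- (Dehornoy) Let a, b, b' ∈ W. If a is a left subterm of b in W (i.e. b = ((a·c_1)·c_2)···c_k as literal terms, for some k ≥ 1 and c_1,…,c_k ∈ W) and b → b', then there exists a word a' that is a left subterm of b' in W such that a → a'. -/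
/-- `a` is a left subterm of `b` in `W` (as literal terms): there exist `k ≥ 1`
and `c_1, …, c_k` with `b = ((a·c_1)·c_2)···c_k`. -/
def leftSubW (a b : W) : Prop :=
  ∃ l : List W, l ≠ [] ∧ b = l.foldl W.mul a

lemma leftSubW_mul {a p : W} (c : W) (h : leftSubW a p) : leftSubW a (p.mul c) := by
  obtain ⟨l, hl, rfl⟩ := h
  exact ⟨l ++ [c], by simp, by simp [List.foldl_append]⟩

lemma step_lemma : ∀ {b b' : W}, StepLD b b' → ∀ a : W, leftSubW a b →
    ∃ a' : W, leftSubW a' b' ∧ RedLD a a' := by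
  intro b b' s
  induction s with
  | ld x y z =>
    intro a h
    obtain ⟨l, hl, hb⟩ := h
    rcases List.eq_nil_or_concat l with rfl | ⟨l', c, rfl⟩
    · exact absurd rfl hl
    · rw [List.concat_eq_append, List.foldl_append, List.foldl_cons, List.foldl_nil] at hb
      obtain ⟨hx, hc⟩ : x = List.foldl W.mul a l' ∧ W.mul y z = c := by
        cases hb; exact ⟨rfl, rfl⟩
      rcases List.eq_nil_or_concat l' with rfl | ⟨l'', d, rfl⟩
      · simp at hx
        subst hx
        exact ⟨x, ⟨[y, W.mul x z], by simp, rfl⟩, Relation.ReflTransGen.refl⟩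
      · refine ⟨a, leftSubW_mul _ (leftSubW_mul _ ⟨l''.concat d, by simp, hx⟩),
          Relation.ReflTransGen.refl⟩
  | left c s ih =>
    rename_i p p'
    intro a h
    obtain ⟨l, hl, hb⟩ := h
    rcases List.eq_nil_or_concat l with rfl | ⟨l', d, rfl⟩
    · exact absurd rfl hl
    · rw [List.concat_eq_append, List.foldl_append, List.foldl_cons, List.foldl_nil] at hb
      obtain ⟨hp, hd⟩ : p = List.foldl W.mul a l' ∧ c = d := by
        cases hb; exact ⟨rfl, rfl⟩
      rcases List.eq_nil_or_concat l' with rfl | ⟨l'', e, rfl⟩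
      · simp at hp
        subst hp
        exact ⟨p', ⟨[c], by simp, rfl⟩, Relation.ReflTransGen.single s⟩
      · obtain ⟨a', ha', hred⟩ := ih a ⟨l''.concat e, by simp, hp⟩
        exact ⟨a', leftSubW_mul _ ha', hred⟩
  | right p s ih =>
    rename_i c c'
    intro a h
    obtain ⟨l, hl, hb⟩ := h
    rcases List.eq_nil_or_concat l with rfl | ⟨l', d, rfl⟩
    · exact absurd rfl hl
    · rw [List.concat_eq_append, List.foldl_append, List.foldl_cons, List.foldl_nil] at hb
      obtain ⟨hp, hd⟩ : p = List.foldl W.mul a l' ∧ c = d := by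
        cases hb; exact ⟨rfl, rfl⟩
      exact ⟨a, ⟨l' ++ [c'], by simp, by simp [List.foldl_append, ← hp]⟩,
        Relation.ReflTransGen.refl⟩

theorem stmt_6 (a b b' : W) (hab : leftSubW a b) (hbb' : RedLD b b') :
    ∃ a' : W, leftSubW a' b' ∧ RedLD a a' := by
  induction hbb' with
  | refl => exact ⟨a, hab, Relation.ReflTransGen.refl⟩
  | tail _ s ih =>
    obtain ⟨a₁, ha₁, hred₁⟩ := ih
    obtain ⟨a₂, ha₂, hred₂⟩ := step_lemma s a₁ ha₁
    exact ⟨a₂, ha₂, hred₁.trans hred₂⟩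
end

section
/- (Laver, Dehornoy) Every left-distributive algebra (A,·) can be extended and expanded to an algebra satisfying Laver's laws: there exist a set P, an injection i : A → P, and binary operations · and ∘ on P satisfying (ALΣ), such that i(a·b) = i(a)·i(b) for all a,b ∈ A. Moreover, if A is generated by a single element 1 under ·, then P is generated by i(1) under · and ∘. -/
/-- Laver's laws (ALΣ) for two binary operations `mul` (`·`) and `comp` (`∘`):
`a∘(b∘c) = (a∘b)∘c`; `(a∘b)·c = a·(b·c)`; `a·(b∘c) = (a·b)∘(a·c)`;
`a∘b = (a·b)∘a`. -/
def ALSigma {α : Type*} (mul comp : α → α → α) : Prop :=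
  (∀ a b c : α, comp a (comp b c) = comp (comp a b) c) ∧
  (∀ a b c : α, mul (comp a b) c = mul a (mul b c)) ∧
  (∀ a b c : α, mul a (comp b c) = comp (mul a b) (mul a c)) ∧
  (∀ a b : α, comp a b = comp (mul a b) a)

/-- `A` is generated by `one` under the single binary operation `op`. -/
def GeneratesOne {α : Type*} (op : α → α → α) (one : α) : Prop :=
  ∀ s : Set α, one ∈ s → (∀ x ∈ s, ∀ y ∈ s, op x y ∈ s) → ∀ x : α, x ∈ s

/-- `A` is generated by `one` under the two binary operations `mul` and `comp`. -/
def GeneratesTwo {α : Type*} (mul comp : α → α → α) (one : α) : Prop :=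
  ∀ s : Set α, one ∈ s → (∀ x ∈ s, ∀ y ∈ s, mul x y ∈ s) →
    (∀ x ∈ s, ∀ y ∈ s, comp x y ∈ s) → ∀ x : α, x ∈ s

/-!
Take for `P` the nonempty words over `A` (the free semigroup, whose concatenation is `∘`) modulo
the congruence generated by `a b ≡ (a·b) a`. A word `a₁ ⋯ aₙ` acts on `A` by
`x ↦ a₁·(a₂·(⋯(aₙ·x)))`; left distributivity makes this action an endomorphism of `(A, ·)`
that is constant on congruence classes, so `u · v`, the word `v` with the action of `u` applied
to each letter, is well defined. Three of Laver's laws then hold already on words, and the fourth,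
`u ∘ v = (u·v) ∘ u`, follows by moving the letters of `v` one at a time across `u`. The defining
relation preserves length and only involves words of length two, so distinct letters stay
distinct in `P`.
-/

open scoped Quandles

open FreeSemigroup (of map)

theorem FreeSemigroup.map_map {α β γ : Type*} (f : β → γ) (g : α → β) (w : FreeSemigroup α) :
    map f (map g w) = map (f ∘ g) w :=
  DFunLike.congr_fun (hom_ext rfl : (map f).comp (map g) = map (f ∘ g)) w

namespace Shelf

variable {S T : Type*} [Shelf S] [Shelf T]

/-- The word `a₁ ⋯ aₙ` acts by `x ↦ a₁ ◃ (a₂ ◃ (⋯ (aₙ ◃ x)))`. -/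
def wordAct (w : FreeSemigroup S) : S → S :=
  FreeSemigroup.lift (β := Function.End S) Shelf.act w

theorem wordAct_of (a x : S) : wordAct (of a) x = a ◃ x := rfl

theorem wordAct_mul (u v : FreeSemigroup S) (x : S) :
    wordAct (u * v) x = wordAct u (wordAct v x) := by
  rw [wordAct, map_mul]; rfl

theorem wordAct_act (w : FreeSemigroup S) (x y : S) :
    wordAct w (x ◃ y) = wordAct w x ◃ wordAct w y := by
  induction w with
  | ih1 a => exact self_distrib
  | ih2 a w _ ih =>
    simp only [wordAct_mul, wordAct_of, ih]
    exact self_distrib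

inductive SwapRel : FreeSemigroup S → FreeSemigroup S → Prop
  | intro (a b : S) : SwapRel (of a * of b) (of (a ◃ b) * of a)

variable (S) in
def swapCon : Con (FreeSemigroup S) := conGen SwapRel

theorem wordAct_eq_of_swapCon {u v : FreeSemigroup S} (h : swapCon S u v) :
    wordAct u = wordAct v := by
  refine (Con.conGen_le.2 ?_ :
    swapCon S ≤ Con.ker (FreeSemigroup.lift (β := Function.End S) Shelf.act)) h
  rintro _ _ ⟨a, b⟩
  funext x
  exact self_distrib

theorem swapCon_map {f : S → T} (hf : ∀ x y, f (x ◃ y) = f x ◃ f y)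
    {u v : FreeSemigroup S} (h : swapCon S u v) :
    swapCon T (map f u) (map f v) := by
  refine (Con.conGen_le.2 ?_ : swapCon S ≤ (swapCon T).comap _ (map_mul _)) h
  rintro _ _ ⟨a, b⟩
  show swapCon T (of (f a) * of (f b)) (of (f (a ◃ b)) * of (f a))
  rw [hf]
  exact Con.le_conGen _ _ (SwapRel.intro _ _)

theorem swapCon_mul_of (u : FreeSemigroup S) (a : S) :
    swapCon S (u * of a) (of (wordAct u a) * u) := by
  induction u with
  | ih1 b => exact Con.le_conGen _ _ (SwapRel.intro b a)
  | ih2 b u _ ih =>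
    have swap : swapCon S (of b * of (wordAct u a)) (of (b ◃ wordAct u a) * of b) :=
      Con.le_conGen _ _ (SwapRel.intro _ _)
    rw [mul_assoc]
    refine (swapCon S).trans ((swapCon S).mul ((swapCon S).refl _) ih) ?_
    rw [← mul_assoc, ← mul_assoc, wordAct_mul, wordAct_of]
    exact (swapCon S).mul swap ((swapCon S).refl u)

theorem swapCon_mul (u v : FreeSemigroup S) :
    swapCon S (u * v) (map (wordAct u) v * u) := by
  induction v with
  | ih1 a => exact swapCon_mul_of u a
  | ih2 a v _ ih =>
    have map_of_mul : map (wordAct u) (of a * v) =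
        of (wordAct u a) * map (wordAct u) v := by
      rw [map_mul]; rfl
    rw [map_of_mul, ← mul_assoc u, mul_assoc (of _)]
    refine (swapCon S).trans ((swapCon S).mul (swapCon_mul_of u a) ((swapCon S).refl v)) ?_
    rw [mul_assoc]
    exact (swapCon S).mul ((swapCon S).refl _) ih

theorem length_eq_and_eq_of_swapCon {u v : FreeSemigroup S} (h : swapCon S u v) :
    u.length = v.length ∧ (u.length = 1 → u = v) := by
  induction h with
  | of _ _ h => cases h; exact ⟨rfl, fun h => nomatch h⟩
  | refl => exact ⟨rfl, fun _ => rfl⟩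
  | symm _ ih => exact ⟨ih.1.symm, fun h => (ih.2 (ih.1 ▸ h)).symm⟩
  | trans _ _ ih₁ ih₂ => exact ⟨ih₁.1.trans ih₂.1, fun h => (ih₁.2 h).trans (ih₂.2 (ih₁.1 ▸ h))⟩
  | @mul w _ y _ _ _ ih₁ ih₂ =>
    refine ⟨by simp only [FreeSemigroup.length_mul, ih₁.1, ih₂.1], fun h => ?_⟩
    have : 0 < w.length := Nat.succ_pos _
    have : 0 < y.length := Nat.succ_pos _
    rw [FreeSemigroup.length_mul] at h
    omega

variable (S) in
abbrev SwapQuotient := (swapCon S).Quotient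

namespace SwapQuotient

instance : Shelf (SwapQuotient S) where
  act := Quotient.map₂ (fun u v => map (wordAct u) v) fun u u' hu v v' hv => by
    rw [wordAct_eq_of_swapCon hu]
    exact swapCon_map (wordAct_act u') hv
  self_distrib := by
    intro p q r
    induction p, q, r using Quotient.inductionOn₃ with | h u v w => ?_
    show Quotient.mk _ (map (wordAct u) (map (wordAct v) w)) =
      Quotient.mk _ (map (wordAct (map (wordAct u) v)) (map (wordAct u) w))
    have swap := wordAct_eq_of_swapCon (swapCon_mul u v)
    have comp_eq : wordAct u ∘ wordAct v = wordAct (map (wordAct u) v) ∘ wordAct u :=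
      funext fun x => (wordAct_mul u v x).symm.trans (congrFun swap x |>.trans (wordAct_mul _ u x))
    rw [FreeSemigroup.map_map, FreeSemigroup.map_map, comp_eq]

def of (a : S) : SwapQuotient S := (FreeSemigroup.of a : FreeSemigroup S)

theorem of_act (a b : S) : of (a ◃ b) = of a ◃ of b := rfl

theorem of_injective : Function.Injective (of : S → SwapQuotient S) := fun _ _ h =>
  congrArg FreeSemigroup.head ((length_eq_and_eq_of_swapCon ((Con.eq _).1 h)).2 rfl)

theorem alSigma : ALSigma (α := SwapQuotient S) (· ◃ ·) (· * ·) := by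
  refine ⟨fun p q r => (mul_assoc p q r).symm, fun p q r => ?_, fun p q r => ?_, fun p q => ?_⟩
  · induction p, q, r using Quotient.inductionOn₃ with | h u v w => ?_
    show Quotient.mk _ (map (wordAct (u * v)) w) =
      Quotient.mk _ (map (wordAct u) (map (wordAct v) w))
    rw [FreeSemigroup.map_map, show wordAct (u * v) = wordAct u ∘ wordAct v from
      funext (wordAct_mul u v)]
  · induction p, q, r using Quotient.inductionOn₃ with | h u v w => ?_
    show Quotient.mk _ (map (wordAct u) (v * w)) = _
    rw [map_mul]
    rfl
  · induction p, q using Quotient.inductionOn₂ with | h u v => ?_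
    exact (Con.eq _).2 (swapCon_mul u v)

theorem generatesTwo_of {a : S} (h : GeneratesOne Shelf.act a) :
    GeneratesTwo Shelf.act (· * ·) (of a) := by
  intro s ha hact hmul
  have hof : ∀ b, of b ∈ s := h {b | of b ∈ s} ha fun x hx y hy => hact _ hx _ hy
  intro p
  induction p using Con.induction_on with | H w => ?_
  induction w with
  | ih1 b => exact hof b
  | ih2 b w _ ih => exact hmul _ (hof b) _ ih

end SwapQuotient

end Shelf

theorem stmt_7 {A : Type u} (op : A → A → A)
    (hLD : ∀ a b c : A, op a (op b c) = op (op a b) (op a c)) :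
    ∃ (P : Type u) (i : A → P) (mulP compP : P → P → P),
      Function.Injective i ∧
      ALSigma mulP compP ∧
      (∀ a b : A, i (op a b) = mulP (i a) (i b)) ∧
      (∀ one : A, GeneratesOne op one → GeneratesTwo mulP compP (i one)) := by
  let _ : Shelf A := ⟨op, hLD _ _ _⟩
  exact ⟨Shelf.SwapQuotient A, Shelf.SwapQuotient.of, (· ◃ ·), (· * ·),
    Shelf.SwapQuotient.of_injective, Shelf.SwapQuotient.alSigma, Shelf.SwapQuotient.of_act,
    fun _ => Shelf.SwapQuotient.generatesTwo_of⟩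
end

section
/- Every element of the free monogenic (ALΣ)-algebra W_P/≡_P can be written in the form a_1 ∘ a_2 ∘ ⋯ ∘ a_n for some n ≥ 1 and words a_1,…,a_n ∈ W_A: for every p ∈ W_P there exist n ≥ 1 and a_1,…,a_n ∈ W_A with p ≡_P a_1 ∘ (a_2 ∘ (⋯ ∘ a_n)⋯). -/
/-- Words built from a single generator `1` using one binary operation `·`. -/
inductive WA : Type
  | one : WA
  | mul : WA → WA → WA

/-- Words built from a single generator `1` using two binary operations `·` and `∘`. -/
inductive WP : Type
  | one : WP
  | mul : WP → WP → WP
  | comp : WP → WP → WP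

/-- The inclusion of `W_A` into `W_P`. -/
def WA.toWP : WA → WP
  | WA.one => WP.one
  | WA.mul a b => WP.mul a.toWP b.toWP

/-- The smallest congruence on `W_P` (with respect to both operations)
containing all instances of Laver's laws (ALΣ). -/
inductive PEq : WP → WP → Prop
  | refl (a : WP) : PEq a a
  | symm {a b : WP} : PEq a b → PEq b a
  | trans {a b c : WP} : PEq a b → PEq b c → PEq a c
  | congr_mul {a a' b b' : WP} : PEq a a' → PEq b b' → PEq (a.mul b) (a'.mul b')
  | congr_comp {a a' b b' : WP} : PEq a a' → PEq b b' → PEq (a.comp b) (a'.comp b')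
  | assoc (a b c : WP) : PEq (a.comp (b.comp c)) ((a.comp b).comp c)
  | comp_mul (a b c : WP) : PEq ((a.comp b).mul c) (a.mul (b.mul c))
  | mul_comp (a b c : WP) : PEq (a.mul (b.comp c)) ((a.mul b).comp (a.mul c))
  | comp_eq (a b : WP) : PEq (a.comp b) ((a.mul b).comp a)

lemma compFold (l : List WP) (c d : WP) :
    PEq ((l.foldr WP.comp c).comp d) (l.foldr WP.comp (c.comp d)) := by
  induction l with
  | nil => exact PEq.refl _
  | cons x l ih =>
    exact PEq.trans (PEq.symm (PEq.assoc _ _ _)) (PEq.congr_comp (PEq.refl _) ih)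

lemma mulDist (a : WA) (m : List WA) (b : WA) :
    PEq (a.toWP.mul ((m.map WA.toWP).foldr WP.comp b.toWP))
      (((m.map a.mul).map WA.toWP).foldr WP.comp (a.mul b).toWP) := by
  induction m with
  | nil => exact PEq.refl _
  | cons x m ih =>
    exact PEq.trans (PEq.mul_comp _ _ _) (PEq.congr_comp (PEq.refl _) ih)

lemma mulMain (l : List WA) (a : WA) (q : WP) (m : List WA) (b : WA)
    (hq : PEq q ((m.map WA.toWP).foldr WP.comp b.toWP)) :
    ∃ (l' : List WA) (a' : WA),
      PEq (((l.map WA.toWP).foldr WP.comp a.toWP).mul q)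
        ((l'.map WA.toWP).foldr WP.comp a'.toWP) := by
  induction l with
  | nil =>
    exact ⟨m.map a.mul, a.mul b,
      PEq.trans (PEq.congr_mul (PEq.refl _) hq) (mulDist a m b)⟩
  | cons x l ih =>
    obtain ⟨l', a', h⟩ := ih
    refine ⟨l'.map x.mul, x.mul a', ?_⟩
    exact PEq.trans (PEq.comp_mul _ _ _)
      (PEq.trans (PEq.congr_mul (PEq.refl _) h) (mulDist x l' a'))

theorem stmt_8 (p : WP) :
    ∃ (l : List WA) (a : WA),
      PEq p ((l.map WA.toWP).foldr WP.comp a.toWP) := by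
  induction p with
  | one => exact ⟨[], WA.one, PEq.refl _⟩
  | comp p q ihp ihq =>
    obtain ⟨l, a, hp⟩ := ihp
    obtain ⟨m, b, hq⟩ := ihq
    refine ⟨l ++ a :: m, b, PEq.trans (PEq.congr_comp hp hq) ?_⟩
    simp only [List.map_append, List.foldr_append, List.map_cons, List.foldr_cons]
    exact compFold _ _ _
  | mul p q ihp ihq =>
    obtain ⟨l, a, hp⟩ := ihp
    obtain ⟨m, b, hq⟩ := ihq
    obtain ⟨l', a', h⟩ := mulMain l a q m b hq
    exact ⟨l', a', PEq.trans (PEq.congr_mul hp (PEq.refl _)) h⟩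
end

section
/- (Laver) For every n ≥ 0, there is a unique binary operation *_n on the set {0,1,…,2^n−1} that satisfies the left distributive law a *_n (b *_n c) = (a *_n b) *_n (a *_n c) and satisfies a *_n 1 = a + 1 (mod 2^n) for all a. -/
namespace Laver

def m (N a : ℕ) : ℕ := if a = 0 then 0 else N - a

def lav (N : ℕ) (a b : ℕ) : ℕ :=
  if a = 0 then b % N
  else
    (fun x => if h2 : m N x < m N a then lav N x ((a + 1) % N) else 0)^[(b + N - 1) % N]
      ((a + 1) % N)
termination_by m N a
decreasing_by exact h2

lemma lav_zero (N b : ℕ) : lav N 0 b = b % N := by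
  rw [lav]; rfl

lemma lav_pos (N a b : ℕ) (h : a ≠ 0) :
    lav N a b =
      (fun x => if m N x < m N a then lav N x ((a + 1) % N) else 0)^[(b + N - 1) % N]
        ((a + 1) % N) := by
  conv_lhs => rw [lav]
  simp only [if_neg h]
  rfl

/-- the (unguarded) row sequence of row `a`: `seq N a t = a * (t+1)`. -/
def seq (N a t : ℕ) : ℕ := (fun x => lav N x ((a + 1) % N))^[t] ((a + 1) % N)

lemma seq_zero (N a : ℕ) : seq N a 0 = (a + 1) % N := rfl

lemma seq_succ (N a t : ℕ) : seq N a (t + 1) = lav N (seq N a t) ((a + 1) % N) := by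
  unfold seq
  rw [Function.iterate_succ_apply']

end Laver
namespace Laver

lemma m_zero (N : ℕ) : m N 0 = 0 := by simp [m]

lemma m_pos (N a : ℕ) (h : a ≠ 0) : m N a = N - a := by simp [m, h]

lemma m_lt (N a x : ℕ) (ha : a ≠ 0) (haN : a < N) (hx : x = 0 ∨ (a < x ∧ x < N)) :
    m N x < m N a := by
  rcases hx with rfl | ⟨h1, h2⟩
  · rw [m_zero, m_pos N a ha]; omega
  · rw [m_pos N x (by omega), m_pos N a ha]; omega

lemma lav_bounds_aux (N : ℕ) :
    ∀ k a, a < N → m N a ≤ k → ∀ b,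
      lav N a b < N ∧ (lav N a b = 0 ∨ a < lav N a b) := by
  intro k
  induction k with
  | zero =>
    intro a ha hm b
    have ha0 : a = 0 := by
      by_contra h; rw [m_pos N a h] at hm; omega
    subst ha0
    rw [lav_zero]
    exact ⟨Nat.mod_lt _ (by omega), by omega⟩
  | succ k IH =>
    intro a ha hm b
    rcases Nat.eq_zero_or_pos a with rfl | hapos
    · rw [lav_zero]
      exact ⟨Nat.mod_lt _ (by omega), by omega⟩
    have ha0 : a ≠ 0 := by omega
    rw [lav_pos N a b ha0]
    set s := (a + 1) % N with hs
    have hΦs : s < N ∧ (s = 0 ∨ a < s) := by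
      refine ⟨Nat.mod_lt _ (by omega), ?_⟩
      rcases Nat.lt_or_ge (a+1) N with h | h
      · right; rw [hs, Nat.mod_eq_of_lt h]; omega
      · left; rw [hs]; have : a + 1 = N := by omega
        rw [this, Nat.mod_self]
    have key : ∀ t, let v := (fun x => if m N x < m N a then lav N x s else 0)^[t] s
        v < N ∧ (v = 0 ∨ a < v) := by
      intro t
      induction t with
      | zero => exact hΦs
      | succ t iht =>
        rw [Function.iterate_succ_apply']
        set v := (fun x => if m N x < m N a then lav N x s else 0)^[t] s with hv
        simp only at iht ⊢
        rcases iht.2 with hv0 | hva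
        · have hg : m N 0 < m N a := m_lt N a 0 ha0 ha (Or.inl rfl)
          rw [hv0, if_pos hg, lav_zero, Nat.mod_eq_of_lt hΦs.1]
          exact hΦs
        · have hg : m N v < m N a := m_lt N a v ha0 ha (Or.inr ⟨hva, iht.1⟩)
          rw [if_pos hg]
          have h2 := IH v iht.1 (by omega) s
          refine ⟨h2.1, ?_⟩
          rcases h2.2 with h | h
          · exact Or.inl h
          · exact Or.inr (lt_trans hva h)
    exact key ((b + N - 1) % N)

lemma lav_lt (N a b : ℕ) (ha : a < N) : lav N a b < N :=
  (lav_bounds_aux N (m N a) a ha le_rfl b).1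

lemma lav_gt (N a b : ℕ) (ha : a < N) : lav N a b = 0 ∨ a < lav N a b :=
  (lav_bounds_aux N (m N a) a ha le_rfl b).2

lemma seq_inv (N a : ℕ) (ha : a < N) (t : ℕ) :
    seq N a t < N ∧ (seq N a t = 0 ∨ a < seq N a t) := by
  induction t with
  | zero =>
    rw [seq_zero]
    refine ⟨Nat.mod_lt _ (by omega), ?_⟩
    rcases Nat.lt_or_ge (a+1) N with h | h
    · right; rw [Nat.mod_eq_of_lt h]; omega
    · left; have : a + 1 = N := by omega
      rw [this, Nat.mod_self]
  | succ t iht =>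
    rw [seq_succ]
    set v := seq N a t with hv
    rcases iht.2 with hv0 | hva
    · rw [hv0, lav_zero, Nat.mod_mod_of_dvd _ (dvd_refl N)]
      refine ⟨Nat.mod_lt _ (by omega), ?_⟩
      rcases Nat.lt_or_ge (a+1) N with h | h
      · right; rw [Nat.mod_eq_of_lt h]; omega
      · left; have : a + 1 = N := by omega
        rw [this, Nat.mod_self]
    · refine ⟨lav_lt N v _ iht.1, ?_⟩
      rcases lav_gt N v ((a+1)%N) iht.1 with h | h
      · exact Or.inl h
      · exact Or.inr (lt_trans hva h)

lemma seq_lt (N a : ℕ) (ha : a < N) (t : ℕ) : seq N a t < N := (seq_inv N a ha t).1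

lemma row_eq (N a b : ℕ) (ha0 : a ≠ 0) (ha : a < N) :
    lav N a b = seq N a ((b + N - 1) % N) := by
  rw [lav_pos N a b ha0]
  unfold seq
  set s := (a + 1) % N with hs
  set t := (b + N - 1) % N
  clear_value t
  induction t with
  | zero => rfl
  | succ t iht =>
    rw [Function.iterate_succ_apply', Function.iterate_succ_apply', iht]
    have hinv := seq_inv N a ha t
    unfold seq at hinv
    rw [← hs] at hinv
    have hg : m N ((fun x => lav N x s)^[t] s) < m N a :=
      m_lt N a _ ha0 ha (hinv.2.imp id (fun h => ⟨h, hinv.1⟩))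
    rw [if_pos hg]

end Laver
namespace Laver

lemma mod_idx (N b : ℕ) (h1 : 1 ≤ b) (h2 : b < N) : (b + N - 1) % N = b - 1 := by
  have : b + N - 1 = (b - 1) + N := by omega
  rw [this, Nat.add_mod_right, Nat.mod_eq_of_lt (by omega)]

lemma mod_idx2 (N b : ℕ) (h1 : 1 ≤ b) (h2 : b < N) : ((b + 1) % N + N - 1) % N = b := by
  rcases Nat.lt_or_ge (b + 1) N with h | h
  · rw [Nat.mod_eq_of_lt h]
    have : b + 1 + N - 1 = b + N := by omega
    rw [this, Nat.add_mod_right, Nat.mod_eq_of_lt h2]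
  · have hN : b + 1 = N := by omega
    rw [hN, Nat.mod_self]
    have : 0 + N - 1 = b := by omega
    rw [this, Nat.mod_eq_of_lt h2]

lemma eq_one (N a : ℕ) (ha : a < N) : lav N a 1 = (a + 1) % N := by
  rcases Nat.eq_zero_or_pos a with rfl | hapos
  · rw [lav_zero]
  · rw [row_eq N a 1 (by omega) ha]
    have : (1 + N - 1) % N = 0 := by
      have : 1 + N - 1 = N := by omega
      rw [this, Nat.mod_self]
    rw [this, seq_zero]

lemma eq_step (N a b : ℕ) (ha : a < N) (hb1 : 1 ≤ b) (hb2 : b < N) :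
    lav N a ((b + 1) % N) = lav N (lav N a b) ((a + 1) % N) := by
  rcases Nat.eq_zero_or_pos a with rfl | hapos
  · rw [lav_zero, lav_zero, Nat.mod_eq_of_lt hb2]
    have hN2 : 2 ≤ N := by omega
    have h1 : (0 + 1) % N = 1 := by rw [Nat.mod_eq_of_lt (by omega)]
    rw [h1, eq_one N b hb2, Nat.mod_mod_of_dvd _ (dvd_refl N)]
  · have ha0 : a ≠ 0 := by omega
    rw [row_eq N a _ ha0 ha, row_eq N a b ha0 ha, mod_idx2 N b hb1 hb2, mod_idx N b hb1 hb2]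
    have : b = (b - 1) + 1 := by omega
    rw [this, seq_succ]
    have h2 : b - 1 + 1 - 1 = b - 1 := by omega
    rw [h2]

end Laver
namespace Laver

/-- Property A : `a * 0 = 0` (i.e. `a * N = N`). -/
def propA (N : ℕ) : Prop := ∀ a < N, lav N a 0 = 0

lemma mod2N (N x : ℕ) : x % (2 * N) % N = x % N :=
  Nat.mod_mod_of_dvd x (dvd_mul_left N 2)

lemma lav_one' (a b : ℕ) : lav 1 (a % 1) (b % 1) = 0 := by
  simp [Nat.mod_one, lav_zero]

lemma hom_aux (N : ℕ) (hN : 2 ≤ N) (hA : propA N) :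
    ∀ k a, a < 2 * N → m (2 * N) a ≤ k → ∀ t, t < 2 * N →
      lav (2 * N) a ((t + 1) % (2 * N)) % N = lav N (a % N) ((t + 1) % (2 * N) % N) := by
  have hN0 : 0 < N := by omega
  have h2N0 : 0 < 2 * N := by omega
  intro k
  induction k with
  | zero =>
    intro a ha hm t ht
    have ha0 : a = 0 := by
      by_contra h; rw [m_pos _ a h] at hm; omega
    subst ha0
    rw [lav_zero, Nat.mod_mod_of_dvd _ (dvd_refl _), Nat.zero_mod, lav_zero, mod2N,
      Nat.mod_mod_of_dvd _ (dvd_refl _)]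
  | succ k IH =>
    intro a ha hm
    rcases Nat.eq_zero_or_pos a with rfl | hapos
    · intro t ht
      rw [lav_zero, Nat.mod_mod_of_dvd _ (dvd_refl _), Nat.zero_mod, lav_zero, mod2N,
        Nat.mod_mod_of_dvd _ (dvd_refl _)]
    intro t
    induction t with
    | zero =>
      intro _
      have h1 : (0 + 1) % (2 * N) = 1 := Nat.mod_eq_of_lt (by omega)
      rw [h1, eq_one _ a ha, mod2N]
      have h1N : 1 % N = 1 := Nat.mod_eq_of_lt (by omega)
      rw [h1N, eq_one N (a % N) (Nat.mod_lt a hN0), Nat.mod_add_mod]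
    | succ t iht =>
      intro ht
      have htlt : t < 2 * N := by omega
      have iht' := iht htlt
      set b₀ := (t + 1) % (2 * N) with hb₀
      have hb₀eq : b₀ = t + 1 := Nat.mod_eq_of_lt (by omega)
      have hb₀1 : 1 ≤ b₀ := by omega
      have hb₀2 : b₀ < 2 * N := by omega
      have hgoalarg : (t + 1 + 1) % (2 * N) = (b₀ + 1) % (2 * N) := by rw [hb₀eq]
      rw [hgoalarg]
      rw [eq_step (2 * N) a b₀ ha hb₀1 hb₀2]
      set X := lav (2 * N) a b₀ with hX
      have hXlt : X < 2 * N := lav_lt _ a b₀ ha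
      set a' := a % N with ha'
      have ha'lt : a' < N := Nat.mod_lt a hN0
      have hs : (a + 1) % (2 * N) % N = (a' + 1) % N := by
        rw [mod2N, ha', Nat.mod_add_mod]
      have hXmod : X % N = lav N a' (b₀ % N) := iht'
      set b₀' := b₀ % N with hb₀'
      have hb₀'lt : b₀' < N := Nat.mod_lt b₀ hN0
      have hRHSarg : (b₀ + 1) % (2 * N) % N = (b₀' + 1) % N := by
        rw [mod2N, hb₀', Nat.mod_add_mod]
      rw [hRHSarg]
      -- two cases on X
      rcases lav_gt (2 * N) a b₀ ha with hX0' | hXgt'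
      have hX0 : X = 0 := by rw [hX]; exact hX0'
      swap
      have hXgt : a < X := by rw [hX]; exact hXgt'
      pick_goal 2
      · -- X = 0
        rw [hX0, lav_zero, Nat.mod_mod_of_dvd _ (dvd_refl _), mod2N]
        have h0 : lav N a' b₀' = 0 := by rw [← hXmod, hX0, Nat.zero_mod]
        rcases Nat.eq_zero_or_pos b₀' with hb0 | hb1
        · -- b₀ = N
          rw [hb0]
          have h01 : (0 + 1) % N = 1 := Nat.mod_eq_of_lt (by omega)
          rw [h01, eq_one N a' ha'lt, ha', Nat.mod_add_mod]
        · rw [eq_step N a' b₀' ha'lt hb1 hb₀'lt, h0, lav_zero,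
            Nat.mod_mod_of_dvd _ (dvd_refl _), ha', Nat.mod_add_mod]
      · -- a < X
        have hg : m (2 * N) X < m (2 * N) a :=
          m_lt (2 * N) a X (by omega) ha (Or.inr ⟨hXgt, hXlt⟩)
        have houter := IH X hXlt (by omega) ((a + 1 + 2 * N - 1) % (2 * N))
          (Nat.mod_lt _ h2N0)
        have hidx : ((a + 1 + 2 * N - 1) % (2 * N) + 1) % (2 * N) = (a + 1) % (2 * N) := by
          have e1 : a + 1 + 2 * N - 1 = a + 2 * N := by omega
          rw [e1, Nat.add_mod_right, Nat.mod_add_mod]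
        rw [hidx] at houter
        rw [houter, hs, hXmod]
        -- now: lav N (lav N a' b₀') ((a'+1)%N) = lav N a' ((b₀'+1)%N)
        rcases Nat.eq_zero_or_pos b₀' with hb0 | hb1
        · rw [hb0, hA a' ha'lt, lav_zero, Nat.mod_mod_of_dvd _ (dvd_refl _)]
          have h01 : (0 + 1) % N = 1 := Nat.mod_eq_of_lt (by omega)
          rw [h01, eq_one N a' ha'lt]
        · rw [← eq_step N a' b₀' ha'lt hb1 hb₀'lt]

lemma mod_surj_idx (N b : ℕ) (hN : 0 < N) (hb : b < N) :
    ((b + N - 1) % N + 1) % N = b := by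
  rcases Nat.eq_zero_or_pos b with rfl | hb1
  · have e : 0 + N - 1 = N - 1 := by omega
    have e3 : (N - 1) % N = N - 1 := Nat.mod_eq_of_lt (by omega)
    have e2 : N - 1 + 1 = N := by omega
    rw [e, e3, e2, Nat.mod_self]
  · rw [mod_idx N b hb1 hb]
    have e : b - 1 + 1 = b := by omega
    rw [e, Nat.mod_eq_of_lt hb]

lemma hom (N : ℕ) (hN : 0 < N) (hA : propA N) (a b : ℕ) (ha : a < 2 * N) (hb : b < 2 * N) :
    lav (2 * N) a b % N = lav N (a % N) (b % N) := by
  rcases Nat.lt_or_ge N 2 with h1 | h2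
  · have : N = 1 := by omega
    subst this
    rw [lav_one', Nat.mod_one]
  · have := hom_aux N h2 hA (m (2 * N) a) a ha le_rfl ((b + 2 * N - 1) % (2 * N))
      (Nat.mod_lt _ (by omega))
    rw [mod_surj_idx (2 * N) b (by omega) hb] at this
    exact this

end Laver
namespace Laver

lemma mod_idx3 (M t : ℕ) (ht : t < M) : ((t + 1) % M + M - 1) % M = t := by
  rcases Nat.lt_or_ge (t + 1) M with h | h
  · rw [Nat.mod_eq_of_lt h]
    have e : t + 1 + M - 1 = t + M := by omega
    rw [e, Nat.add_mod_right, Nat.mod_eq_of_lt ht]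
  · have hM : t + 1 = M := by omega
    rw [hM, Nat.mod_self]
    have e : 0 + M - 1 = t := by omega
    rw [e, Nat.mod_eq_of_lt ht]

lemma seq_as_lav (M a t : ℕ) (ha0 : a ≠ 0) (ha : a < M) (ht : t < M) :
    seq M a t = lav M a ((t + 1) % M) := by
  rw [row_eq M a _ ha0 ha, mod_idx3 M t ht]

lemma seq_hits_zero (N a : ℕ) (ha0 : a ≠ 0) (ha : a < N) : ∃ t, t < N ∧ seq N a t = 0 := by
  by_contra h
  push_neg at h
  have mono : ∀ t, t < N → seq N a 0 + t ≤ seq N a t := by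
    intro t
    induction t with
    | zero => simp
    | succ t iht =>
      intro ht
      have h1 := iht (by omega)
      have h2 := (seq_inv N (seq N a t) (seq_lt N a ha t) 0)
      -- seq (t+1) = lav N (seq t) ((a+1)%N) and row seq t
      have h3 := lav_gt N (seq N a t) ((a + 1) % N) (seq_lt N a ha t)
      rw [← seq_succ] at h3
      rcases h3 with h3 | h3
      · exact absurd h3 (h (t+1) ht)
      · omega
  have h1 := mono (N - 1) (by omega)
  have h2 := seq_lt N a ha (N - 1)
  have h3 := h 0 (by omega)
  omega

lemma seq_period (N a z : ℕ) (ha : a < N) (h0 : seq N a z = 0) :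
    ∀ u, seq N a (u + (z + 1)) = seq N a u := by
  intro u
  unfold seq
  rw [Function.iterate_add_apply]
  have h1 : (fun x => lav N x ((a + 1) % N))^[z + 1] ((a + 1) % N) = (a + 1) % N := by
    rw [Function.iterate_succ_apply']
    have : (fun x => lav N x ((a + 1) % N))^[z] ((a + 1) % N) = 0 := h0
    rw [this, lav_zero, Nat.mod_mod_of_dvd _ (dvd_refl N)]
  rw [h1]

lemma seq_period_mul (N a z : ℕ) (ha : a < N) (h0 : seq N a z = 0) :
    ∀ q u, seq N a (u + q * (z + 1)) = seq N a u := by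
  intro q
  induction q with
  | zero => simp
  | succ q ihq =>
    intro u
    have e : u + (q + 1) * (z + 1) = (u + q * (z + 1)) + (z + 1) := by ring
    rw [e, seq_period N a z ha h0, ihq]

/-- if the row has a zero at `w` with `(w+1) ∣ N`, then `a * 0 = 0`. -/
lemma rowA_of_zero (N a w : ℕ) (ha0 : a ≠ 0) (ha : a < N) (hw : seq N a w = 0)
    (hdvd : (w + 1) ∣ N) : lav N a 0 = 0 := by
  have hN : 0 < N := by omega
  rw [row_eq N a 0 ha0 ha]
  have e : (0 + N - 1) % N = N - 1 := by
    have : 0 + N - 1 = N - 1 := by omega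
    rw [this, Nat.mod_eq_of_lt (by omega)]
  rw [e]
  obtain ⟨c, hc⟩ := hdvd
  have hc1 : 1 ≤ c := by
    rcases Nat.eq_zero_or_pos c with rfl | h
    · omega
    · omega
  obtain ⟨d, rfl⟩ : ∃ d, c = d + 1 := ⟨c - 1, by omega⟩
  have hc' : N = d * (w + 1) + (w + 1) := by rw [hc]; ring
  have e2 : N - 1 = w + d * (w + 1) := by omega
  rw [e2, seq_period_mul N a w ha hw]
  exact hw

/-- first zero of a row -/
lemma exists_first_zero (N a : ℕ) (ha0 : a ≠ 0) (ha : a < N) :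
    ∃ z, z < N ∧ seq N a z = 0 ∧ ∀ u, u < z → seq N a u ≠ 0 := by
  obtain ⟨t, ht, h0⟩ := seq_hits_zero N a ha0 ha
  have hex : ∃ z, seq N a z = 0 := ⟨t, h0⟩
  refine ⟨Nat.find hex, ?_, Nat.find_spec hex, fun u hu => Nat.find_min hex hu⟩
  exact lt_of_le_of_lt (Nat.find_min' hex h0) ht

/-- zeros of a row are exactly indices `≡ z mod (z+1)` -/
lemma zero_dvd_of_zero (N a z u : ℕ) (ha : a < N) (hz0 : seq N a z = 0)
    (hzmin : ∀ v, v < z → seq N a v ≠ 0) (hu : seq N a u = 0) : (z + 1) ∣ (u + 1) := by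
  set p := z + 1 with hp
  have h1 : u = u % p + (u / p) * p := by
    rw [Nat.add_comm, Nat.mul_comm]
    exact (Nat.div_add_mod u p).symm
  rw [h1, seq_period_mul N a z ha hz0] at hu
  have h2 : u % p < p := Nat.mod_lt _ (by omega)
  have h3 : u % p = z := by
    by_contra h
    exact hzmin _ (by omega) hu
  refine ⟨u / p + 1, ?_⟩
  have h4 : p * (u / p + 1) = (u / p) * p + p := by ring
  omega

end Laver
namespace Laver

lemma pi_seq (N : ℕ) (hN : 0 < N) (hA : propA N) (a t : ℕ) (ha0 : a ≠ 0) (ha : a < 2 * N)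
    (ht : t < 2 * N) :
    seq (2 * N) a t % N =
      if a % N = 0 then (t + 1) % N else seq N (a % N) (t % N) := by
  rw [seq_as_lav (2 * N) a t ha0 ha ht,
    hom N hN hA a ((t + 1) % (2 * N)) ha (Nat.mod_lt _ (by omega)), mod2N]
  by_cases h : a % N = 0
  · rw [if_pos h, h, lav_zero, Nat.mod_mod_of_dvd _ (dvd_refl N)]
  · rw [if_neg h]
    rw [seq_as_lav N (a % N) (t % N) h (Nat.mod_lt _ hN) (Nat.mod_lt _ hN), Nat.mod_add_mod]

lemma mult_lt (N x : ℕ) (hN : 0 < N) (hx : x < 2 * N) (h : x % N = 0) : x = 0 ∨ x = N := by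
  obtain ⟨c, rfl⟩ := Nat.dvd_of_mod_eq_zero h
  have hc : c < 2 := by
    by_contra hh
    push_neg at hh
    have : N * 2 ≤ N * c := Nat.mul_le_mul_left N hh
    omega
  interval_cases c
  · left; omega
  · right; omega

lemma rep_lift (N y : ℕ) (h1 : N < y) (h2 : y < 2 * N) : y = N + y % N := by
  have h3 : y - N < N := by omega
  have h4 : y % N = y - N := by
    conv_lhs => rw [show y = (y - N) + 1 * N by omega]
    rw [Nat.add_mul_mod_self_right, Nat.mod_eq_of_lt h3]
  omega

lemma seq_mod_period (N a z : ℕ) (ha : a < N) (h0 : seq N a z = 0) (u : ℕ) :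
    seq N a u = seq N a (u % (z + 1)) := by
  conv_lhs =>
    rw [show u = u % (z + 1) + (u / (z + 1)) * (z + 1) by
      rw [Nat.add_comm, Nat.mul_comm]; exact (Nat.div_add_mod u (z + 1)).symm]
  rw [seq_period_mul N a z ha h0]

lemma propA_step (N : ℕ) (hN : 0 < N) (hA : propA N) : propA (2 * N) := by
  intro a ha
  rcases Nat.eq_zero_or_pos a with rfl | hapos
  · rw [lav_zero, Nat.zero_mod]
  have ha0 : a ≠ 0 := by omega
  -- it suffices to find a zero at `w` with `(w+1) ∣ 2N`
  suffices hsuff : ∃ w, seq (2 * N) a w = 0 ∧ (w + 1) ∣ (2 * N) by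
    obtain ⟨w, hw0, hwd⟩ := hsuff
    exact rowA_of_zero (2 * N) a w ha0 ha hw0 hwd
  have hs0 : seq (2 * N) a 0 = (a + 1) % (2 * N) := seq_zero _ _
  -- case a = 2N - 1
  by_cases hB1 : a = 2 * N - 1
  · refine ⟨0, ?_, one_dvd _⟩
    rw [hs0, hB1]
    have : 2 * N - 1 + 1 = 2 * N := by omega
    rw [this, Nat.mod_self]
  -- case a = N
  by_cases hB2 : a = N
  · have hN2 : 2 ≤ N := by omega
    refine ⟨N - 1, ?_, by
      have e : N - 1 + 1 = N := by omega
      rw [e]; exact dvd_mul_left N 2⟩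
    have hpi := pi_seq N hN hA a (N - 1) ha0 ha (by omega)
    rw [hB2, Nat.mod_self, if_pos rfl] at hpi
    have e : (N - 1 + 1) % N = 0 := by
      have : N - 1 + 1 = N := by omega
      rw [this, Nat.mod_self]
    rw [e] at hpi
    -- hpi : seq (2N) N (N-1) % N = 0  (note a = N)
    have hlt := seq_lt (2 * N) a ha (N - 1)
    have hinv := (seq_inv (2 * N) a ha (N - 1)).2
    rw [hB2] at hlt hinv ⊢
    rcases mult_lt N _ hN hlt hpi with h | h
    · exact h
    · omega
  have ha' : a % N ≠ 0 := by
    intro h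
    rcases mult_lt N a hN ha h with h1 | h1 <;> omega
  set a' := a % N with ha'def
  have ha'lt : a' < N := Nat.mod_lt _ hN
  have ha'pos : 1 ≤ a' := by omega
  have hN2 : 2 ≤ N := by omega
  -- case a' = N - 1 (i.e. a = N - 1, since a = 2N-1 excluded)
  by_cases hB4 : a' = N - 1
  · have haeq : a = N - 1 := by
      have h1 := Nat.div_add_mod a N
      have h2 : a / N < 2 := by
        by_contra hh
        push_neg at hh
        have : N * 2 ≤ N * (a / N) := Nat.mul_le_mul_left N hh
        omega
      interval_cases h : a / N <;> omega
    refine ⟨1, ?_, by exact dvd_mul_right 2 N⟩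
    have hseq0 : seq (2 * N) a 0 = N := by
      rw [hs0, haeq]
      have : N - 1 + 1 = N := by omega
      rw [this, Nat.mod_eq_of_lt (by omega)]
    have hseq1 : seq (2 * N) a 1 = lav (2 * N) N ((a + 1) % (2 * N)) := by
      rw [seq_succ, hseq0]
    have hsval : (a + 1) % (2 * N) = N := by
      rw [haeq]
      have : N - 1 + 1 = N := by omega
      rw [this, Nat.mod_eq_of_lt (by omega)]
    rw [hsval] at hseq1
    have hhom := hom N hN hA N N (by omega) (by omega)
    rw [Nat.mod_self, lav_zero, Nat.zero_mod] at hhom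
    have hlt : lav (2 * N) N N < 2 * N := lav_lt _ _ _ (by omega)
    have hgt := lav_gt (2 * N) N N (by omega)
    rcases mult_lt N _ hN hlt hhom with h | h
    · rw [hseq1, h]
    · omega
  -- main case : 1 ≤ a' ≤ N - 2
  have ha'2 : a' + 1 < N := by omega
  -- small row data
  obtain ⟨z', hz'N, hz'0, hz'min⟩ := exists_first_zero N a' ha' ha'lt
  have hp'dvd : (z' + 1) ∣ N := by
    have hres := zero_dvd_of_zero N a' z' (N - 1) ha'lt hz'0 hz'min ?_
    · have e : N - 1 + 1 = N := by omega
      rwa [e] at hres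
    have := hA a' ha'lt
    rw [row_eq N a' 0 ha' ha'lt] at this
    have e : (0 + N - 1) % N = N - 1 := by
      have e1 : 0 + N - 1 = N - 1 := by omega
      rw [e1, Nat.mod_eq_of_lt (by omega)]
    rw [e] at this
    exact this
  set p' := z' + 1 with hp'def
  have hp'le : p' ≤ N := Nat.le_of_dvd hN hp'dvd
  have hseq'0 : seq N a' 0 = a' + 1 := by
    rw [seq_zero, Nat.mod_eq_of_lt ha'2]
  have hz'pos : 1 ≤ z' := by
    rcases Nat.eq_zero_or_pos z' with h | h
    · exfalso; rw [h, hseq'0] at hz'0; omega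
    · exact h
  -- π of big sequence
  have hpi : ∀ t, t < 2 * N → seq (2 * N) a t % N = seq N a' (t % N) := by
    intro t ht
    have := pi_seq N hN hA a t ha0 ha ht
    rw [if_neg ha'] at this
    exact this
  -- value at index z' is 0 or N
  have hQ := hpi z' (by omega)
  rw [Nat.mod_eq_of_lt (show z' < N by omega), hz'0] at hQ
  rcases mult_lt N _ hN (seq_lt (2 * N) a ha z') hQ with hQ0 | hQN
  · exact ⟨z', hQ0, dvd_trans hp'dvd (dvd_mul_left N 2)⟩
  -- hard case : seq (2N) a z' = N
  have claim1 : ∀ t, t < z' → seq (2 * N) a (p' + t) = N + seq N a' t := by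
    intro t
    induction t with
    | zero =>
      intro _
      have h1 : seq (2 * N) a p' = lav (2 * N) N ((a + 1) % (2 * N)) := by
        rw [hp'def, seq_succ, hQN]
      have hlt : seq (2 * N) a p' < 2 * N := seq_lt (2 * N) a ha p'
      have hgt : seq (2 * N) a p' = 0 ∨ N < seq (2 * N) a p' := by
        rw [h1]; exact lav_gt (2 * N) N _ (by omega)
      have hmod : seq (2 * N) a p' % N = seq N a' 0 := by
        rw [hpi p' (by omega)]
        have e1 : seq N a' (p' % N) = seq N a' (p' % N % p') :=
          seq_mod_period N a' z' ha'lt hz'0 (p' % N)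
        have e2 : p' % N % p' = 0 := by
          rw [Nat.mod_mod_of_dvd _ hp'dvd, Nat.mod_self]
        rw [e1, e2]
      rw [hseq'0] at hmod
      have hne : seq (2 * N) a p' ≠ 0 := by
        intro h; rw [h, Nat.zero_mod] at hmod; omega
      rcases hgt with h | h
      · exact absurd h hne
      · have := rep_lift N _ h hlt
        rw [hmod] at this
        rw [this, hseq'0]
    | succ t iht =>
      intro htz
      have ht' : t < z' := by omega
      have hprev := iht ht'
      have hseq't : seq N a' t ≠ 0 := hz'min t ht'
      have hseq't1 : seq N a' (t + 1) ≠ 0 := hz'min (t + 1) htz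
      have h1 : seq (2 * N) a (p' + (t + 1)) =
          lav (2 * N) (N + seq N a' t) ((a + 1) % (2 * N)) := by
        have e : p' + (t + 1) = (p' + t) + 1 := by omega
        rw [e, seq_succ, hprev]
      have hidxlt : p' + (t + 1) < 2 * N := by omega
      have hlt : seq (2 * N) a (p' + (t + 1)) < 2 * N := seq_lt (2 * N) a ha _
      have hgt : seq (2 * N) a (p' + (t + 1)) = 0 ∨
          N + seq N a' t < seq (2 * N) a (p' + (t + 1)) := by
        rw [h1]
        exact lav_gt (2 * N) _ _ (by
          have := seq_lt N a' ha'lt t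
          omega)
      have hmod : seq (2 * N) a (p' + (t + 1)) % N = seq N a' (t + 1) := by
        rw [hpi _ hidxlt]
        have e1 : seq N a' ((p' + (t + 1)) % N) = seq N a' ((p' + (t + 1)) % N % p') :=
          seq_mod_period N a' z' ha'lt hz'0 _
        have e2 : (p' + (t + 1)) % N % p' = t + 1 := by
          rw [Nat.mod_mod_of_dvd _ hp'dvd, Nat.add_comm, Nat.add_mod_right,
            Nat.mod_eq_of_lt (show t + 1 < p' by omega)]
        rw [e1, e2]
      have hne : seq (2 * N) a (p' + (t + 1)) ≠ 0 := by
        intro h; rw [h, Nat.zero_mod] at hmod; exact hseq't1 hmod.symm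
      rcases hgt with h | h
      · exact absurd h hne
      · have hl := rep_lift N _ (by omega) hlt
        rw [hmod] at hl
        exact hl
  -- the zero at 2p' - 1
  have claim2 : seq (2 * N) a (p' + z') = 0 := by
    have hprev := claim1 (z' - 1) (by omega)
    have h1 : seq (2 * N) a (p' + z') =
        lav (2 * N) (N + seq N a' (z' - 1)) ((a + 1) % (2 * N)) := by
      have e : p' + z' = (p' + (z' - 1)) + 1 := by omega
      rw [e, seq_succ, hprev]
    have hlt : seq (2 * N) a (p' + z') < 2 * N := seq_lt (2 * N) a ha _
    have hgt : seq (2 * N) a (p' + z') = 0 ∨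
        N + seq N a' (z' - 1) < seq (2 * N) a (p' + z') := by
      rw [h1]
      exact lav_gt (2 * N) _ _ (by
        have := seq_lt N a' ha'lt (z' - 1)
        omega)
    have hmod : seq (2 * N) a (p' + z') % N = 0 := by
      rw [hpi _ (by omega)]
      have e1 : seq N a' ((p' + z') % N) = seq N a' ((p' + z') % N % p') :=
        seq_mod_period N a' z' ha'lt hz'0 _
      have e2 : (p' + z') % N % p' = z' := by
        rw [Nat.mod_mod_of_dvd _ hp'dvd, Nat.add_comm, Nat.add_mod_right,
          Nat.mod_eq_of_lt (show z' < p' by omega)]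
      rw [e1, e2, hz'0]
    rcases mult_lt N _ hN hlt hmod with h | h
    · exact h
    · rcases hgt with h2 | h2
      · exact h2
      · exfalso
        have := seq_lt N a' ha'lt (z' - 1)
        have hsne : seq N a' (z' - 1) ≠ 0 := hz'min _ (by omega)
        omega
  refine ⟨p' + z', claim2, ?_⟩
  have e : p' + z' + 1 = 2 * p' := by omega
  rw [e]
  exact mul_dvd_mul_left 2 hp'dvd

end Laver
namespace Laver

lemma propA_pow : ∀ n, propA (2 ^ n) := by
  intro n
  induction n with
  | zero =>
    intro a ha
    simp only [pow_zero] at ha ⊢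
    have : a = 0 := by omega
    subst this
    rw [lav_zero, Nat.mod_one]
  | succ n ih =>
    have e : 2 ^ (n + 1) = 2 * 2 ^ n := by ring
    rw [e]
    exact propA_step (2 ^ n) (by positivity) ih

lemma eq_step_full (N a b : ℕ) (hN : 0 < N) (hA : propA N) (ha : a < N) (hb : b < N) :
    lav N a ((b + 1) % N) = lav N (lav N a b) ((a + 1) % N) := by
  rcases Nat.eq_zero_or_pos b with rfl | hb1
  · rw [hA a ha, lav_zero, Nat.mod_mod_of_dvd _ (dvd_refl N)]
    rcases Nat.lt_or_ge N 2 with h | h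
    · have hN1 : N = 1 := by omega
      subst hN1
      have ha0 : a = 0 := by omega
      subst ha0
      rw [lav_zero]
    · have h1 : (0 + 1) % N = 1 := by rw [Nat.mod_eq_of_lt (by omega)]
      rw [h1, eq_one N a ha]
  · exact eq_step N a b ha hb1 hb

lemma LD_aux (N : ℕ) (hN : 0 < N) (hA : propA N) :
    ∀ k a, a < N → m N a ≤ k → ∀ j b, b < N → m N b ≤ j → ∀ t,
      lav N a (lav N b ((t + 1) % N)) =
        lav N (lav N a b) (lav N a ((t + 1) % N)) := by
  intro k
  induction k with
  | zero =>
    intro a ha hma j b hb hmb t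
    have ha0 : a = 0 := by
      by_contra h; rw [m_pos N a h] at hma; omega
    subst ha0
    rw [lav_zero, lav_zero, Nat.mod_eq_of_lt hb, lav_zero,
      Nat.mod_eq_of_lt (lav_lt N b _ hb), Nat.mod_mod_of_dvd _ (dvd_refl N)]
  | succ k IHa =>
    intro a ha hma
    rcases Nat.eq_zero_or_pos a with rfl | hapos
    · intro j b hb hmb t
      rw [lav_zero, lav_zero, Nat.mod_eq_of_lt hb, lav_zero,
        Nat.mod_eq_of_lt (lav_lt N b _ hb), Nat.mod_mod_of_dvd _ (dvd_refl N)]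
    intro j
    induction j with
    | zero =>
      intro b hb hmb t
      have hb0 : b = 0 := by
        by_contra h; rw [m_pos N b h] at hmb; omega
      subst hb0
      rw [lav_zero, Nat.mod_mod_of_dvd _ (dvd_refl N), hA a ha, lav_zero,
        Nat.mod_eq_of_lt (lav_lt N a _ ha)]
    | succ j IHb =>
      intro b hb hmb
      rcases Nat.eq_zero_or_pos b with rfl | hbpos
      · intro t
        rw [lav_zero, Nat.mod_mod_of_dvd _ (dvd_refl N), hA a ha, lav_zero,
          Nat.mod_eq_of_lt (lav_lt N a _ ha)]
      have hN2 : 2 ≤ N := by omega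
      intro t
      induction t with
      | zero =>
        have h1 : (0 + 1) % N = 1 := by rw [Nat.mod_eq_of_lt (by omega)]
        rw [h1, eq_one N b hb, eq_one N a ha,
          eq_step_full N a b hN hA ha hb]
      | succ t IHt =>
        set c₀ := (t + 1) % N with hc₀
        have hc₀lt : c₀ < N := Nat.mod_lt _ (by omega)
        have hcc : (t + 1 + 1) % N = (c₀ + 1) % N := by
          rw [hc₀, Nat.mod_add_mod]
        rw [hcc]
        set X := lav N b c₀ with hX
        have hXlt : X < N := lav_lt N b c₀ hb
        have hXm : m N X < m N b := by
          refine m_lt N b X (by omega) hb ?_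
          rcases lav_gt N b c₀ hb with h | h
          · exact Or.inl (by rw [hX]; exact h)
          · exact Or.inr ⟨by rw [hX]; exact h, hXlt⟩
        set A' := lav N a b with hA'
        have hA'lt : A' < N := lav_lt N a b ha
        have hA'm : m N A' < m N a := by
          refine m_lt N a A' (by omega) ha ?_
          rcases lav_gt N a b ha with h | h
          · exact Or.inl (by rw [hA']; exact h)
          · exact Or.inr ⟨by rw [hA']; exact h, hA'lt⟩
        -- LHS
        rw [eq_step_full N b c₀ hN hA hb hc₀lt, ← hX]
        -- middle IH at X, with t' = b
        have hmid := IHb X hXlt (by omega) b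
        have hbb : (b + 1) % N = (b + 1) % N := rfl
        rw [hmid]
        -- inner IH : lav N a X = lav N (lav N a b) (lav N a c₀)
        have hinner : lav N a X = lav N A' (lav N a c₀) := IHt
        rw [hinner]
        -- rewrite lav N a ((b+1)%N)
        have hstep_ab : lav N a ((b + 1) % N) = lav N A' ((a + 1) % N) := by
          rw [eq_step_full N a b hN hA ha hb, hA']
        rw [hstep_ab]
        -- RHS : rewrite lav N a ((c₀+1)%N)
        have hstep_ac : lav N a ((c₀ + 1) % N) = lav N (lav N a c₀) ((a + 1) % N) :=
          eq_step_full N a c₀ hN hA ha hc₀lt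
        rw [hstep_ac]
        -- outer IH at A'
        have houter := IHa A' hA'lt (by omega) (m N (lav N a c₀)) (lav N a c₀)
          (lav_lt N a c₀ ha) le_rfl a
        rw [houter]

lemma LD (N : ℕ) (hN : 0 < N) (hA : propA N) (a b c : ℕ) (ha : a < N) (hb : b < N)
    (hc : c < N) :
    lav N a (lav N b c) = lav N (lav N a b) (lav N a c) := by
  have h := LD_aux N hN hA (m N a) a ha le_rfl (m N b) b hb le_rfl ((c + N - 1) % N)
  rw [mod_surj_idx N c hN hc] at h
  exact h

end Laver
namespace Laver

/-- the Laver operation on `ZMod N` -/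
noncomputable def op (N : ℕ) [NeZero N] : ZMod N → ZMod N → ZMod N :=
  fun a b => ((lav N a.val b.val : ℕ) : ZMod N)

lemma cast_val (N : ℕ) [NeZero N] (a : ZMod N) : ((a.val : ℕ) : ZMod N) = a := by
  rw [ZMod.natCast_val, ZMod.cast_id]

lemma op_val (N : ℕ) [NeZero N] (a b : ZMod N) :
    (op N a b).val = lav N a.val b.val := by
  unfold op
  exact ZMod.val_natCast_of_lt (lav_lt N a.val b.val (ZMod.val_lt a))

lemma op_LD (N : ℕ) [NeZero N] (hA : propA N) (a b c : ZMod N) :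
    op N a (op N b c) = op N (op N a b) (op N a c) := by
  have hN : 0 < N := Nat.pos_of_ne_zero (NeZero.ne N)
  show ((lav N a.val (op N b c).val : ℕ) : ZMod N) =
    ((lav N (op N a b).val (op N a c).val : ℕ) : ZMod N)
  rw [op_val, op_val, op_val,
    LD N hN hA a.val b.val c.val (ZMod.val_lt a) (ZMod.val_lt b) (ZMod.val_lt c)]

lemma val_one_ (N : ℕ) (hN2 : 2 ≤ N) [NeZero N] : (1 : ZMod N).val = 1 := by
  haveI : Fact (1 < N) := ⟨by omega⟩
  exact ZMod.val_one N

lemma op_succ (N : ℕ) (hN2 : 2 ≤ N) [NeZero N] (a : ZMod N) : op N a 1 = a + 1 := by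
  show ((lav N a.val (1 : ZMod N).val : ℕ) : ZMod N) = a + 1
  rw [val_one_ N hN2, eq_one N a.val (ZMod.val_lt a), ZMod.natCast_mod]
  push_cast
  rw [cast_val]

lemma op_step (N : ℕ) (hN2 : 2 ≤ N) (hA : propA N) [NeZero N] (a b : ZMod N) :
    op N a (b + 1) = op N (op N a b) (a + 1) := by
  show ((lav N a.val (b + 1).val : ℕ) : ZMod N) =
    ((lav N (op N a b).val (a + 1).val : ℕ) : ZMod N)
  have h1 : (b + 1).val = (b.val + 1) % N := by
    rw [ZMod.val_add, val_one_ N hN2]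
  have h2 : (a + 1).val = (a.val + 1) % N := by
    rw [ZMod.val_add, val_one_ N hN2]
  rw [h1, h2, op_val]
  rw [eq_step_full N a.val b.val (by omega) hA (ZMod.val_lt a) (ZMod.val_lt b)]

end Laver

theorem stmt_10 (n : ℕ) :
    ∃! op : ZMod (2 ^ n) → ZMod (2 ^ n) → ZMod (2 ^ n),
      (∀ a b c : ZMod (2 ^ n), op a (op b c) = op (op a b) (op a c)) ∧
      (∀ a : ZMod (2 ^ n), op a 1 = a + 1) := by
  rcases Nat.eq_zero_or_pos n with rfl | hn
  · haveI : Subsingleton (ZMod (2 ^ 0)) := by rw [pow_zero]; infer_instance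
    refine ⟨fun _ _ => 0, ⟨fun a b c => rfl, fun a => Subsingleton.elim _ _⟩, ?_⟩
    intro op' _
    funext a b
    exact Subsingleton.elim _ _
  · set N := 2 ^ n with hNdef
    haveI : NeZero N := ⟨by positivity⟩
    have hN2 : 2 ≤ N := by
      calc 2 = 2 ^ 1 := by norm_num
      _ ≤ 2 ^ n := Nat.pow_le_pow_right (by norm_num) hn
    have hA : Laver.propA N := Laver.propA_pow n
    refine ⟨Laver.op N, ⟨Laver.op_LD N hA, Laver.op_succ N hN2⟩, ?_⟩
    intro op' ⟨hLD', hsucc'⟩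
    have u_step : ∀ a b : ZMod N, op' a (b + 1) = op' (op' a b) (a + 1) := by
      intro a b
      rw [← hsucc' b, hLD' a b 1, hsucc' a]
    have surj : ∀ b : ZMod N, ∃ t : ℕ, b = ((t + 1 : ℕ) : ZMod N) := by
      intro b
      refine ⟨b.val + (N - 1), ?_⟩
      have e : b.val + (N - 1) + 1 = b.val + N := by omega
      rw [e]
      push_cast
      rw [ZMod.natCast_self, add_zero, Laver.cast_val]
    have main : ∀ k (a : ZMod N), Laver.m N a.val ≤ k → ∀ b, op' a b = Laver.op N a b := by
      intro k
      induction k with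
      | zero =>
        intro a hma
        have ha0 : a.val = 0 := by
          by_contra h; rw [Laver.m_pos N a.val h] at hma
          have := ZMod.val_lt a; omega
        have ha : a = 0 := by
          rw [← Laver.cast_val N a, ha0]
          simp
        subst ha
        have hopz : ∀ c : ZMod N, Laver.op N 0 c = c := by
          intro c
          have h1 : (Laver.op N 0 c).val = c.val := by
            rw [Laver.op_val, ZMod.val_zero, Laver.lav_zero,
              Nat.mod_eq_of_lt (ZMod.val_lt c)]
          have h2 := congrArg (fun x : ℕ => ((x : ℕ) : ZMod N)) h1
          simpa [Laver.cast_val] using h2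
        have haux : ∀ t : ℕ, op' 0 ((t + 1 : ℕ) : ZMod N) = ((t + 1 : ℕ) : ZMod N) := by
          intro t
          induction t with
          | zero =>
            have e : ((0 + 1 : ℕ) : ZMod N) = 1 := by norm_num
            rw [e, hsucc' 0, zero_add]
          | succ t iht =>
            have e : ((t + 1 + 1 : ℕ) : ZMod N) = ((t + 1 : ℕ) : ZMod N) + 1 := by
              push_cast; ring
            rw [e, u_step, iht, zero_add, hsucc']
        intro b
        obtain ⟨t, rfl⟩ := surj b
        rw [haux t, hopz]
      | succ k IH =>
        intro a hma
        rcases Nat.eq_zero_or_pos (Laver.m N a.val) with hm0 | hmpos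
        · exact IH a (by omega)
        have ha0 : a.val ≠ 0 := by
          intro h
          rw [Laver.m, if_pos h] at hmpos
          omega
        have haux : ∀ t : ℕ,
            op' a ((t + 1 : ℕ) : ZMod N) = Laver.op N a ((t + 1 : ℕ) : ZMod N) := by
          intro t
          induction t with
          | zero =>
            have e : ((0 + 1 : ℕ) : ZMod N) = 1 := by norm_num
            rw [e, hsucc' a, Laver.op_succ N hN2 a]
          | succ t iht =>
            have e : ((t + 1 + 1 : ℕ) : ZMod N) = ((t + 1 : ℕ) : ZMod N) + 1 := by
              push_cast; ring
            rw [e, u_step, iht]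
            set X := Laver.op N a ((t + 1 : ℕ) : ZMod N) with hX
            have hXval : X.val = Laver.lav N a.val (((t + 1 : ℕ) : ZMod N)).val :=
              Laver.op_val N _ _
            have hXm : Laver.m N X.val < Laver.m N a.val := by
              refine Laver.m_lt N a.val X.val ha0 (ZMod.val_lt a) ?_
              rcases Laver.lav_gt N a.val (((t + 1 : ℕ) : ZMod N)).val (ZMod.val_lt a)
                with h | h
              · exact Or.inl (by rw [hXval]; exact h)
              · exact Or.inr ⟨by rw [hXval]; exact h, ZMod.val_lt X⟩
            rw [IH X (by omega) (a + 1)]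
            rw [← Laver.op_step N hN2 hA a _]
        intro b
        obtain ⟨t, rfl⟩ := surj b
        exact haux t
    funext a b
    exact main (Laver.m N a.val) a le_rfl b
end

section
/- (Laver) For every n ≥ 0, let *_n be the unique left-distributive operation on {0,1,…,2^n−1} with a *_n 1 = a + 1 (mod 2^n). Then there is a unique additional binary operation ∘_n on {0,1,…,2^n−1} such that *_n and ∘_n together satisfy the laws (ALΣ); explicitly, a ∘_n b = (a *_n (b+1)) − 1, with addition and subtraction modulo 2^n. -/
theorem stmt_11 (n : ℕ) (op : ZMod (2 ^ n) → ZMod (2 ^ n) → ZMod (2 ^ n))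
    (hLD : ∀ a b c : ZMod (2 ^ n), op a (op b c) = op (op a b) (op a c))
    (hsucc : ∀ a : ZMod (2 ^ n), op a 1 = a + 1) :
    (∃! comp : ZMod (2 ^ n) → ZMod (2 ^ n) → ZMod (2 ^ n), ALSigma op comp) ∧
    ALSigma op (fun a b => op a (b + 1) - 1) := by
  haveI : NeZero (2 ^ n) := ⟨pow_ne_zero n two_ne_zero⟩
  -- the basic recursion
  have hrec : ∀ a b : ZMod (2 ^ n), op a (b + 1) = op (op a b) (a + 1) := by
    intro a b
    have h := hLD a b 1
    rwa [hsucc, hsucc] at h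
  have hsurj : ∀ c : ZMod (2 ^ n), ∃ k : ℕ, c = (k : ZMod (2 ^ n)) + 1 := by
    intro c
    refine ⟨(c - 1).val, ?_⟩
    rw [ZMod.natCast_val, ZMod.cast_id]
    ring
  -- row of 0 is the identity
  have hzero : ∀ c : ZMod (2 ^ n), op 0 c = c := by
    intro c
    obtain ⟨k, rfl⟩ := hsurj c
    induction k with
    | zero => simpa using hsucc 0
    | succ k ih =>
        have hc : ((k + 1 : ℕ) : ZMod (2 ^ n)) + 1 = ((k : ZMod (2 ^ n)) + 1) + 1 := by
          push_cast; ring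
        rw [hc, hrec, ih, zero_add, hsucc]
  -- height function
  set v : ZMod (2 ^ n) → ℕ := fun x => if x = 0 then 2 ^ n else x.val with hv
  have hvle : ∀ x, v x ≤ 2 ^ n := by
    intro x; by_cases h : x = 0 <;> simp [hv, h, (ZMod.val_lt x).le]
  have hvlt : ∀ x, x ≠ 0 → v x < 2 ^ n := by
    intro x h; simpa [hv, h] using ZMod.val_lt x
  have hvsucc : ∀ x : ZMod (2 ^ n), x ≠ 0 → v (x + 1) = v x + 1 := by
    intro x hx
    have hval : x.val < 2 ^ n := ZMod.val_lt x
    have hx1 : (x : ZMod (2 ^ n)) + 1 = ((x.val + 1 : ℕ) : ZMod (2 ^ n)) := by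
      push_cast
      rw [ZMod.natCast_val, ZMod.cast_id]
    rcases eq_or_lt_of_le (Nat.succ_le_of_lt hval) with h | h
    · have h' : x.val + 1 = 2 ^ n := h
      have h0 : x + 1 = 0 := by rw [hx1, h']; exact ZMod.natCast_self _
      simp [hv, h0, hx, ← h]
    · have hval1 : (x + 1).val = x.val + 1 := by
        rw [hx1]; exact ZMod.val_cast_of_lt h
      have hne : x + 1 ≠ 0 := by
        intro h0; rw [h0, ZMod.val_zero] at hval1; omega
      simp [hv, hne, hx, hval1]
  -- the increasing lemma : every entry of row a has bigger height than a
  have hincr : ∀ d : ℕ, ∀ a : ZMod (2 ^ n), a ≠ 0 → 2 ^ n - v a ≤ d →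
      ∀ b, v a < v (op a b) := by
    intro d
    induction d with
    | zero =>
        intro a ha hd b
        have := hvlt a ha
        omega
    | succ d ih =>
        intro a ha hd b
        obtain ⟨k, rfl⟩ := hsurj b
        induction k with
        | zero =>
            simp only [Nat.cast_zero, zero_add, hsucc, hvsucc a ha]
            omega
        | succ k ihk =>
            have hc : ((k + 1 : ℕ) : ZMod (2 ^ n)) + 1 = ((k : ZMod (2 ^ n)) + 1) + 1 := by
              push_cast; ring
            rw [hc, hrec]
            by_cases hu0 : op a ((k : ZMod (2 ^ n)) + 1) = 0
            · rw [hu0, hzero, hvsucc a ha]; omega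
            · have h1 : v a < v (op a ((k : ZMod (2 ^ n)) + 1)) := ihk
              have h2 : 2 ^ n - v (op a ((k : ZMod (2 ^ n)) + 1)) ≤ d := by
                have := hvle (op a ((k : ZMod (2 ^ n)) + 1)); omega
              have := ih (op a ((k : ZMod (2 ^ n)) + 1)) hu0 h2 (a + 1)
              omega
  -- column 0 is constantly 0
  have hopzero : ∀ a : ZMod (2 ^ n), op a 0 = 0 := by
    intro a
    have hid : op a 0 = op (op a 0) (op a 0) := by
      have h := hLD a 0 0
      rwa [hzero 0] at h
    by_contra h0
    have := hincr (2 ^ n) (op a 0) h0 (Nat.sub_le _ _) (op a 0)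
    rw [← hid] at this
    exact lt_irrefl _ this
  -- the composition operation
  set C : ZMod (2 ^ n) → ZMod (2 ^ n) → ZMod (2 ^ n) :=
    fun a b => op a (b + 1) - 1 with hC
  have hC1 : ∀ a b, C a b + 1 = op a (b + 1) := by
    intro a b; simp [hC]
  -- law 4
  have law4 : ∀ a b, C a b = C (op a b) a := by
    intro a b
    simp only [hC]
    rw [hrec]
  -- law 2
  have law2 : ∀ a b c, op (C a b) c = op a (op b c) := by
    intro a b c
    obtain ⟨k, rfl⟩ := hsurj c
    induction k with
    | zero =>
        simp only [Nat.cast_zero, zero_add, hsucc]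
        rw [← hC1]
    | succ k ihk =>
        have hc : ((k + 1 : ℕ) : ZMod (2 ^ n)) + 1 = ((k : ZMod (2 ^ n)) + 1) + 1 := by
          push_cast; ring
        rw [hc, hrec, ihk, hC1, hrec b ((k : ZMod (2 ^ n)) + 1),
          hLD a (op b ((k : ZMod (2 ^ n)) + 1)) (b + 1)]
  -- law 1
  have law1 : ∀ a b c, C a (C b c) = C (C a b) c := by
    intro a b c
    have h : C a (C b c) + 1 = C (C a b) c + 1 := by
      rw [hC1, hC1, hC1, law2]
    exact add_right_cancel h
  -- law 3, by downward induction on the height of b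
  have law3aux : ∀ d : ℕ, ∀ b : ZMod (2 ^ n), 2 ^ n - v b ≤ d →
      ∀ a c, op a (C b c) = C (op a b) (op a c) := by
    intro d
    induction d with
    | zero =>
        intro b hd a c
        have hb : b = 0 := by
          by_contra h
          have := hvlt b h
          omega
        subst hb
        have e1 : C 0 c = c := by
          simp only [hC]
          rw [hzero]; ring
        have e2 : C 0 (op a c) = op a c := by
          simp only [hC]
          rw [hzero]; ring
        rw [e1, hopzero, e2]
    | succ d ih =>
        intro b hd a c
        by_cases hb : b = 0
        · subst hb
          have e1 : C 0 c = c := by simp only [hC]; rw [hzero]; ring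
          have e2 : C 0 (op a c) = op a c := by simp only [hC]; rw [hzero]; ring
          rw [e1, hopzero, e2]
        · have h1 : v b < v (op b c) := hincr (2 ^ n) b hb (Nat.sub_le _ _) c
          have h2 : 2 ^ n - v (op b c) ≤ d := by
            have := hvle (op b c); omega
          have key := ih (op b c) h2 a b
          rw [law4 b c, key, hLD]
          exact (law4 (op a b) (op a c)).symm
  have law3 : ∀ a b c, op a (C b c) = C (op a b) (op a c) := by
    intro a b c
    exact law3aux (2 ^ n) b (Nat.sub_le _ _) a c
  have hALS : ALSigma op C := ⟨law1, law2, law3, law4⟩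
  refine ⟨⟨C, hALS, ?_⟩, hALS⟩
  intro y hy
  funext a b
  have h := hy.2.1 a b 1
  rw [hsucc, hsucc] at h
  simp only [hC]
  exact eq_sub_of_add_eq h
end

section
/- Let *_n be the unique left-distributive operation on {0,1,…,2^n−1} with a *_n 1 = a + 1 (mod 2^n). Then for all a, b ∈ {0,1,…,2^n−1}, either a *_n b = 0 or a *_n b > a. -/
/-!
Left-distributivity and `a ⋆ 1 = a + 1` give the recursion `a ⋆ (b + 1) = (a ⋆ b) ⋆ (a + 1)`.
Argue by descending induction on `a` and, inside a row, ascending induction on `b` from `1`: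
if `a ⋆ b = 0` then `a ⋆ (b + 1) = 0 ⋆ (a + 1) = a + 1`, which is `0` or exceeds `a`;
if `a ⋆ b > a` then the row of `a ⋆ b` is already known to increase or vanish.
-/

namespace ZMod

variable {N : ℕ} [NeZero N]

theorem val_lt_val_add_one {a : ZMod N} (h : a + 1 ≠ 0) : a.val < (a + 1).val := by
  rcases eq_or_ne N 1 with rfl | hN
  · exact absurd (Subsingleton.elim _ _) h
  have val_one : (1 : ZMod N).val = 1 := val_one'' hN
  have hlt : a.val + 1 < N := by
    by_contra! hle
    apply h
    rw [← val_eq_zero, val_add_of_le (by rwa [val_one]), val_one]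
    have := a.val_lt
    omega
  rw [val_add_of_lt (by rwa [val_one]), val_one]
  omega

theorem forall_of_one_of_add_one {P : ZMod N → Prop} (one : P 1)
    (add_one : ∀ x, P x → P (x + 1)) : ∀ x, P x := by
  have h : ∀ k : ℕ, P (k + 1) := by
    intro k
    induction k with
    | zero => simpa using one
    | succ k ih => simpa [add_assoc] using add_one _ ih
  intro x
  simpa using h (x - 1).val

end ZMod

section LaverRecursion

theorem op_add_one_of_leftDistrib {M : Type*} [Add M] [One M] {op : M → M → M}
    (hLD : ∀ a b c, op a (op b c) = op (op a b) (op a c)) (hsucc : ∀ a, op a 1 = a + 1)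
    (a b : M) : op a (b + 1) = op (op a b) (a + 1) := by
  rw [← hsucc, hLD, hsucc]

variable {N : ℕ} [NeZero N] {op : ZMod N → ZMod N → ZMod N}

theorem zero_op_eq_self (hsucc : ∀ a, op a 1 = a + 1)
    (hrec : ∀ a b, op a (b + 1) = op (op a b) (a + 1)) : ∀ b, op 0 b = b :=
  ZMod.forall_of_one_of_add_one (by rw [hsucc, zero_add]) fun b hb => by
    rw [hrec, zero_add, hsucc, hb]

theorem op_eq_zero_or_val_lt (hsucc : ∀ a, op a 1 = a + 1)
    (hrec : ∀ a b, op a (b + 1) = op (op a b) (a + 1)) (a : ZMod N) :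
    ∀ b, op a b = 0 ∨ a.val < (op a b).val := by
  induction a using (measure fun a : ZMod N => N - a.val).wf.induction with | _ a ih
  have succ_eq_zero_or_lt : a + 1 = 0 ∨ a.val < (a + 1).val :=
    (em _).imp_right ZMod.val_lt_val_add_one
  refine ZMod.forall_of_one_of_add_one (by rwa [hsucc]) fun b hb => ?_
  rw [hrec]
  rcases hb with hb | hb
  · rwa [hb, zero_op_eq_self hsucc hrec]
  · have decreasing : N - (op a b).val < N - a.val := Nat.sub_lt_sub_left a.val_lt hb
    exact (ih (op a b) decreasing (a + 1)).imp_right hb.trans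

end LaverRecursion

theorem stmt_12 (n : ℕ) (op : ZMod (2 ^ n) → ZMod (2 ^ n) → ZMod (2 ^ n))
    (hLD : ∀ a b c : ZMod (2 ^ n), op a (op b c) = op (op a b) (op a c))
    (hsucc : ∀ a : ZMod (2 ^ n), op a 1 = a + 1) :
    ∀ a b : ZMod (2 ^ n), op a b = 0 ∨ a.val < (op a b).val :=
  op_eq_zero_or_val_lt hsucc (op_add_one_of_leftDistrib hLD hsucc)
end

section
/- Let *_n be the unique left-distributive operation on A'_n = {1,2,…,2^n} with a *_n 1 = a + 1 for a < 2^n and 2^n *_n 1 = 1. Then a *_n 2^n = 2^n for every a ∈ A'_n; equivalently, the period of every element a of A'_n (the least p ≥ 1 with a *_n p = 2^n) is a power of 2. -/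
theorem stmt_13 (n : ℕ) (op : ℕ → ℕ → ℕ)
    (hclosed : ∀ a ∈ Set.Icc 1 (2 ^ n), ∀ b ∈ Set.Icc 1 (2 ^ n),
      op a b ∈ Set.Icc 1 (2 ^ n))
    (hLD : ∀ a ∈ Set.Icc 1 (2 ^ n), ∀ b ∈ Set.Icc 1 (2 ^ n), ∀ c ∈ Set.Icc 1 (2 ^ n),
      op a (op b c) = op (op a b) (op a c))
    (hsucc : ∀ a : ℕ, 1 ≤ a → a < 2 ^ n → op a 1 = a + 1)
    (htop : op (2 ^ n) 1 = 1) :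
    ∀ a ∈ Set.Icc 1 (2 ^ n),
      op a (2 ^ n) = 2 ^ n ∧
      ∃ p : ℕ, 1 ≤ p ∧ op a p = 2 ^ n ∧ (∀ q, 1 ≤ q → op a q = 2 ^ n → p ≤ q) ∧
        ∃ k : ℕ, p = 2 ^ k := by
  classical
  set N := 2 ^ n with hNdef
  have hN1 : 1 ≤ N := Nat.one_le_two_pow
  have mem : ∀ x, 1 ≤ x → x ≤ N → x ∈ Set.Icc 1 N := fun x h1 h2 => Set.mem_Icc.mpr ⟨h1, h2⟩
  have memN : N ∈ Set.Icc 1 N := mem N hN1 le_rfl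
  -- Lemma A: op N b = b
  have hA : ∀ b, 1 ≤ b → b ≤ N → op N b = b := by
    intro b
    induction b with
    | zero => omega
    | succ m ih =>
      intro h1 h2
      rcases Nat.eq_zero_or_pos m with hm | hm
      · subst hm; simpa using htop
      · have hmN : m < N := by omega
        have hm1 : op m 1 = m + 1 := hsucc m hm hmN
        have h1mem : (1 : ℕ) ∈ Set.Icc 1 N := mem 1 le_rfl hN1
        have hmmem : m ∈ Set.Icc 1 N := mem m hm (le_of_lt hmN)
        calc op N (m + 1) = op N (op m 1) := by rw [hm1]
          _ = op (op N m) (op N 1) := hLD N memN m hmmem 1 h1mem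
          _ = op m (op N 1) := by rw [ih hm (le_of_lt hmN)]
          _ = op m 1 := by rw [htop]
          _ = m + 1 := hm1
  -- Lemma B: a + 1 ≤ op a b for a < N
  have hB : ∀ m a, 1 ≤ a → a < N → N - a ≤ m → ∀ b, 1 ≤ b → b ≤ N → a + 1 ≤ op a b := by
    intro m
    induction m with
    | zero => intro a h1 h2 hm; omega
    | succ m ih =>
      intro a h1 h2 hm b
      induction b with
      | zero => omega
      | succ b ihb =>
        intro hb1 hb2
        rcases Nat.eq_zero_or_pos b with hb | hb
        · subst hb; rw [hsucc a h1 h2]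
        · have hbN : b < N := by omega
          have hamem : a ∈ Set.Icc 1 N := mem a h1 (le_of_lt h2)
          have hbmem : b ∈ Set.Icc 1 N := mem b hb (le_of_lt hbN)
          have h1mem : (1 : ℕ) ∈ Set.Icc 1 N := mem 1 le_rfl hN1
          have key : op a (b + 1) = op (op a b) (a + 1) := by
            rw [← hsucc b hb hbN, hLD a hamem b hbmem 1 h1mem, hsucc a h1 h2]
          have hcmem : op a b ∈ Set.Icc 1 N := hclosed a hamem b hbmem
          obtain ⟨hc1, hc2⟩ := Set.mem_Icc.mp hcmem
          have hcge : a + 1 ≤ op a b := ihb hb (le_of_lt hbN)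
          rcases eq_or_lt_of_le hc2 with hceq | hclt
          · rw [key, hceq, hA (a + 1) (by omega) (by omega)]
          · have := ih (op a b) hc1 hclt (by omega) (a + 1) (by omega) (by omega)
            omega
  -- Existence of p with op a p = N
  have hEx : ∀ a, 1 ≤ a → a ≤ N → ∃ p, 1 ≤ p ∧ p ≤ N ∧ op a p = N := by
    intro a h1 h2
    rcases eq_or_lt_of_le h2 with heq | hlt
    · exact ⟨N, hN1, le_rfl, by rw [heq]; exact hA N hN1 le_rfl⟩
    · have claim : ∀ b, 1 ≤ b → b ≤ N →
          (∃ c, 1 ≤ c ∧ c ≤ b ∧ op a c = N) ∨ (a + b ≤ op a b) := by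
        intro b
        induction b with
        | zero => omega
        | succ b ihb =>
          intro hb1 hb2
          rcases Nat.eq_zero_or_pos b with hb | hb
          · subst hb; right; rw [hsucc a h1 hlt]
          · rcases ihb hb (by omega) with ⟨c, hc1, hc2, hc3⟩ | hge
            · exact Or.inl ⟨c, hc1, by omega, hc3⟩
            · have hbN : b < N := by omega
              have hamem : a ∈ Set.Icc 1 N := mem a h1 (le_of_lt hlt)
              have hbmem : b ∈ Set.Icc 1 N := mem b hb (le_of_lt hbN)
              have h1mem : (1 : ℕ) ∈ Set.Icc 1 N := mem 1 le_rfl hN1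
              have hcmem : op a b ∈ Set.Icc 1 N := hclosed a hamem b hbmem
              obtain ⟨hc1, hc2⟩ := Set.mem_Icc.mp hcmem
              rcases eq_or_lt_of_le hc2 with hceq | hclt
              · exact Or.inl ⟨b, hb, by omega, hceq⟩
              · right
                have key : op a (b + 1) = op (op a b) (a + 1) := by
                  rw [← hsucc b hb hbN, hLD a hamem b hbmem 1 h1mem, hsucc a h1 hlt]
                have := hB N (op a b) hc1 hclt (by omega) (a + 1) (by omega) (by omega)
                omega
      rcases claim N hN1 le_rfl with ⟨c, hc1, hc2, hc3⟩ | hge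
      · exact ⟨c, hc1, hc2, hc3⟩
      · have hcmem : op a N ∈ Set.Icc 1 N := hclosed a (mem a h1 h2) N memN
        obtain ⟨_, hc2⟩ := Set.mem_Icc.mp hcmem
        omega
  -- Lemma C: op a N = N
  have hC : ∀ m a, 1 ≤ a → a ≤ N → N - a ≤ m → op a N = N := by
    intro m
    induction m with
    | zero =>
      intro a h1 h2 hm
      have : a = N := by omega
      rw [this]; exact hA N hN1 le_rfl
    | succ m ih =>
      intro a h1 h2 hm
      rcases eq_or_lt_of_le h2 with heq | hlt
      · rw [heq]; exact hA N hN1 le_rfl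
      · obtain ⟨p, hp1, hp2, hp3⟩ := hEx a h1 h2
        have hamem : a ∈ Set.Icc 1 N := mem a h1 h2
        have hpmem : p ∈ Set.Icc 1 N := mem p hp1 hp2
        have key := hLD a hamem a hamem p hpmem
        rw [hp3] at key
        have hdmem : op a a ∈ Set.Icc 1 N := hclosed a hamem a hamem
        obtain ⟨hd1, hd2⟩ := Set.mem_Icc.mp hdmem
        have hdge : a + 1 ≤ op a a := hB N a h1 hlt (by omega) a h1 h2
        rw [key, ih (op a a) hd1 hd2 (by omega)]
  -- Main
  intro a ha
  obtain ⟨ha1, ha2⟩ := Set.mem_Icc.mp ha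
  have haN : op a N = N := hC N a ha1 ha2 (by omega)
  refine ⟨haN, ?_⟩
  have hex : ∃ q, 1 ≤ q ∧ op a q = N := ⟨N, hN1, haN⟩
  set p := Nat.find hex with hpdef
  obtain ⟨hp1, hpN⟩ := Nat.find_spec hex
  have hmin : ∀ q, 1 ≤ q → op a q = N → p ≤ q := fun q h1 h2 => Nat.find_min' hex ⟨h1, h2⟩
  have hpleN : p ≤ N := hmin N hN1 haN
  refine ⟨p, hp1, hpN, hmin, ?_⟩
  -- p is a power of 2: show p ∣ N
  have hdvd : p ∣ N := by
    rcases eq_or_lt_of_le ha2 with haeq | halt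
    · -- a = N : op N p = p = N
      have : op a p = p := by rw [haeq]; exact hA p hp1 hpleN
      have : p = N := by rw [← hpN, this]
      rw [this]
    · rcases eq_or_lt_of_le hpleN with hpeq | hplt
      · rw [hpeq]
      · -- periodicity
        have hamem : a ∈ Set.Icc 1 N := mem a ha1 ha2
        have h1mem : (1 : ℕ) ∈ Set.Icc 1 N := mem 1 le_rfl hN1
        have hPer : ∀ b, 1 ≤ b → b + p ≤ N → op a (b + p) = op a b := by
          intro b
          induction b with
          | zero => omega
          | succ b ihb =>
            intro hb1 hb2
            rcases Nat.eq_zero_or_pos b with hb | hb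
            · subst hb
              have hpmem : p ∈ Set.Icc 1 N := mem p hp1 (le_of_lt hplt)
              have : op a (op p 1) = op (op a p) (op a 1) := hLD a hamem p hpmem 1 h1mem
              rw [hsucc p hp1 hplt, hpN, hsucc a ha1 halt,
                hA (a + 1) (by omega) (by omega)] at this
              simpa [Nat.add_comm, hsucc a ha1 halt] using this
            · have hbpN : b + p < N := by omega
              have hbp1 : 1 ≤ b + p := by omega
              have hbN : b < N := by omega
              have hbpmem : (b + p) ∈ Set.Icc 1 N := mem _ hbp1 (le_of_lt hbpN)
              have hbmem : b ∈ Set.Icc 1 N := mem b hb (le_of_lt hbN)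
              have e1 : op a (b + p + 1) = op (op a (b + p)) (op a 1) := by
                rw [← hsucc (b + p) hbp1 hbpN]
                exact hLD a hamem (b + p) hbpmem 1 h1mem
              have e2 : op a (b + 1) = op (op a b) (op a 1) := by
                rw [← hsucc b hb hbN]
                exact hLD a hamem b hbmem 1 h1mem
              have : op a (b + p) = op a b := ihb hb (by omega)
              have : op a (b + p + 1) = op a (b + 1) := by rw [e1, e2, this]
              calc op a (b + 1 + p) = op a (b + p + 1) := by ring_nf
                _ = op a (b + 1) := this
        have hIter : ∀ j b, 1 ≤ b → b + j * p ≤ N → op a (b + j * p) = op a b := by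
          intro j
          induction j with
          | zero => intro b _ _; simp
          | succ j ihj =>
            intro b hb1 hb2
            have e : b + (j + 1) * p = (b + p) + j * p := by ring
            rw [e, ihj (b + p) (by omega) (by omega), hPer b hb1 (by omega)]
        set r := N % p with hrdef
        rcases Nat.eq_zero_or_pos r with hr | hr
        · exact Nat.dvd_of_mod_eq_zero hr
        · exfalso
          have hrp : r < p := Nat.mod_lt N (by omega)
          have hNe : r + (N / p) * p = N := by
            rw [hrdef]; rw [Nat.mul_comm]; exact Nat.mod_add_div N p
          have : op a r = N := by
            rw [← hIter (N / p) r hr (by omega), hNe]; exact haN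
          have := hmin r hr this
          omega
  obtain ⟨k, _, hk⟩ := (Nat.dvd_prime_pow Nat.prime_two).mp hdvd
  exact ⟨k, hk⟩
end

section
/- Reduction modulo 2^n is a homomorphism from the (n+1)-st Laver table to the n-th: if *_n and *_{n+1} are the unique left-distributive operations on {0,…,2^n−1} and {0,…,2^{n+1}−1} respectively with a * 1 = a + 1 (mod 2^n resp. mod 2^{n+1}), then for all a, b ∈ {0,…,2^{n+1}−1}, (a *_{n+1} b) mod 2^n = (a mod 2^n) *_n (b mod 2^n). -/
namespace LaverStmt14
def lav (N a b : ℕ) : ℕ :=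
  if ha : a = 0 then b
  else if hb : b = 0 then 0
  else if hb1 : b = 1 then (a + 1) % N
  else
    if h : a < N ∧ (lav N a (b - 1) = 0 ∨ (a < lav N a (b - 1) ∧ lav N a (b - 1) < N)) then
      lav N (lav N a (b - 1)) ((a + 1) % N)
    else 0
termination_by ((if a = 0 then 0 else N - a), b)
decreasing_by
  all_goals first
    | (exact Prod.Lex.right _ (by omega))
    | (apply Prod.Lex.left
       obtain ⟨h1, h2 | ⟨h2a, h2b⟩⟩ := h
       · rw [if_pos h2]; split <;> omega
       · rw [if_neg (by omega)]; split <;> omega)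

lemma lav_a0 (N b : ℕ) : lav N 0 b = b := by unfold lav; simp

lemma lav_b0 (N a : ℕ) : lav N a 0 = 0 := by
  unfold lav; split_ifs <;> omega

lemma lav_b1 (N a : ℕ) (ha : a ≠ 0) : lav N a 1 = (a + 1) % N := by
  unfold lav; simp [ha]

lemma lav_step (N a b : ℕ) (ha : a ≠ 0) (hb : 2 ≤ b) :
    lav N a b =
      if a < N ∧ (lav N a (b - 1) = 0 ∨ (a < lav N a (b - 1) ∧ lav N a (b - 1) < N)) then
        lav N (lav N a (b - 1)) ((a + 1) % N)
      else 0 := by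
  conv_lhs => rw [lav.eq_def]
  rw [dif_neg ha, dif_neg (by omega : ¬ b = 0), dif_neg (by omega : ¬ b = 1)]
  split_ifs <;> rfl

lemma succ_mod_bound (N a : ℕ) (h : a < N) : (a + 1) % N = 0 ∨ a < (a + 1) % N := by
  rcases Nat.lt_or_ge (a + 1) N with h' | h'
  · right; rw [Nat.mod_eq_of_lt h']; omega
  · left; have : a + 1 = N := by omega
    rw [this, Nat.mod_self]

lemma lav_bound (N : ℕ) :
    ∀ (M a b : ℕ), a < N → b < N → (if a = 0 then 0 else N - a) * N + b < M →
      lav N a b < N ∧ (a ≠ 0 → (lav N a b = 0 ∨ a < lav N a b)) := by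
  intro M
  induction M with
  | zero => intro a b _ _ h; exact absurd h (Nat.not_lt_zero _)
  | succ M ih =>
    intro a b haN hbN hμ
    by_cases ha : a = 0
    · subst ha
      rw [lav_a0]
      exact ⟨hbN, fun h => absurd rfl h⟩
    · rw [if_neg ha] at hμ
      by_cases hb0 : b = 0
      · subst hb0; rw [lav_b0]
        exact ⟨by omega, fun _ => Or.inl rfl⟩
      by_cases hb1 : b = 1
      · subst hb1; rw [lav_b1 N a ha]
        exact ⟨Nat.mod_lt _ (by omega), fun _ => succ_mod_bound N a haN⟩
      -- b ≥ 2
      have hb2 : 2 ≤ b := by omega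
      have hc := ih a (b - 1) haN (by omega) (by rw [if_neg ha]; omega)
      have hcN : lav N a (b - 1) < N := hc.1
      have hcb : lav N a (b - 1) = 0 ∨ a < lav N a (b - 1) := hc.2 ha
      set c := lav N a (b - 1) with hcdef
      rw [lav_step N a b ha hb2, ← hcdef,
        if_pos (show a < N ∧ (c = 0 ∨ (a < c ∧ c < N)) by
          refine ⟨haN, ?_⟩; rcases hcb with h | h
          · exact Or.inl h
          · exact Or.inr ⟨h, hcN⟩)]
      set j := (a + 1) % N with hjdef
      have hjN : j < N := Nat.mod_lt _ (by omega)
      rcases hcb with h0 | hlt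
      · rw [h0, lav_a0]
        exact ⟨hjN, fun _ => succ_mod_bound N a haN⟩
      · -- c ≠ 0, a < c < N
        have hmeas : (if c = 0 then 0 else N - c) * N + j < M := by
          rw [if_neg (by omega : ¬ c = 0)]
          have h1 : (N - c) + 1 ≤ N - a := by omega
          have h2 := Nat.mul_le_mul_right N h1
          have h3 : ((N - c) + 1) * N = (N - c) * N + N := by ring
          omega
        have := ih c j hcN hjN hmeas
        refine ⟨this.1, fun _ => ?_⟩
        rcases this.2 (by omega) with h | h
        · exact Or.inl h
        · exact Or.inr (by omega)

lemma lav_lt (N a b : ℕ) (haN : a < N) (hbN : b < N) : lav N a b < N :=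
  (lav_bound N ((if a = 0 then 0 else N - a) * N + b + 1) a b haN hbN (Nat.lt_succ_self _)).1

lemma lav_gt (N a b : ℕ) (ha : a ≠ 0) (haN : a < N) (hbN : b < N) :
    lav N a b = 0 ∨ a < lav N a b :=
  (lav_bound N ((if a = 0 then 0 else N - a) * N + b + 1) a b haN hbN (Nat.lt_succ_self _)).2 ha

lemma lav_step' (N a b : ℕ) (ha : a ≠ 0) (haN : a < N) (hb2 : 2 ≤ b) (hbN : b < N) :
    lav N a b = lav N (lav N a (b - 1)) ((a + 1) % N) := by
  rw [lav_step N a b ha hb2, if_pos]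
  refine ⟨haN, ?_⟩
  rcases lav_gt N a (b - 1) ha haN (by omega) with h | h
  · exact Or.inl h
  · exact Or.inr ⟨h, lav_lt N a (b - 1) haN (by omega)⟩

section OpTheory

variable {N : ℕ} [NeZero N] (op : ZMod N → ZMod N → ZMod N)
  (hLD : ∀ a b c, op a (op b c) = op (op a b) (op a c))
  (hs : ∀ a, op a 1 = a + 1)

set_option linter.unusedSectionVars false
include hLD hs

lemma op_rec (a b : ZMod N) : op a (b + 1) = op (op a b) (a + 1) := by
  rw [← hs b, hLD, hs]

lemma op_zero_left (b : ZMod N) : op 0 b = b := by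
  have key : ∀ k : ℕ, op 0 ((k + 1 : ℕ) : ZMod N) = ((k + 1 : ℕ) : ZMod N) := by
    intro k
    induction k with
    | zero => simpa using hs 0
    | succ k ih =>
      have h1 : ((k + 1 + 1 : ℕ) : ZMod N) = ((k + 1 : ℕ) : ZMod N) + 1 := by push_cast; ring
      rw [h1, op_rec op hLD hs, ih, zero_add, hs]
  by_cases hb : b = 0
  · subst hb
    have hN : N - 1 + 1 = N := by have := NeZero.pos N; omega
    have := key (N - 1)
    rwa [hN, ZMod.natCast_self] at this
  · have hv : b.val ≠ 0 := by simpa [ZMod.val_eq_zero] using hb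
    obtain ⟨k, hk⟩ : ∃ k, b.val = k + 1 := ⟨b.val - 1, by omega⟩
    have := key k
    rwa [← hk, ZMod.natCast_rightInverse b] at this

lemma op_eq_lav_pos :
    ∀ (M : ℕ) (a : ZMod N) (k : ℕ), 1 ≤ k → k < N →
      (if a.val = 0 then 0 else N - a.val) * N + k < M →
      op a ((k : ℕ) : ZMod N) = ((lav N a.val k : ℕ) : ZMod N) := by
  intro M
  induction M with
  | zero => intro a k _ _ h; exact absurd h (Nat.not_lt_zero _)
  | succ M ih =>
    intro a k hk1 hkN hμ
    by_cases ha : a = 0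
    · subst ha
      rw [op_zero_left op hLD hs, ZMod.val_zero, lav_a0]
    · have hav : a.val ≠ 0 := by simpa [ZMod.val_eq_zero] using ha
      have haN : a.val < N := ZMod.val_lt a
      rw [if_neg hav] at hμ
      rcases eq_or_lt_of_le hk1 with h1 | hk2
    -- k = 1
      · rw [← h1, lav_b1 N a.val hav, Nat.cast_one, hs, ZMod.natCast_mod]
        push_cast
        rw [ZMod.natCast_rightInverse a]
    -- k ≥ 2
      · have hk2' : 2 ≤ k := hk2
        have hcsmall := ih a (k - 1) (by omega) (by omega) (by rw [if_neg hav]; omega)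
        have hcN : lav N a.val (k - 1) < N := lav_lt N a.val (k - 1) haN (by omega)
        have hcb := lav_gt N a.val (k - 1) hav haN (by omega)
        set c := lav N a.val (k - 1) with hcdef
        have hkk : ((k : ℕ) : ZMod N) = ((k - 1 : ℕ) : ZMod N) + 1 := by
          conv_lhs => rw [show k = (k - 1) + 1 from by omega]
          push_cast
          ring
        rw [hkk, op_rec op hLD hs, hcsmall]
        have hstep := lav_step' N a.val k hav haN hk2' hkN
        rw [← hcdef] at hstep
        have hj : a + 1 = (((a.val + 1) % N : ℕ) : ZMod N) := by
          rw [ZMod.natCast_mod]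
          push_cast
          rw [ZMod.natCast_rightInverse a]
        rcases hcb with hc0 | hclt
        · rw [hc0, Nat.cast_zero, op_zero_left op hLD hs, hstep, hc0, lav_a0, hj]
        · have hjpos : 1 ≤ (a.val + 1) % N := by
            rcases Nat.lt_or_ge (a.val + 1) N with h' | h'
            · rw [Nat.mod_eq_of_lt h']; omega
            · exfalso; have : a.val + 1 = N := by omega
              omega
          have hjN : (a.val + 1) % N < N := Nat.mod_lt _ (by omega)
          have hcval : ((c : ℕ) : ZMod N).val = c := ZMod.val_cast_of_lt hcN
          have hmeas : (if ((c : ℕ) : ZMod N).val = 0 then 0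
              else N - ((c : ℕ) : ZMod N).val) * N + (a.val + 1) % N < M := by
            rw [hcval, if_neg (by omega : ¬ c = 0)]
            have h1 : (N - c) + 1 ≤ N - a.val := by omega
            have h2 := Nat.mul_le_mul_right N h1
            have h3 : ((N - c) + 1) * N = (N - c) * N + N := by ring
            omega
          have := ih ((c : ℕ) : ZMod N) ((a.val + 1) % N) hjpos hjN hmeas
          rw [hj, this, hcval, hstep]


lemma op_eq_lav (a b : ZMod N) (hb : b ≠ 0) :
    op a b = ((lav N a.val b.val : ℕ) : ZMod N) := by
  have hv : b.val ≠ 0 := by simpa [ZMod.val_eq_zero] using hb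
  have := op_eq_lav_pos op hLD hs
    ((if a.val = 0 then 0 else N - a.val) * N + b.val + 1) a b.val
    (by omega) (ZMod.val_lt b) (Nat.lt_succ_self _)
  rwa [ZMod.natCast_rightInverse b] at this

lemma op_zero_right (a : ZMod N) : op a 0 = 0 := by
  have h00 : op 0 0 = (0 : ZMod N) := op_zero_left op hLD hs 0
  have key : op a 0 = op (op a 0) (op a 0) := by
    conv_lhs => rw [← h00]
    exact hLD a 0 0
  by_contra hx
  set x := op a 0 with hxdef
  have hxv : x.val ≠ 0 := by simpa [ZMod.val_eq_zero] using hx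
  have hxN : x.val < N := ZMod.val_lt x
  have h1 : op x x = ((lav N x.val x.val : ℕ) : ZMod N) := op_eq_lav op hLD hs x x hx
  rw [← key] at h1
  rcases lav_gt N x.val x.val hxv hxN hxN with h | h
  · rw [h, Nat.cast_zero] at h1; exact hx h1
  · have hlN : lav N x.val x.val < N := lav_lt N x.val x.val hxN hxN
    have : x.val = lav N x.val x.val := by
      conv_lhs => rw [h1]
      rw [ZMod.val_cast_of_lt hlN]
    omega

lemma op_bound (a b : ZMod N) : op a b = 0 ∨ a.val < (op a b).val := by
  by_cases hb : b = 0
  · subst hb; exact Or.inl (op_zero_right op hLD hs a)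
  by_cases ha : a = 0
  · subst ha
    rw [op_zero_left op hLD hs]
    right
    rw [ZMod.val_zero]
    have : b.val ≠ 0 := by simpa [ZMod.val_eq_zero] using hb
    omega
  · have hav : a.val ≠ 0 := by simpa [ZMod.val_eq_zero] using ha
    have haN : a.val < N := ZMod.val_lt a
    have hbN : b.val < N := ZMod.val_lt b
    rw [op_eq_lav op hLD hs a b hb]
    rcases lav_gt N a.val b.val hav haN hbN with h | h
    · rw [h, Nat.cast_zero]; exact Or.inl rfl
    · right
      rw [ZMod.val_cast_of_lt (lav_lt N a.val b.val haN hbN)]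
      exact h

end OpTheory

lemma hom_general (Nb Ns : ℕ) [NeZero Nb] [NeZero Ns] (hd : Ns ∣ Nb)
    (opS : ZMod Nb → ZMod Nb → ZMod Nb) (opN : ZMod Ns → ZMod Ns → ZMod Ns)
    (hLDS : ∀ a b c, opS a (opS b c) = opS (opS a b) (opS a c))
    (hsS : ∀ a, opS a 1 = a + 1)
    (hLDN : ∀ a b c, opN a (opN b c) = opN (opN a b) (opN a c))
    (hsN : ∀ a, opN a 1 = a + 1) :
    ∀ a b, ZMod.castHom hd (ZMod Ns) (opS a b) =
      opN (ZMod.castHom hd (ZMod Ns) a) (ZMod.castHom hd (ZMod Ns) b) := by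
  set π := ZMod.castHom hd (ZMod Ns) with hπ
  have main : ∀ (M : ℕ) (a : ZMod Nb), (if a = 0 then 0 else Nb - a.val) < M →
      ∀ b, π (opS a b) = opN (π a) (π b) := by
    intro M
    induction M with
    | zero => intro a h; exact absurd h (Nat.not_lt_zero _)
    | succ M ih =>
      intro a ha b
      by_cases h0 : a = 0
      · subst h0
        rw [op_zero_left opS hLDS hsS, map_zero, op_zero_left opN hLDN hsN]
      · rw [if_neg h0] at ha
        have haN : a.val < Nb := ZMod.val_lt a
        have hav : a.val ≠ 0 := by simpa [ZMod.val_eq_zero] using h0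
        have key : ∀ k : ℕ, π (opS a ((k : ℕ) : ZMod Nb)) = opN (π a) ((k : ℕ) : ZMod Ns) := by
          intro k
          induction k with
          | zero =>
            simp only [Nat.cast_zero]
            rw [op_zero_right opS hLDS hsS, map_zero, op_zero_right opN hLDN hsN]
          | succ k ihk =>
            have hcast : ((k + 1 : ℕ) : ZMod Nb) = ((k : ℕ) : ZMod Nb) + 1 := by push_cast; ring
            rw [hcast, op_rec opS hLDS hsS]
            have hbnd := op_bound opS hLDS hsS a ((k : ℕ) : ZMod Nb)
            set c := opS a ((k : ℕ) : ZMod Nb) with hc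
            have hm : (if c = 0 then 0 else Nb - c.val) < M := by
              rcases hbnd with h | h
              · rw [if_pos h]
                omega
              · have : c ≠ 0 := by
                  intro hcc
                  rw [hcc, ZMod.val_zero] at h
                  omega
                rw [if_neg this]
                omega
            have hstep := ih c hm (a + 1)
            rw [hstep, map_add, map_one, ihk]
            rw [← op_rec opN hLDN hsN]
            congr 1
            push_cast
            ring
        have hb := key b.val
        have hπb : ((b.val : ℕ) : ZMod Ns) = π b := by
          rw [← map_natCast π (b.val), ZMod.natCast_rightInverse b]
        rwa [ZMod.natCast_rightInverse b, hπb] at hb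
  intro a b
  exact main ((if a = 0 then 0 else Nb - a.val) + 1) a (Nat.lt_succ_self _) b

end LaverStmt14

theorem stmt_14 (n : ℕ)
    (opS : ZMod (2 ^ (n + 1)) → ZMod (2 ^ (n + 1)) → ZMod (2 ^ (n + 1)))
    (opN : ZMod (2 ^ n) → ZMod (2 ^ n) → ZMod (2 ^ n))
    (hLDS : ∀ a b c : ZMod (2 ^ (n + 1)), opS a (opS b c) = opS (opS a b) (opS a c))
    (hsuccS : ∀ a : ZMod (2 ^ (n + 1)), opS a 1 = a + 1)
    (hLDN : ∀ a b c : ZMod (2 ^ n), opN a (opN b c) = opN (opN a b) (opN a c))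
    (hsuccN : ∀ a : ZMod (2 ^ n), opN a 1 = a + 1) :
    ∀ a b : ZMod (2 ^ (n + 1)),
      ZMod.castHom (pow_dvd_pow 2 (Nat.le_succ n)) (ZMod (2 ^ n)) (opS a b) =
        opN (ZMod.castHom (pow_dvd_pow 2 (Nat.le_succ n)) (ZMod (2 ^ n)) a)
          (ZMod.castHom (pow_dvd_pow 2 (Nat.le_succ n)) (ZMod (2 ^ n)) b) := by
  exact LaverStmt14.hom_general (2 ^ (n + 1)) (2 ^ n) (pow_dvd_pow 2 (Nat.le_succ n))
    opS opN hLDS hsuccS hLDN hsuccN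
end

section
/- Let a < 2^n and let p be the period of a in A'_n. Then: the period of a + 2^n in A'_{n+1} equals p; the period of a in A'_{n+1} is either p or 2p; and the period of 2^n in A'_{n+1} is 2^n. -/
/-- The hypotheses characterizing the unique left-distributive operation `*_m`
on `A'_m = {1, 2, …, 2^m}` with `a *_m 1 = a + 1` for `a < 2^m` and
`2^m *_m 1 = 1`. -/
def IsLaverOp (m : ℕ) (op : ℕ → ℕ → ℕ) : Prop :=
  (∀ a ∈ Set.Icc 1 (2 ^ m), ∀ b ∈ Set.Icc 1 (2 ^ m), op a b ∈ Set.Icc 1 (2 ^ m)) ∧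
  (∀ a ∈ Set.Icc 1 (2 ^ m), ∀ b ∈ Set.Icc 1 (2 ^ m), ∀ c ∈ Set.Icc 1 (2 ^ m),
    op a (op b c) = op (op a b) (op a c)) ∧
  (∀ a : ℕ, 1 ≤ a → a < 2 ^ m → op a 1 = a + 1) ∧
  op (2 ^ m) 1 = 1

/-- `p` is the period of `a` in `A'_m` (with operation `op`): the least `p ≥ 1`
such that `a *_m p = 2^m`. -/
def IsPeriod (m : ℕ) (op : ℕ → ℕ → ℕ) (a p : ℕ) : Prop :=
  1 ≤ p ∧ op a p = 2 ^ m ∧ ∀ q : ℕ, 1 ≤ q → op a q = 2 ^ m → p ≤ q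

namespace Laver15

lemma two_pow_pos (m : ℕ) : 1 ≤ 2 ^ m := Nat.one_le_two_pow

variable {m : ℕ} {op : ℕ → ℕ → ℕ}

lemma mem_op (h : IsLaverOp m op) {a b : ℕ} (ha1 : 1 ≤ a) (ha : a ≤ 2 ^ m)
    (hb1 : 1 ≤ b) (hb : b ≤ 2 ^ m) : 1 ≤ op a b ∧ op a b ≤ 2 ^ m := by
  have := h.1 a (Set.mem_Icc.2 ⟨ha1, ha⟩) b (Set.mem_Icc.2 ⟨hb1, hb⟩)
  exact Set.mem_Icc.1 this

lemma op_one (h : IsLaverOp m op) {a : ℕ} (ha1 : 1 ≤ a) (ha : a < 2 ^ m) :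
    op a 1 = a + 1 := h.2.2.1 a ha1 ha

lemma op_succ (h : IsLaverOp m op) {a b : ℕ} (ha1 : 1 ≤ a) (ha : a ≤ 2 ^ m)
    (hb1 : 1 ≤ b) (hb : b < 2 ^ m) :
    op a (b + 1) = op (op a b) (op a 1) := by
  have h1 : (1 : ℕ) ∈ Set.Icc 1 (2 ^ m) := Set.mem_Icc.2 ⟨le_refl 1, two_pow_pos m⟩
  have hd := h.2.1 a (Set.mem_Icc.2 ⟨ha1, ha⟩) b (Set.mem_Icc.2 ⟨hb1, le_of_lt hb⟩) 1 h1
  rwa [h.2.2.1 b hb1 hb] at hd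

lemma op_succ' (h : IsLaverOp m op) {a b : ℕ} (ha1 : 1 ≤ a) (ha : a < 2 ^ m)
    (hb1 : 1 ≤ b) (hb : b < 2 ^ m) :
    op a (b + 1) = op (op a b) (a + 1) := by
  rw [op_succ h ha1 (le_of_lt ha) hb1 hb, op_one h ha1 ha]

lemma row_top (h : IsLaverOp m op) : ∀ b, 1 ≤ b → b ≤ 2 ^ m → op (2 ^ m) b = b := by
  intro b hb1
  induction b, hb1 using Nat.le_induction with
  | base => intro _; exact h.2.2.2
  | succ b hb1 ih =>
    intro hb
    have hbN : b < 2 ^ m := by omega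
    rw [op_succ h (two_pow_pos m) le_rfl hb1 hbN, ih (le_of_lt hbN), h.2.2.2,
      op_one h hb1 hbN]

structure Good (m : ℕ) (op : ℕ → ℕ → ℕ) (a : ℕ) (P : ℕ) : Prop where
  one_le : 1 ≤ P
  le : P ≤ 2 ^ m
  eq : op a P = 2 ^ m
  incr : ∀ b, 1 ≤ b → b < P → op a b < op a (b + 1)
  per : ∀ b, 1 ≤ b → b + P ≤ 2 ^ m → op a (b + P) = op a b

namespace Good

variable {a P : ℕ}

lemma mono (g : Good m op a P) : ∀ x y, 1 ≤ x → x ≤ y → y ≤ P → op a x ≤ op a y := by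
  intro x y hx1 hxy
  induction y, hxy using Nat.le_induction with
  | base => intro _; exact le_rfl
  | succ y hy ih =>
    intro hyP
    exact le_trans (ih (by omega)) (le_of_lt (g.incr y (by omega) (by omega)))

lemma strict_mono (g : Good m op a P) : ∀ x y, 1 ≤ x → x < y → y ≤ P → op a x < op a y := by
  intro x y hx1 hxy hyP
  have h1 : op a x ≤ op a (y - 1) := g.mono x (y - 1) hx1 (by omega) (by omega)
  have h2 := g.incr (y - 1) (by omega) (by omega)
  rw [show y - 1 + 1 = y by omega] at h2
  omega

lemma lt_top (g : Good m op a P) : ∀ b, 1 ≤ b → b < P → op a b < 2 ^ m := by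
  intro b h1 h2
  have := g.strict_mono b P h1 h2 le_rfl
  rwa [g.eq] at this

lemma reduce (g : Good m op a P) : ∀ b, 1 ≤ b → b ≤ 2 ^ m →
    op a b = op a ((b - 1) % P + 1) := by
  intro b
  induction b using Nat.strong_induction_on with
  | _ b ih =>
    intro hb1 hbN
    by_cases hbP : b ≤ P
    · have h1 : (b - 1) % P = b - 1 := Nat.mod_eq_of_lt (by omega)
      rw [h1, show b - 1 + 1 = b by omega]
    · push_neg at hbP
      have hP1 := g.one_le
      have h1 : op a b = op a (b - P) := by
        have := g.per (b - P) (by omega) (by omega)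
        rwa [show b - P + P = b by omega] at this
      have harith : (b - 1) % P = (b - P - 1) % P := by
        rw [Nat.mod_eq_sub_mod (show (b - 1) ≥ P by omega)]
        congr 1
        omega
      rw [h1, ih (b - P) (by omega) (by omega) (by omega), harith]

lemma rep_bounds (g : Good m op a P) {b : ℕ} (hb1 : 1 ≤ b) :
    1 ≤ (b - 1) % P + 1 ∧ (b - 1) % P + 1 ≤ P := by
  have := Nat.mod_lt (b - 1) (show 0 < P from g.one_le)
  omega

lemma val_ge (g : Good m op a P) (h : IsLaverOp m op) (ha1 : 1 ≤ a) (ha : a < 2 ^ m) :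
    ∀ b, 1 ≤ b → b ≤ 2 ^ m → a + 1 ≤ op a b := by
  intro b hb1 hb
  rw [g.reduce b hb1 hb]
  obtain ⟨hr1, hrP⟩ := g.rep_bounds (b := b) hb1
  have := g.mono 1 ((b - 1) % P + 1) le_rfl hr1 hrP
  rwa [op_one h ha1 ha] at this

lemma eq_top_iff_dvd (g : Good m op a P) : ∀ b, 1 ≤ b → b ≤ 2 ^ m →
    (op a b = 2 ^ m ↔ P ∣ b) := by
  intro b hb1 hb
  obtain ⟨hr1, hrP⟩ := g.rep_bounds (b := b) hb1
  have key : (b - 1) % P + 1 = P ↔ P ∣ b := by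
    constructor
    · intro hrp
      have h2 : (b - 1) % P = P - 1 := by omega
      have hbmod : b % P = 0 := by
        conv_lhs => rw [show b = (b - 1) + 1 by omega]
        rw [Nat.add_mod, h2]
        have := g.one_le
        rcases Nat.eq_or_lt_of_le this with hP | hP
        · simp [← hP]
        · rw [Nat.mod_eq_of_lt hP, show P - 1 + 1 = P by omega, Nat.mod_self]
      exact Nat.dvd_of_mod_eq_zero hbmod
    · rintro ⟨k, rfl⟩
      have hk : k ≠ 0 := by rintro rfl; simp at hb1
      obtain ⟨k', rfl⟩ : ∃ k', k = k' + 1 := ⟨k - 1, by omega⟩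
      have h1 : P * (k' + 1) - 1 = P * k' + (P - 1) := by
        rw [Nat.mul_succ]
        have := g.one_le
        omega
      rw [h1, Nat.mul_add_mod, Nat.mod_eq_of_lt (by have := g.one_le; omega)]
      have := g.one_le; omega
  rw [g.reduce b hb1 hb]
  constructor
  · intro he
    rcases lt_or_eq_of_le hrP with hlt | heq
    · exact absurd he (ne_of_lt (g.lt_top _ hr1 hlt))
    · exact key.1 heq
  · intro hd
    rw [key.2 hd]
    exact g.eq

lemma le_of_eq_top (g : Good m op a P) : ∀ q, 1 ≤ q → q ≤ 2 ^ m → op a q = 2 ^ m → P ≤ q :=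
  fun q h1 h2 h3 => Nat.le_of_dvd (by omega) ((g.eq_top_iff_dvd q h1 h2).1 h3)

lemma eq_imp_modeq (g : Good m op a P) : ∀ x y, 1 ≤ x → x ≤ 2 ^ m → 1 ≤ y → y ≤ 2 ^ m →
    op a x = op a y → x % P = y % P := by
  intro x y hx1 hx hy1 hy hxy
  rw [g.reduce x hx1 hx, g.reduce y hy1 hy] at hxy
  obtain ⟨hrx1, hrxP⟩ := g.rep_bounds (b := x) hx1
  obtain ⟨hry1, hryP⟩ := g.rep_bounds (b := y) hy1
  have hrr : (x - 1) % P = (y - 1) % P := by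
    by_contra hne
    rcases Nat.lt_or_ge ((x - 1) % P + 1) ((y - 1) % P + 1) with hlt | hge
    · exact absurd hxy (ne_of_lt (g.strict_mono _ _ hrx1 hlt hryP))
    · have : (y - 1) % P + 1 < (x - 1) % P + 1 := by omega
      exact absurd hxy.symm (ne_of_lt (g.strict_mono _ _ hry1 this hrxP))
  have ex : x % P = ((x - 1) % P + 1 % P) % P := by
    conv_lhs => rw [show x = (x - 1) + 1 by omega]
    rw [Nat.add_mod]
  have ey : y % P = ((y - 1) % P + 1 % P) % P := by
    conv_lhs => rw [show y = (y - 1) + 1 by omega]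
    rw [Nat.add_mod]
  rw [ex, ey, hrr]

end Good

lemma good_top (h : IsLaverOp m op) : Good m op (2 ^ m) (2 ^ m) := by
  refine ⟨two_pow_pos m, le_rfl, row_top h _ (two_pow_pos m) le_rfl, ?_, ?_⟩
  · intro b hb1 hbP
    rw [row_top h b hb1 (by omega), row_top h (b + 1) (by omega) (by omega)]
    omega
  · intro b hb1 hb
    have := two_pow_pos m
    omega

end Laver15

namespace Laver15
variable {m : ℕ} {op : ℕ → ℕ → ℕ}

lemma exists_good (h : IsLaverOp m op) : ∀ a, 1 ≤ a → a ≤ 2 ^ m → ∃ P, Good m op a P := by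
  suffices H : ∀ k a, 1 ≤ a → a ≤ 2 ^ m → 2 ^ m - a ≤ k → ∃ P, Good m op a P from
    fun a ha1 ha => H (2 ^ m - a) a ha1 ha le_rfl
  intro k
  induction k with
  | zero =>
    intro a ha1 ha hk
    have : a = 2 ^ m := by omega
    subst this
    exact ⟨2 ^ m, good_top h⟩
  | succ k IH =>
    intro a ha1 ha hk
    rcases eq_or_lt_of_le ha with rfl | haN
    · exact ⟨2 ^ m, good_top h⟩
    have F : ∀ c, a < c → c < 2 ^ m → ∀ d, 1 ≤ d → d ≤ 2 ^ m → c < op c d := by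
      intro c hac hcN d hd1 hd
      obtain ⟨P, g⟩ := IH c (by omega) (le_of_lt hcN) (by omega)
      have := g.val_ge h (by omega) hcN d hd1 hd
      omega
    have S0 : ∀ b, 1 ≤ b → b ≤ 2 ^ m → a < op a b := by
      intro b hb1
      induction b, hb1 using Nat.le_induction with
      | base => intro _; rw [op_one h ha1 haN]; omega
      | succ b hb1 ihb =>
        intro hb
        have hbN : b < 2 ^ m := by omega
        have hc := ihb (le_of_lt hbN)
        have hcmem := mem_op h ha1 ha hb1 (le_of_lt hbN)
        rw [op_succ' h ha1 haN hb1 hbN]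
        rcases eq_or_lt_of_le hcmem.2 with he | hlt
        · rw [he, row_top h (a + 1) (by omega) (by omega)]; omega
        · exact lt_trans hc (F _ hc hlt (a + 1) (by omega) (by omega))
    have S1 : ∀ b, 1 ≤ b → b < 2 ^ m → op a b < 2 ^ m → op a b < op a (b + 1) := by
      intro b hb1 hbN hlt
      rw [op_succ' h ha1 haN hb1 hbN]
      exact F (op a b) (S0 b hb1 (le_of_lt hbN)) hlt (a + 1) (by omega) (by omega)
    have S2 : ∃ b, 1 ≤ b ∧ b ≤ 2 ^ m ∧ op a b = 2 ^ m := by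
      by_contra hS
      push_neg at hS
      have grow : ∀ b, 1 ≤ b → b ≤ 2 ^ m → a + b ≤ op a b := by
        intro b hb1
        induction b, hb1 using Nat.le_induction with
        | base => intro hb; rw [op_one h ha1 haN]
        | succ b hb1 ihb =>
          intro hb
          have hbN : b < 2 ^ m := by omega
          have h1 := ihb (le_of_lt hbN)
          have h2 : op a b < 2 ^ m :=
            lt_of_le_of_ne (mem_op h ha1 ha hb1 (le_of_lt hbN)).2
              (hS b hb1 (le_of_lt hbN))
          have := S1 b hb1 hbN h2
          omega
      have h1 := grow (2 ^ m) (two_pow_pos m) le_rfl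
      have h2 := (mem_op h ha1 ha (two_pow_pos m) le_rfl).2
      omega
    classical
    have hQ : ∃ b, 1 ≤ b ∧ b ≤ 2 ^ m ∧ op a b = 2 ^ m := S2
    set P := Nat.find hQ with hPdef
    obtain ⟨hP1, hPN, hPeq⟩ := Nat.find_spec hQ
    have hlt_top : ∀ b, 1 ≤ b → b < P → op a b < 2 ^ m := by
      intro b hb1 hbP
      have hmin := Nat.find_min hQ (show b < P from hbP)
      have hne : op a b ≠ 2 ^ m := fun he => hmin ⟨hb1, by omega, he⟩
      have := (mem_op h ha1 ha hb1 (by omega)).2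
      omega
    refine ⟨P, ⟨hP1, hPN, hPeq, ?_, ?_⟩⟩
    · intro b hb1 hbP
      exact S1 b hb1 (by omega) (hlt_top b hb1 hbP)
    · intro b hb1
      induction b, hb1 using Nat.le_induction with
      | base =>
        intro hb
        rw [show 1 + P = P + 1 by omega, op_succ' h ha1 haN hP1 (by omega), hPeq,
          row_top h (a + 1) (by omega) (by omega), op_one h ha1 haN]
      | succ b hb1 ihb =>
        intro hb
        rw [show b + 1 + P = (b + P) + 1 by omega,
          op_succ' h ha1 haN (by omega) (by omega), ihb (by omega),
          ← op_succ' h ha1 haN hb1 (by omega)]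

lemma gt_val (h : IsLaverOp m op) : ∀ a, 1 ≤ a → a < 2 ^ m →
    ∀ d, 1 ≤ d → d ≤ 2 ^ m → a < op a d := by
  intro a ha1 ha d hd1 hd
  obtain ⟨P, g⟩ := exists_good h a ha1 (le_of_lt ha)
  have := g.val_ge h ha1 ha d hd1 hd
  omega

lemma op_top_col (h : IsLaverOp m op) : ∀ a, 1 ≤ a → a ≤ 2 ^ m → op a (2 ^ m) = 2 ^ m := by
  intro a ha1 ha
  rcases eq_or_lt_of_le ha with rfl | haN
  · exact row_top h _ (two_pow_pos m) le_rfl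
  have hNN : op (2 ^ m) (2 ^ m) = 2 ^ m := row_top h _ (two_pow_pos m) le_rfl
  have hmem : (2 ^ m : ℕ) ∈ Set.Icc 1 (2 ^ m) := Set.mem_Icc.2 ⟨two_pow_pos m, le_rfl⟩
  have hd := h.2.1 a (Set.mem_Icc.2 ⟨ha1, ha⟩) (2 ^ m) hmem (2 ^ m) hmem
  rw [hNN] at hd
  have hc := mem_op h ha1 ha (two_pow_pos m) le_rfl
  by_contra hne
  have hclt : op a (2 ^ m) < 2 ^ m := lt_of_le_of_ne hc.2 hne
  have := gt_val h (op a (2 ^ m)) hc.1 hclt (op a (2 ^ m)) hc.1 (le_of_lt hclt)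
  omega

end Laver15

namespace Laver15

def rho (N b : ℕ) : ℕ := if b ≤ N then b else b - N

lemma rho_mem {N b : ℕ} (hN1 : 1 ≤ N) (hb1 : 1 ≤ b) (hb : b ≤ 2 * N) :
    1 ≤ rho N b ∧ rho N b ≤ N := by
  unfold rho; split <;> omega

lemma rho_succ {N b : ℕ} (hb1 : 1 ≤ b) (hb : b < 2 * N) (h : rho N b < N) :
    rho N (b + 1) = rho N b + 1 := by
  simp only [rho] at h ⊢; split_ifs at h ⊢ <;> omega

lemma rho_eq_top {N b : ℕ} (hb1 : 1 ≤ b) (hb : b ≤ 2 * N) (h : rho N b = N) :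
    b = N ∨ b = 2 * N := by
  simp only [rho] at h; split_ifs at h <;> omega

variable {n : ℕ} {opN opS : ℕ → ℕ → ℕ}

lemma stepA (hN : IsLaverOp n opN) (hS : IsLaverOp (n + 1) opS) :
    ∀ a, 1 ≤ a → a < 2 ^ n → ∀ b, 1 ≤ b → b ≤ 2 ^ (n + 1) →
      opS (a + 2 ^ n) b = opN a (rho (2 ^ n) b) + 2 ^ n := by
  have hNS : 2 ^ (n + 1) = 2 * 2 ^ n := by rw [pow_succ]; ring
  have hN1 : (1 : ℕ) ≤ 2 ^ n := two_pow_pos n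
  suffices H : ∀ k a, 1 ≤ a → a < 2 ^ n → 2 ^ n - a ≤ k → ∀ b, 1 ≤ b → b ≤ 2 ^ (n + 1) →
      opS (a + 2 ^ n) b = opN a (rho (2 ^ n) b) + 2 ^ n from
    fun a ha1 ha => H (2 ^ n - a) a ha1 ha le_rfl
  intro k
  induction k with
  | zero => intro a ha1 ha hk; omega
  | succ k IH =>
    intro a ha1 haN hk b hb1
    induction b, hb1 using Nat.le_induction with
    | base =>
      intro _
      have hr : rho (2 ^ n) 1 = 1 := by unfold rho; split <;> omega
      rw [hr, op_one hS (by omega) (by omega), op_one hN ha1 haN]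
      omega
    | succ b hb1 ihb =>
      intro hb
      have hb2 : b < 2 ^ (n + 1) := by omega
      have ihb' := ihb (le_of_lt hb2)
      have hrb := rho_mem hN1 hb1 (by omega : b ≤ 2 * 2 ^ n)
      have hc := mem_op hN ha1 (le_of_lt haN) hrb.1 hrb.2
      have e1 : opS (a + 2 ^ n) (b + 1) = opS (opN a (rho (2 ^ n) b) + 2 ^ n) (a + 2 ^ n + 1) := by
        rw [op_succ' hS (by omega) (by omega) hb1 hb2, ihb']
      rcases eq_or_lt_of_le hrb.2 with hrN | hrN
      · -- rho b = 2^n, so b = 2^n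
        have hbeq : b = 2 ^ n := by
          rcases rho_eq_top hb1 (by omega) hrN with h | h <;> omega
        have hcN : opN a (rho (2 ^ n) b) = 2 ^ n := by
          rw [hrN]; exact op_top_col hN a ha1 (le_of_lt haN)
        have hr1 : rho (2 ^ n) (b + 1) = 1 := by unfold rho; split <;> omega
        rw [e1, hcN, hr1, op_one hN ha1 haN,
          show (2 ^ n + 2 ^ n : ℕ) = 2 ^ (n + 1) by omega,
          row_top hS (a + 2 ^ n + 1) (by omega) (by omega)]
        omega
      · -- rho b < 2^n
        have hrsucc : rho (2 ^ n) (b + 1) = rho (2 ^ n) b + 1 :=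
          rho_succ hb1 (by omega) hrN
        rw [e1, hrsucc, op_succ hN ha1 (le_of_lt haN) hrb.1 hrN, op_one hN ha1 haN]
        rcases eq_or_lt_of_le hc.2 with hcN | hcN
        · rw [hcN, show (2 ^ n + 2 ^ n : ℕ) = 2 ^ (n + 1) by omega,
            row_top hS _ (by omega) (by omega),
            row_top hN (a + 1) (by omega) (by omega)]
          omega
        · have hca : a < opN a (rho (2 ^ n) b) := gt_val hN a ha1 haN _ hrb.1 hrb.2
          rw [IH (opN a (rho (2 ^ n) b)) (by omega) hcN (by omega) (a + 2 ^ n + 1)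
            (by omega) (by omega)]
          have hrr : rho (2 ^ n) (a + 2 ^ n + 1) = a + 1 := by unfold rho; split <;> omega
          rw [hrr]

lemma row_mid (hN : IsLaverOp n opN) (hS : IsLaverOp (n + 1) opS) :
    ∀ b, 1 ≤ b → b ≤ 2 ^ n → opS (2 ^ n) b = 2 ^ n + b := by
  have hNS : 2 ^ (n + 1) = 2 * 2 ^ n := by rw [pow_succ]; ring
  have hN1 : (1 : ℕ) ≤ 2 ^ n := two_pow_pos n
  intro b hb1
  induction b, hb1 using Nat.le_induction with
  | base => intro _; rw [op_one hS hN1 (by omega)]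
  | succ b hb1 ihb =>
    intro hb
    have hbN : b < 2 ^ n := by omega
    rw [op_succ' hS hN1 (by omega) hb1 (by omega), ihb (le_of_lt hbN),
      show (2 ^ n + b : ℕ) = b + 2 ^ n by omega,
      stepA hN hS b hb1 hbN (2 ^ n + 1) (by omega) (by omega)]
    have hrr : rho (2 ^ n) (2 ^ n + 1) = 1 := by unfold rho; split <;> omega
    rw [hrr, op_one hN hb1 hbN]
    omega

lemma homc (hN : IsLaverOp n opN) (hS : IsLaverOp (n + 1) opS) :
    ∀ a, 1 ≤ a → a < 2 ^ n → ∀ b, 1 ≤ b → b ≤ 2 ^ (n + 1) →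
      rho (2 ^ n) (opS a b) = opN a (rho (2 ^ n) b) := by
  have hNS : 2 ^ (n + 1) = 2 * 2 ^ n := by rw [pow_succ]; ring
  have hN1 : (1 : ℕ) ≤ 2 ^ n := two_pow_pos n
  suffices H : ∀ k a, 1 ≤ a → a < 2 ^ n → 2 ^ n - a ≤ k → ∀ b, 1 ≤ b → b ≤ 2 ^ (n + 1) →
      rho (2 ^ n) (opS a b) = opN a (rho (2 ^ n) b) from
    fun a ha1 ha => H (2 ^ n - a) a ha1 ha le_rfl
  intro k
  induction k with
  | zero => intro a ha1 ha hk; omega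
  | succ k IH =>
    intro a ha1 haN hk b hb1
    induction b, hb1 using Nat.le_induction with
    | base =>
      intro _
      have hr : rho (2 ^ n) 1 = 1 := by unfold rho; split <;> omega
      rw [hr, op_one hS ha1 (by omega), op_one hN ha1 haN]
      unfold rho; split <;> omega
    | succ b hb1 ihb =>
      intro hb
      have hb2 : b < 2 ^ (n + 1) := by omega
      have ihb' := ihb (le_of_lt hb2)
      have hcmem := mem_op hS ha1 (by omega) hb1 (le_of_lt hb2)
      have hrb := rho_mem hN1 hb1 (by omega : b ≤ 2 * 2 ^ n)
      have e1 : opS a (b + 1) = opS (opS a b) (a + 1) :=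
        op_succ' hS ha1 (by omega) hb1 hb2
      rcases eq_or_lt_of_le hrb.2 with hrN | hrN
      · -- rho b = 2^n hence b = 2^n
        have hbeq : b = 2 ^ n := by
          rcases rho_eq_top hb1 (by omega) hrN with h | h <;> omega
        have hcbar : rho (2 ^ n) (opS a b) = 2 ^ n := by
          rw [ihb', hrN]; exact op_top_col hN a ha1 (le_of_lt haN)
        have hc2 : opS a b = 2 ^ n ∨ opS a b = 2 ^ (n + 1) := by
          simp only [rho] at hcbar; split_ifs at hcbar <;> omega
        have hr1 : rho (2 ^ n) (b + 1) = 1 := by unfold rho; split <;> omega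
        rw [e1, hr1, op_one hN ha1 haN]
        rcases hc2 with hc | hc
        · rw [hc, row_mid hN hS (a + 1) (by omega) (by omega)]
          unfold rho; split <;> omega
        · rw [hc, row_top hS (a + 1) (by omega) (by omega)]
          unfold rho; split <;> omega
      · -- rho b < 2^n
        have hrsucc : rho (2 ^ n) (b + 1) = rho (2 ^ n) b + 1 :=
          rho_succ hb1 (by omega) hrN
        rw [e1, hrsucc, op_succ hN ha1 (le_of_lt haN) hrb.1 hrN, op_one hN ha1 haN]
        have hdmem := mem_op hN ha1 (le_of_lt haN) hrb.1 hrb.2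
        have hcd : opS a b = opN a (rho (2 ^ n) b) ∨
            opS a b = opN a (rho (2 ^ n) b) + 2 ^ n := by
          have h' := ihb'
          rw [rho] at h'
          have := hcmem.2
          split_ifs at h' <;> omega
        rcases hcd with hcd | hcd
        · rcases eq_or_lt_of_le hdmem.2 with hdN | hdN
          · rw [hcd, hdN, row_mid hN hS (a + 1) (by omega) (by omega),
              row_top hN (a + 1) (by omega) (by omega)]
            unfold rho; split <;> omega
          · have hac : a < opS a b := gt_val hS a ha1 (by omega) b hb1 (le_of_lt hb2)
            have := IH (opN a (rho (2 ^ n) b)) (by omega) hdN (by omega) (a + 1)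
              (by omega) (by omega)
            rw [hcd, this]
            have hrr : rho (2 ^ n) (a + 1) = a + 1 := by unfold rho; split <;> omega
            rw [hrr]
        · rcases eq_or_lt_of_le hdmem.2 with hdN | hdN
          · rw [hcd, hdN, show (2 ^ n + 2 ^ n : ℕ) = 2 ^ (n + 1) by omega,
              row_top hS (a + 1) (by omega) (by omega),
              row_top hN (a + 1) (by omega) (by omega)]
            unfold rho; split <;> omega
          · rw [hcd, stepA hN hS (opN a (rho (2 ^ n) b)) hdmem.1 hdN (a + 1)
              (by omega) (by omega)]
            have hrr : rho (2 ^ n) (a + 1) = a + 1 := by unfold rho; split <;> omega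
            rw [hrr]
            have hv := mem_op hN hdmem.1 (le_of_lt hdN) (show 1 ≤ a + 1 by omega)
              (show a + 1 ≤ 2 ^ n by omega)
            rw [rho]; split <;> omega

end Laver15

open Laver15

theorem stmt_15 (n : ℕ) (opN opS : ℕ → ℕ → ℕ)
    (hN : IsLaverOp n opN) (hS : IsLaverOp (n + 1) opS)
    (a : ℕ) (ha1 : 1 ≤ a) (ha : a < 2 ^ n)
    (p : ℕ) (hp : IsPeriod n opN a p) :
    IsPeriod (n + 1) opS (a + 2 ^ n) p ∧
    (IsPeriod (n + 1) opS a p ∨ IsPeriod (n + 1) opS a (2 * p)) ∧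
    IsPeriod (n + 1) opS (2 ^ n) (2 ^ n) := by
  have hNS : 2 ^ (n + 1) = 2 * 2 ^ n := by rw [pow_succ]; ring
  have hN1 : (1 : ℕ) ≤ 2 ^ n := two_pow_pos n
  obtain ⟨hp1, hpeq, hpmin⟩ := hp
  have htopcol : opN a (2 ^ n) = 2 ^ n := op_top_col hN a ha1 (le_of_lt ha)
  have hpN : p ≤ 2 ^ n := hpmin (2 ^ n) hN1 htopcol
  obtain ⟨P0, g0⟩ := exists_good hN a ha1 (le_of_lt ha)
  have hP0p : P0 = p :=
    le_antisymm (g0.le_of_eq_top p hp1 hpN hpeq) (hpmin P0 g0.one_le g0.eq)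
  rw [hP0p] at g0
  have hpdvd : p ∣ 2 ^ n := (g0.eq_top_iff_dvd (2 ^ n) hN1 le_rfl).1 htopcol
  have hrho_id : ∀ q, 1 ≤ q → q ≤ 2 ^ n → rho (2 ^ n) q = q := by
    intro q h1 h2; unfold rho; split <;> omega
  -- Part 1
  have part1 : IsPeriod (n + 1) opS (a + 2 ^ n) p := by
    refine ⟨hp1, ?_, ?_⟩
    · rw [stepA hN hS a ha1 ha p hp1 (by omega), hrho_id p hp1 hpN, hpeq]
      omega
    · intro q hq1 hqe
      by_cases hq : q ≤ 2 ^ (n + 1)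
      · rw [stepA hN hS a ha1 ha q hq1 hq] at hqe
        have hr := rho_mem hN1 hq1 (by omega : q ≤ 2 * 2 ^ n)
        have h1 : opN a (rho (2 ^ n) q) = 2 ^ n := by omega
        have h2 := hpmin _ hr.1 h1
        have h3 : rho (2 ^ n) q ≤ q := by unfold rho; split <;> omega
        omega
      · omega
  -- Part 3
  have part3 : IsPeriod (n + 1) opS (2 ^ n) (2 ^ n) := by
    refine ⟨hN1, ?_, ?_⟩
    · rw [row_mid hN hS (2 ^ n) hN1 le_rfl]; omega
    · intro q hq1 hqe
      by_cases hq : q ≤ 2 ^ n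
      · rw [row_mid hN hS q hq1 hq] at hqe; omega
      · omega
  -- Part 2
  obtain ⟨P, g⟩ := exists_good hS a ha1 (by omega : a ≤ 2 ^ (n + 1))
  have homdvd : ∀ q, 1 ≤ q → q ≤ 2 ^ (n + 1) → opS a q = 2 ^ (n + 1) → p ∣ q := by
    intro q hq1 hq hqe
    have hh := homc hN hS a ha1 ha q hq1 hq
    rw [hqe] at hh
    have h2 : rho (2 ^ n) (2 ^ (n + 1)) = 2 ^ n := by unfold rho; split <;> omega
    rw [h2] at hh
    have hr := rho_mem hN1 hq1 (by omega : q ≤ 2 * 2 ^ n)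
    have hdvd : p ∣ rho (2 ^ n) q := (g0.eq_top_iff_dvd _ hr.1 hr.2).1 hh.symm
    have hq2 : q = rho (2 ^ n) q ∨ q = rho (2 ^ n) q + 2 ^ n := by
      unfold rho; split <;> omega
    rcases hq2 with h | h
    · rwa [← h] at hdvd
    · rw [h]; exact Nat.dvd_add hdvd hpdvd
  have hval_p : opS a p = 2 ^ n ∨ opS a p = 2 ^ (n + 1) := by
    have hh := homc hN hS a ha1 ha p hp1 (by omega)
    rw [hrho_id p hp1 hpN, hpeq] at hh
    have hm := mem_op hS ha1 (by omega) hp1 (by omega)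
    rw [rho] at hh
    split_ifs at hh <;> omega
  refine ⟨part1, ?_, part3⟩
  rcases hval_p with hv | hv
  · -- period is 2p
    right
    have h2p2N : 2 * p ≤ 2 ^ (n + 1) := by omega
    have hv2 : opS a (2 * p) = 2 ^ n ∨ opS a (2 * p) = 2 ^ (n + 1) := by
      have hh := homc hN hS a ha1 ha (2 * p) (by omega) h2p2N
      have hrr : opN a (rho (2 ^ n) (2 * p)) = 2 ^ n := by
        by_cases hle : 2 * p ≤ 2 ^ n
        · rw [hrho_id (2 * p) (by omega) hle]
          exact (g0.eq_top_iff_dvd (2 * p) (by omega) hle).2 ⟨2, by ring⟩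
        · have hpn : 2 ^ n = p := by
            obtain ⟨k, hk⟩ := hpdvd
            have hk1 : k = 1 := by
              rcases Nat.lt_or_ge k 2 with h | h
              · interval_cases k
                · omega
                · rfl
              · have := Nat.mul_le_mul_left p h
                omega
            rw [hk1] at hk; omega
          have : rho (2 ^ n) (2 * p) = p := by unfold rho; split <;> omega
          rw [this, hpeq]
      rw [hrr] at hh
      have hm := mem_op hS ha1 (by omega) (by omega : 1 ≤ 2 * p) h2p2N
      rw [rho] at hh
      split_ifs at hh <;> omega
    have hv2' : opS a (2 * p) = 2 ^ (n + 1) := by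
      rcases hv2 with h | h
      · exfalso
        have hcong := g.eq_imp_modeq p (2 * p) hp1 (by omega) (by omega) h2p2N
          (by rw [hv, h])
        have hPp : P ∣ 2 * p - p :=
          (Nat.modEq_iff_dvd' (by omega : p ≤ 2 * p)).1 hcong
        have hPp' : P ∣ p := by rwa [show 2 * p - p = p by omega] at hPp
        have hpP : p ∣ P := homdvd P g.one_le g.le g.eq
        have hPep : P = p := Nat.dvd_antisymm hPp' hpP
        have := g.eq
        rw [hPep, hv] at this
        omega
      · exact h
    refine ⟨by omega, hv2', ?_⟩
    intro q hq1 hqe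
    by_cases hq : q ≤ 2 ^ (n + 1)
    · have hdq := homdvd q hq1 hq hqe
      have hne : q ≠ p := by
        intro he; rw [he, hv] at hqe; omega
      obtain ⟨k, rfl⟩ := hdq
      have hk0 : k ≠ 0 := by rintro rfl; simp at hq1
      have hk1 : k ≠ 1 := by rintro rfl; simp at hne
      have h2k : 2 ≤ k := by omega
      have := Nat.mul_le_mul_left p h2k
      omega
    · omega
  · -- period is p
    left
    refine ⟨hp1, hv, ?_⟩
    intro q hq1 hqe
    by_cases hq : q ≤ 2 ^ (n + 1)
    · exact Nat.le_of_dvd (by omega) (homdvd q hq1 hq hqe)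
    · omega
end
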